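/- arXiv:math/0607524 — 4 statements merged into one kernel-verified Lean document; each statement's English description precedes it below -/
import Mathlib

section
/- Let Ω ⊆ ℝ^n × ℝ^m be open with projection Ω_{ℝ^n} onto the first factor, and let α : Ω_{ℝ^n} → ℝ^m be a feedback on Ω. Then for every ε > 0 there exists a C^∞ feedback β : Ω_{ℝ^n} → ℝ^m on Ω (i.e., β is C^∞ and (x, β(x)) ∈ Ω for all x ∈ Ω_{ℝ^n}) such that ‖α(x) − β(x)‖ < ε for every x ∈ Ω_{ℝ^n}. -/
open Set Topology Filter ContDiff

noncomputable section

/-- Euclidean state/control space `ℝ^n`. -/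
abbrev E (n : ℕ) : Type := EuclideanSpace ℝ (Fin n)

/-- A feedback on `Ω ⊆ ℝ^n × ℝ^m`: a continuous map `α` on the projection `Ω_{ℝ^n}` of `Ω`
onto the state factor such that `(x, α(x)) ∈ Ω` for all `x ∈ Ω_{ℝ^n}`. -/
def IsFeedback {n m : ℕ} (Ω : Set (E n × E m)) (α : E n → E m) : Prop :=
  ContinuousOn α (Prod.fst '' Ω) ∧ ∀ x ∈ Prod.fst '' Ω, (x, α x) ∈ Ω

/-- Proposition on smooth approximation of feedbacks.
If `α` is a feedback on the open set `Ω ⊆ ℝ^n × ℝ^m`, then for every `ε > 0` there is a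
`C^∞` feedback `β` on `Ω` with `‖α(x) − β(x)‖ < ε` for every `x` in the projection of `Ω`. -/
theorem feedback_smooth_approximation {n m : ℕ} (Ω : Set (E n × E m)) (hΩ : IsOpen Ω)
    (α : E n → E m) (hα : IsFeedback Ω α) (ε : ℝ) (hε : 0 < ε) :
    ∃ β : E n → E m, ContDiffOn ℝ ∞ β (Prod.fst '' Ω) ∧
      (∀ x ∈ Prod.fst '' Ω, (x, β x) ∈ Ω) ∧
      ∀ x ∈ Prod.fst '' Ω, ‖α x - β x‖ < ε := by
  classical
  set U : Set (E n) := Prod.fst '' Ω with hU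
  have hUopen : IsOpen U := isOpenMap_fst Ω hΩ
  -- the tolerance function
  set r : E n → ℝ := fun x =>
    if Ωᶜ.Nonempty then min ε (Metric.infDist (x, α x) Ωᶜ) else ε with hr
  have hrpos : ∀ x ∈ U, 0 < r x := by
    intro x hx
    by_cases h : Ωᶜ.Nonempty
    · simp only [hr, if_pos h]
      refine lt_min hε ?_
      exact (hΩ.isClosed_compl.notMem_iff_infDist_pos h).mp
        (by simpa using hα.2 x hx)
    · simp only [hr, if_neg h]; exact hε
  have hrle : ∀ x, r x ≤ ε := by
    intro x
    by_cases h : Ωᶜ.Nonempty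
    · simp only [hr, if_pos h]; exact min_le_left _ _
    · simp only [hr, if_neg h]; exact le_rfl
  -- key property: close enough values stay in Ω and within ε
  have hkey : ∀ x ∈ U, ∀ z : E m, dist z (α x) < r x → (x, z) ∈ Ω ∧ ‖α x - z‖ < ε := by
    intro x hx z hz
    constructor
    · by_contra hmem
      have h : Ωᶜ.Nonempty := ⟨(x, z), hmem⟩
      have h1 : Metric.infDist (x, α x) Ωᶜ ≤ dist (x, α x) (x, z) :=
        Metric.infDist_le_dist_of_mem hmem
      have h2 : dist (x, α x) (x, z) = dist (α x) z := by
        simp [Prod.dist_eq, dist_nonneg]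
      simp only [hr, if_pos h] at hz
      rw [h2] at h1
      rw [dist_comm] at hz
      exact absurd (lt_of_lt_of_le hz (min_le_right _ _)) (not_lt.mpr h1)
    · rw [← dist_eq_norm, dist_comm]
      exact lt_of_lt_of_le hz (hrle x)
  -- continuity of r on U
  have hrc : ContinuousOn r U := by
    by_cases h : Ωᶜ.Nonempty
    · have : r = fun x => min ε (Metric.infDist (x, α x) Ωᶜ) := by
        funext x; simp [hr, if_pos h]
      rw [this]
      have h1 : ContinuousOn (fun x => Metric.infDist (x, α x) Ωᶜ) U :=
        (Metric.continuous_infDist_pt Ωᶜ).comp_continuousOn (continuousOn_id.prodMk hα.1)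
      exact continuous_min.comp_continuousOn (continuousOn_const.prodMk h1)
    · have : r = fun _ => ε := by funext x; simp [hr, if_neg h]
      rw [this]; exact continuousOn_const
  -- the open set as a manifold
  set O : TopologicalSpace.Opens (E n) := ⟨U, hUopen⟩ with hO
  haveI : SigmaCompactSpace O := by
    haveI : LocallyCompactSpace O := hUopen.locallyCompactSpace
    infer_instance
  -- apply the smooth selection theorem
  obtain ⟨g, hg⟩ := exists_contMDiffMap_forall_mem_convex_of_local_const (modelWithCornersSelf ℝ (E n)) (M := O) (n := ⊤)
    (F := E m) (t := fun y : O => Metric.ball (α ↑y) (r ↑y))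
    (fun y => convex_ball _ _)
    (by
      intro x
      refine ⟨α ↑x, ?_⟩
      have hαc : Continuous fun y : O => α ↑y := hα.1.restrict
      have hrc' : Continuous fun y : O => r ↑y := hrc.restrict
      have hcont : Continuous fun y : O => r ↑y - dist (α ↑x) (α ↑y) :=
        hrc'.sub (continuous_const.dist hαc)
      have hpos : 0 < r ↑x - dist (α ↑x) (α ↑x) := by
        simpa using hrpos ↑x x.2
      filter_upwards [(isOpen_lt continuous_const hcont).mem_nhds hpos] with y hy
      rw [Metric.mem_ball]
      linarith [show (0:ℝ) < r ↑y - dist (α ↑x) (α ↑y) from hy])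
  -- extract the function
  refine ⟨fun x => if h : x ∈ U then g ⟨x, h⟩ else 0, ?_, ?_, ?_⟩
  · intro x hx
    have hmd : ContMDiffAt (modelWithCornersSelf ℝ (E n)) (modelWithCornersSelf ℝ (E m)) ∞
        (fun x => if h : x ∈ U then g ⟨x, h⟩ else 0) x := by
      rw [← contMDiffAt_subtype_iff (U := O) (x := ⟨x, hx⟩)]
      have : (fun y : O => if h : (y : E n) ∈ U then g ⟨y, h⟩ else 0) = fun y : O => g y := by
        funext y; exact dif_pos y.2
      rw [this]
      exact g.contMDiff.contMDiffAt
    have := hmd.contDiffAt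
    exact this.contDiffWithinAt
  · intro x hx
    simp only [dif_pos hx]
    exact (hkey x hx _ (Metric.mem_ball.mp (hg ⟨x, hx⟩))).1
  · intro x hx
    simp only [dif_pos hx]
    exact (hkey x hx _ (Metric.mem_ball.mp (hg ⟨x, hx⟩))).2
end
end

section
/- Let f, g : ℝ^n × ℝ^m → ℝ^n be continuous and locally Lipschitz-continuous with respect to their first argument, and let χ : Ω → Ω' be a homeomorphism, of the triangular form χ(x,u) = (χ_I(x), χ_II(x,u)), conjugating the system ẋ = f(x,u) to the system ż = g(z,v) over the pair Ω, Ω'. For feedbacks α₁, α₂ on Ω, define the vector field δf_{α₁,α₂}(x) = f(x,α₁(x)) − f(x,α₂(x)) on Ω_{ℝ^n}, the transported feedback (χ□α)(z) = χ_II(χ_I^{-1}(z), α(χ_I^{-1}(z))) on Ω', and δg_{χ□α₁,χ□α₂}(z) = g(z, (χ□α₁)(z)) − g(z, (χ□α₂)(z)) on Ω'_{ℝ^n}. Then for every pair of feedbacks α₁, α₂ on Ω, χ_I maps each solution of ẋ = δf_{α₁,α₂}(x) that remains in Ω_{ℝ^n} to a solution of ż = δg_{χ□α₁,χ□α₂}(z)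 that remains in Ω'_{ℝ^n}. -/
open Set Topology Filter ContDiff

noncomputable section

/-- A solution of the control system `ẋ = f(x,u)` that remains in `Ω`, defined on the
real interval `I`: a measurable, locally bounded map `γ = (γ_I, γ_II)` with values in `Ω`
whose state component `γ_I` is (absolutely) continuous and satisfies the integral equation
`γ_I(T₂) − γ_I(T₁) = ∫_{T₁}^{T₂} f(γ(t)) dt` on every compact subinterval of `I`. -/
structure IsSolution {S C : Type*}
    [NormedAddCommGroup S] [NormedSpace ℝ S] [MeasurableSpace S]
    [NormedAddCommGroup C] [MeasurableSpace C]
    (f : S × C → S) (Ω : Set (S × C)) (I : Set ℝ) (γ : ℝ → S × C) : Prop where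
  ordConn : I.OrdConnected
  mem : ∀ t ∈ I, γ t ∈ Ω
  meas : Measurable fun t : I => γ t
  locBdd : ∀ a b : ℝ, Set.Icc a b ⊆ I → Bornology.IsBounded (γ '' Set.Icc a b)
  contState : ContinuousOn (fun t => (γ t).1) I
  integral : ∀ T₁ T₂ : ℝ, T₁ ≤ T₂ → Set.Icc T₁ T₂ ⊆ I →
    (γ T₂).1 - (γ T₁).1 = ∫ t in T₁..T₂, f (γ t)

/-- `χ` conjugates the system `ẋ = f(x,u)` (on `Ω`) to the system `ż = g(z,v)` (on `Ω'`):
for every real interval `I`, a map `γ : I → Ω` is a solution of the first system remaining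
in `Ω` if and only if `χ ∘ γ` is a solution of the second system remaining in `Ω'`. -/
def ConjugatesOn {S C S' C' : Type*}
    [NormedAddCommGroup S] [NormedSpace ℝ S] [MeasurableSpace S]
    [NormedAddCommGroup C] [MeasurableSpace C]
    [NormedAddCommGroup S'] [NormedSpace ℝ S'] [MeasurableSpace S']
    [NormedAddCommGroup C'] [MeasurableSpace C']
    (f : S × C → S) (g : S' × C' → S')
    (Ω : Set (S × C)) (Ω' : Set (S' × C'))
    (χ : S × C → S' × C') : Prop :=
  ∀ (I : Set ℝ) (γ : ℝ → S × C), (∀ t ∈ I, γ t ∈ Ω) →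
    (IsSolution f Ω I γ ↔ IsSolution g Ω' I (χ ∘ γ))

/-- `χ` is a homeomorphism from `s` onto `t`, with (global extension of the) inverse `χinv`. -/
structure IsHomeoOn {α β : Type*} [TopologicalSpace α] [TopologicalSpace β]
    (χ : α → β) (χinv : β → α) (s : Set α) (t : Set β) : Prop where
  mapsTo : Set.MapsTo χ s t
  invMapsTo : Set.MapsTo χinv t s
  leftInv : ∀ x ∈ s, χinv (χ x) = x
  rightInv : ∀ y ∈ t, χ (χinv y) = y
  cont : ContinuousOn χ s
  contInv : ContinuousOn χinv t

/-- `f(x,u)` is locally Lipschitz-continuous with respect to its first argument: every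
point has a neighborhood `V` and a constant `c` with
`‖f(x',u) − f(x,u)‖ ≤ c ‖x' − x‖` whenever `(x,u), (x',u) ∈ V`. -/
def LocallyLipschitzFirst {n m : ℕ} (f : E n × E m → E n) : Prop :=
  ∀ p : E n × E m, ∃ V ∈ 𝓝 p, ∃ c : ℝ, ∀ (x x' : E n) (u : E m),
    (x, u) ∈ V → (x', u) ∈ V → ‖f (x', u) - f (x, u)‖ ≤ c * ‖x' - x‖

/-- A solution of the ordinary differential equation `ẋ = X(x)` remaining in `s`,
defined on the real interval `I`. -/
def IsODESolutionOn {n : ℕ} (X : E n → E n) (s : Set (E n)) (I : Set ℝ) (η : ℝ → E n) :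
    Prop :=
  I.OrdConnected ∧ (∀ t ∈ I, η t ∈ s) ∧ ContinuousOn η I ∧
    ∀ T₁ T₂ : ℝ, T₁ ≤ T₂ → Icc T₁ T₂ ⊆ I → η T₂ - η T₁ = ∫ t in T₁..T₂, X (η t)


section Aux
open scoped NNReal

theorem exists_solution_with_bound {Ev : Type*} [NormedAddCommGroup Ev] [NormedSpace ℝ Ev]
    [CompleteSpace Ev] {v : ℝ → Ev → Ev} {tMin tMax : ℝ} {t₀ : Icc tMin tMax} (x₀ : Ev)
    {a C K : ℝ≥0}
    (hpl : IsPicardLindelof v t₀ x₀ a 0 C K) :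
    ∃ f : ℝ → Ev, f t₀ = x₀ ∧
      (∀ t ∈ Icc tMin tMax, HasDerivWithinAt f (v t (f t)) (Icc tMin tMax) t) ∧
      ∀ t ∈ Icc tMin tMax, dist (f t) x₀ ≤ C * |t - t₀| := by
  obtain ⟨α, hα⟩ := ODE.FunSpace.exists_isFixedPt_next hpl (Metric.mem_closedBall_self le_rfl)
  refine ⟨α.compProj, by rw [ODE.FunSpace.compProj_val, ← hα, ODE.FunSpace.next_apply₀],
    fun t ht => ?_, fun t ht => ?_⟩
  · apply ODE.hasDerivWithinAt_picard_Icc t₀.2 hpl.continuousOn_uncurry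
      α.continuous_compProj.continuousOn (fun _ ht' ↦ α.compProj_mem_closedBall hpl.mul_max_le)
      x₀ ht |>.congr_of_mem _ ht
    intro t' ht'
    nth_rw 1 [← hα]
    rw [ODE.FunSpace.compProj_of_mem ht', ODE.FunSpace.next_apply]
  · rw [ODE.FunSpace.compProj_of_mem ht]
    calc dist (α ⟨t, ht⟩) x₀ = dist (α ⟨t, ht⟩) (α t₀) := by rw [ODE.FunSpace.apply_of_zero]
      _ ≤ C * dist (⟨t, ht⟩ : Icc tMin tMax) t₀ := α.lipschitzWith.dist_le_mul _ _
      _ = C * |t - t₀| := by rw [Subtype.dist_eq, Real.dist_eq]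

theorem exists_uniform_lipschitz {n m : ℕ} {f : E n × E m → E n}
    (hfL : LocallyLipschitzFirst f) {Q : Set (E n × E m)} (hQ : IsCompact Q) :
    ∃ r > 0, ∃ Lc ≥ (0:ℝ), ∀ q ∈ Q, ∀ (x x' : E n) (u : E m),
      (x, u) ∈ Metric.closedBall q r → (x', u) ∈ Metric.closedBall q r →
      ‖f (x', u) - f (x, u)‖ ≤ Lc * ‖x' - x‖ := by
  choose V hV c hc using hfL
  -- open cover by interiors of V p
  have hcov : Q ⊆ ⋃ p : Q, interior (V p) := fun q hq =>
    mem_iUnion.2 ⟨⟨q, hq⟩, mem_interior_iff_mem_nhds.2 (hV q)⟩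
  obtain ⟨S, hS⟩ := hQ.elim_finite_subcover (fun p : Q => interior (V p))
    (fun _ => isOpen_interior) hcov
  obtain ⟨δ, hδ, hleb⟩ := lebesgue_number_lemma_of_metric hQ
    (c := fun p : S => interior (V p)) (fun _ => isOpen_interior)
    (by intro q hq; rcases mem_iUnion₂.1 (hS hq) with ⟨p, hp, hqp⟩
        exact mem_iUnion.2 ⟨⟨p, hp⟩, hqp⟩)
  refine ⟨δ/2, by positivity, (S.sup fun p => ⟨max (c p) 0, le_max_right _ _⟩ : ℝ≥0), 
    NNReal.coe_nonneg _, fun q hq x x' u hx hx' => ?_⟩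
  obtain ⟨⟨p, hp⟩, hball⟩ := hleb q hq
  have hxV : (x, u) ∈ V p := interior_subset (hball (Metric.mem_ball.2 (lt_of_le_of_lt (Metric.mem_closedBall.1 hx) (by linarith))))
  have hx'V : (x', u) ∈ V p := interior_subset (hball (Metric.mem_ball.2 (lt_of_le_of_lt (Metric.mem_closedBall.1 hx') (by linarith))))
  refine (hc p x x' u hxV hx'V).trans (mul_le_mul_of_nonneg_right ?_ (norm_nonneg _))
  have hle : (⟨max (c (p : E n × E m)) 0, le_max_right _ _⟩ : ℝ≥0) ≤ S.sup fun p : Q => (⟨max (c (p : E n × E m)) 0, le_max_right _ _⟩ : ℝ≥0) :=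
    Finset.le_sup (f := fun p : Q => (⟨max (c (p : E n × E m)) 0, le_max_right _ _⟩ : ℝ≥0)) hp
  calc c (p : E n × E m) ≤ max (c (p : E n × E m)) 0 := le_max_left _ _
    _ ≤ _ := NNReal.coe_le_coe.2 hle

theorem isSolution_of_deriv {n m : ℕ} {f : E n × E m → E n} (hf : Continuous f)
    {Ω : Set (E n × E m)} {h : ℝ} (hh : 0 ≤ h) (u : E m) (x : ℝ → E n)
    (hx : ∀ s ∈ Icc (0:ℝ) h, HasDerivWithinAt x (f (x s, u)) (Icc 0 h) s)
    (hm : ∀ s ∈ Icc (0:ℝ) h, (x s, u) ∈ Ω) :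
    IsSolution f Ω (Icc 0 h) (fun s => (x s, u)) := by
  have hxc : ContinuousOn x (Icc 0 h) := fun s hs => (hx s hs).continuousWithinAt
  have hγc : ContinuousOn (fun s => (x s, u)) (Icc 0 h) :=
    hxc.prodMk continuousOn_const
  refine ⟨ordConnected_Icc, hm, ?_, ?_, hxc, ?_⟩
  · exact (ContinuousOn.restrict hγc).measurable
  · intro a b hab
    rcases le_or_gt a b with hle | hlt
    · exact ((isCompact_Icc.image_of_continuousOn (hγc.mono hab)).isBounded)
    · simp [Icc_eq_empty_of_lt hlt]
  · intro s₁ s₂ hle hsub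
    have hs₁ : s₁ ∈ Icc (0:ℝ) h := hsub (left_mem_Icc.2 hle)
    have hs₂ : s₂ ∈ Icc (0:ℝ) h := hsub (right_mem_Icc.2 hle)
    have hintc : ContinuousOn (fun t => f (x t, u)) (Icc s₁ s₂) :=
      hf.comp_continuousOn (hγc.mono hsub)
    have := intervalIntegral.integral_eq_sub_of_hasDeriv_right_of_le hle
      (f := x) (f' := fun t => f (x t, u)) ((hxc.mono hsub))
      (fun t ht => ?_) (hintc.intervalIntegrable_of_Icc hle)
    · exact this.symm
    · have htI : t ∈ Ioo (0:ℝ) h := ⟨lt_of_le_of_lt hs₁.1 ht.1, lt_of_lt_of_le ht.2 hs₂.2⟩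
      have : HasDerivAt x (f (x t, u)) t :=
        (hx t (Ioo_subset_Icc_self htI)).hasDerivAt (Icc_mem_nhds htI.1 htI.2)
      exact this.hasDerivWithinAt

theorem piece {n m : ℕ} {f : E n × E m → E n} (hf : Continuous f) {Ω : Set (E n × E m)}
    {h : ℝ} (hh : 0 ≤ h) (t₀ : ℝ) (ht₀ : t₀ ∈ Icc (0:ℝ) h)
    {L M R : ℝ} (hL : 0 ≤ L) (hM : 0 ≤ M) (hR : M * h ≤ R)
    (u : E m) (b : E n)
    (hLip : ∀ y y' : E n, y ∈ Metric.closedBall b R → y' ∈ Metric.closedBall b R →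
      ‖f (y', u) - f (y, u)‖ ≤ L * ‖y' - y‖)
    (hbound : ∀ y ∈ Metric.closedBall b R, ‖f (y, u)‖ ≤ M)
    (hmem : ∀ y ∈ Metric.closedBall b (M*h), (y, u) ∈ Ω) :
    ∃ x : ℝ → E n, x t₀ = b ∧ (∀ s ∈ Icc (0:ℝ) h, dist (x s) b ≤ M * h) ∧
      IsSolution f Ω (Icc 0 h) (fun s => (x s, u)) := by
  have hRnn : 0 ≤ R := le_trans (mul_nonneg hM hh) hR
  have hpl : IsPicardLindelof (fun _ y => f (y, u)) (tmin := 0) (tmax := h) ⟨t₀, ht₀⟩ b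
      R.toNNReal 0 M.toNNReal L.toNNReal := by
    have hRc : ((R.toNNReal : ℝ≥0) : ℝ) = R := Real.coe_toNNReal R hRnn
    have hMc : ((M.toNNReal : ℝ≥0) : ℝ) = M := Real.coe_toNNReal M hM
    refine ⟨fun t _ => ?_, fun y _ => continuousOn_const, fun t _ y hy => ?_, ?_⟩
    · refine LipschitzOnWith.of_dist_le_mul fun y hy y' hy' => ?_
      rw [hRc] at hy hy'
      rw [Real.coe_toNNReal L hL, dist_eq_norm]
      exact hLip y' y hy' hy
    · rw [hRc] at hy; rw [hMc]; exact hbound y hy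
    · rw [hMc, hRc, NNReal.coe_zero]
      show M * max (h - t₀) (t₀ - 0) ≤ R - 0
      rw [sub_zero R]
      calc M * max (h - t₀) (t₀ - 0) ≤ M * h := by
            apply mul_le_mul_of_nonneg_left _ hM
            exact max_le (by linarith [ht₀.1]) (by linarith [ht₀.2])
        _ ≤ R := hR
  obtain ⟨x, hx0, hxd, hxb⟩ := exists_solution_with_bound b hpl
  have hdist : ∀ s ∈ Icc (0:ℝ) h, dist (x s) b ≤ M * h := by
    intro s hs
    refine (hxb s hs).trans ?_
    show ((M.toNNReal : ℝ≥0) : ℝ) * |s - t₀| ≤ M * h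
    rw [Real.coe_toNNReal M hM]
    apply mul_le_mul_of_nonneg_left _ hM
    rw [abs_le]
    constructor <;> [linarith [hs.1, ht₀.2]; linarith [hs.2, ht₀.1]]
  have hmem' : ∀ s ∈ Icc (0:ℝ) h, (x s, u) ∈ Ω := fun s hs =>
    hmem _ (Metric.mem_closedBall.2 (hdist s hs))
  exact ⟨x, hx0, hdist, isSolution_of_deriv hf hh u x hxd hmem'⟩


end Aux

set_option maxHeartbeats 4000000 in
/-- preservation of difference vector fields.
Let `χ(x,u) = (χ_I(x), χ_II(x,u))` be a triangular homeomorphism conjugating `ẋ = f(x,u)`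
to `ż = g(z,v)` over `Ω, Ω'`. Then for all feedbacks `α₁, α₂` on `Ω`, the map `χ_I` sends
every solution of `ẋ = f(x,α₁(x)) − f(x,α₂(x))` remaining in `Ω_{ℝ^n}` to a solution of
`ż = g(z,(χ□α₁)(z)) − g(z,(χ□α₂)(z))` remaining in `Ω'_{ℝ^n}`, where
`(χ□α)(z) = χ_II(χ_I⁻¹(z), α(χ_I⁻¹(z)))`. -/
theorem difference_vector_fields_preserved {n m : ℕ}
    (f g : E n × E m → E n)
    (hf : Continuous f) (hg : Continuous g)
    (hfL : LocallyLipschitzFirst f) (hgL : LocallyLipschitzFirst g)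
    (Ω Ω' : Set (E n × E m)) (hΩ : IsOpen Ω) (hΩ' : IsOpen Ω')
    (χI : E n → E n) (χII : E n × E m → E m)
    (χinv : E n × E m → E n × E m) (χIinv : E n → E n)
    (hhomeo : IsHomeoOn (fun p => (χI p.1, χII p)) χinv Ω Ω')
    (hIinv : ∀ x ∈ Prod.fst '' Ω, χIinv (χI x) = x)
    (hIinv' : ∀ z ∈ Prod.fst '' Ω', χI (χIinv z) = z)
    (hIinvMaps : Set.MapsTo χIinv (Prod.fst '' Ω') (Prod.fst '' Ω))
    (hconj : ConjugatesOn f g Ω Ω' (fun p => (χI p.1, χII p)))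
    (α₁ α₂ : E n → E m) (hα₁ : IsFeedback Ω α₁) (hα₂ : IsFeedback Ω α₂) :
    ∀ (I : Set ℝ) (η : ℝ → E n),
      IsODESolutionOn (fun x => f (x, α₁ x) - f (x, α₂ x)) (Prod.fst '' Ω) I η →
      IsODESolutionOn
        (fun z => g (z, χII (χIinv z, α₁ (χIinv z))) - g (z, χII (χIinv z, α₂ (χIinv z))))
        (Prod.fst '' Ω') I (χI ∘ η) := by
  rintro I η ⟨hI, hmemη, hcontη, hintη⟩
  -- continuity of χI at points of the state projection of Ω
  have hχIcont : ∀ x ∈ Prod.fst '' Ω, ContinuousAt χI x := by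
    rintro x ⟨⟨x', u₀⟩, hpΩ, rfl⟩
    have h2 : ContinuousAt (fun p : E n × E m => (χI p.1, χII p)) (x', u₀) :=
      hhomeo.cont.continuousAt (hΩ.mem_nhds hpΩ)
    have h3 : ContinuousAt (fun y : E n => (y, u₀)) x' :=
      (continuous_id.prodMk continuous_const).continuousAt
    have h4 : ContinuousAt
        (fun y : E n => ((fun p : E n × E m => (χI p.1, χII p)) ((fun y : E n => (y, u₀)) y)).1)
        x' := (ContinuousAt.comp (f := fun y : E n => (y, u₀)) (x := x') h2 h3).fst
    exact h4
  have hχImaps : ∀ x ∈ Prod.fst '' Ω, χI x ∈ Prod.fst '' Ω' := by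
    rintro x ⟨p, hp, rfl⟩
    exact ⟨(fun p : E n × E m => (χI p.1, χII p)) p, hhomeo.mapsTo hp, rfl⟩
  refine ⟨hI, fun t ht => hχImaps _ (hmemη t ht),
    fun t ht => (hχIcont _ (hmemη t ht)).comp_continuousWithinAt (hcontη t ht), ?_⟩
  intro T₁ T₂ hT hsub
  -- rewrite the integrand using `hIinv`
  have hηP : ∀ t ∈ Icc T₁ T₂, η t ∈ Prod.fst '' Ω := fun t ht => hmemη t (hsub ht)
  have hG : ∀ t ∈ uIcc T₁ T₂,
      (fun z => g (z, χII (χIinv z, α₁ (χIinv z))) - g (z, χII (χIinv z, α₂ (χIinv z))))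
        ((χI ∘ η) t)
      = g (χI (η t), χII (η t, α₁ (η t))) - g (χI (η t), χII (η t, α₂ (η t))) := by
    intro t ht
    rw [uIcc_of_le hT] at ht
    simp only [Function.comp]
    rw [hIinv _ (hηP t ht)]
  rw [intervalIntegral.integral_congr hG]
  set G₁ : ℝ → E n := fun t => g (χI (η t), χII (η t, α₁ (η t))) with hG₁def
  set G₂ : ℝ → E n := fun t => g (χI (η t), χII (η t, α₂ (η t))) with hG₂def
  rcases eq_or_lt_of_le hT with rfl | hTlt
  · simp
  -- now the real work
  obtain ⟨hα₁c, hα₁m⟩ := hα₁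
  obtain ⟨hα₂c, hα₂m⟩ := hα₂
  set P := Icc T₁ T₂ with hPdef
  have hPcomp : IsCompact P := isCompact_Icc
  have hηPc : ContinuousOn η P := hcontη.mono hsub
  set Γ₁ : ℝ → E n × E m := fun t => (η t, α₁ (η t)) with hΓ₁def
  set Γ₂ : ℝ → E n × E m := fun t => (η t, α₂ (η t)) with hΓ₂def
  have hΓ₁c : ContinuousOn Γ₁ P := hηPc.prodMk ((hα₁c.comp hηPc) hηP)
  have hΓ₂c : ContinuousOn Γ₂ P := hηPc.prodMk ((hα₂c.comp hηPc) hηP)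
  have hΓ₁Ω : ∀ t ∈ P, Γ₁ t ∈ Ω := fun t ht => hα₁m _ (hηP t ht)
  have hΓ₂Ω : ∀ t ∈ P, Γ₂ t ∈ Ω := fun t ht => hα₂m _ (hηP t ht)
  set Q : Set (E n × E m) := Γ₁ '' P ∪ Γ₂ '' P with hQdef
  have hQcomp : IsCompact Q :=
    (hPcomp.image_of_continuousOn hΓ₁c).union (hPcomp.image_of_continuousOn hΓ₂c)
  have hQΩ : Q ⊆ Ω := by
    rintro p (⟨t, ht, rfl⟩ | ⟨t, ht, rfl⟩)
    exacts [hΓ₁Ω t ht, hΓ₂Ω t ht]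
  obtain ⟨ρ, hρpos, hρΩ⟩ := hQcomp.exists_cthickening_subset_open hΩ hQΩ
  set Tb : Set (E n × E m) := Metric.cthickening ρ Q with hTbdef
  have hTbcomp : IsCompact Tb := hQcomp.cthickening
  have hQTb : Q ⊆ Tb := Metric.self_subset_cthickening Q
  obtain ⟨M₀, hM₀⟩ := hTbcomp.exists_bound_of_continuousOn (hf.continuousOn (s := Tb))
  set M := max M₀ 0 with hMdef
  have hMnn : (0:ℝ) ≤ M := le_max_right _ _
  have hMb : ∀ p ∈ Tb, ‖f p‖ ≤ M := fun p hp => (hM₀ p hp).trans (le_max_left _ _)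
  obtain ⟨r₀, hr₀, L, hLnn, hLip⟩ := exists_uniform_lipschitz hfL hQcomp
  set Φ : E n × E m → E n := fun p => g ((fun p : E n × E m => (χI p.1, χII p)) p) with hΦdef
  have hΦc : ContinuousOn Φ Tb := hg.comp_continuousOn (hhomeo.cont.mono hρΩ)
  have hΦuc := hTbcomp.uniformContinuousOn_of_continuous hΦc
  have hGΦ₁ : ∀ t, G₁ t = Φ (Γ₁ t) := fun t => rfl
  have hGΦ₂ : ∀ t, G₂ t = Φ (Γ₂ t) := fun t => rfl
  have hG₁c : ContinuousOn G₁ P := hΦc.comp hΓ₁c fun t ht => hQTb (Or.inl ⟨t, ht, rfl⟩)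
  have hG₂c : ContinuousOn G₂ P := hΦc.comp hΓ₂c fun t ht => hQTb (Or.inr ⟨t, ht, rfl⟩)
  have hXηc : ContinuousOn (fun s => f (Γ₁ s) - f (Γ₂ s)) P :=
    (hf.comp_continuousOn hΓ₁c).sub (hf.comp_continuousOn hΓ₂c)
  -- reduce to an ε-estimate
  have key : ∀ ε > (0:ℝ),
      ‖((χI ∘ η) T₂ - (χI ∘ η) T₁) - ∫ t in T₁..T₂, (G₁ t - G₂ t)‖ ≤ ε := by
    intro ε hε
    set ΔT := T₂ - T₁ with hΔTdef
    have hΔT : 0 < ΔT := sub_pos.2 hTlt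
    set ε' := ε / (4 * ΔT + 1) with hε'def
    have hε' : 0 < ε' := by positivity
    obtain ⟨δ₁, hδ₁, hΦest⟩ := Metric.uniformContinuousOn_iff.1 hΦuc ε' hε'
    obtain ⟨δ₄, hδ₄, hχIest⟩ :=
      Metric.continuousAt_iff.1 (hχIcont _ (hηP T₂ (right_mem_Icc.2 hT))) ε' hε'
    set δs := min (min r₀ ρ) (min δ₁ δ₄) / 3 with hδsdef
    have hδs : 0 < δs := by
      have := lt_min (lt_min hr₀ hρpos) (lt_min hδ₁ hδ₄)
      positivity
    have hδsr : 3 * δs ≤ r₀ := by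
      have h1 : min (min r₀ ρ) (min δ₁ δ₄) ≤ r₀ := le_trans (min_le_left _ _) (min_le_left _ _)
      rw [hδsdef]; linarith
    have hδsρ : 3 * δs ≤ ρ := by
      have h1 : min (min r₀ ρ) (min δ₁ δ₄) ≤ ρ := le_trans (min_le_left _ _) (min_le_right _ _)
      rw [hδsdef]; linarith
    have hδs1 : 2 * δs < δ₁ := by
      have h1 : min (min r₀ ρ) (min δ₁ δ₄) ≤ δ₁ := le_trans (min_le_right _ _) (min_le_left _ _)
      rw [hδsdef]; linarith
    have hδs4 : δs < δ₄ := by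
      have h1 : min (min r₀ ρ) (min δ₁ δ₄) ≤ δ₄ := le_trans (min_le_right _ _) (min_le_right _ _)
      rw [hδsdef]; linarith
    set Ce := ΔT * Real.exp (2 * L * ΔT) with hCedef
    have hCe : 0 < Ce := by positivity
    set ε₃ := δs / (2 * Ce) with hε₃def
    have hε₃ : 0 < ε₃ := by positivity
    obtain ⟨δ₂, hδ₂, hXest⟩ := Metric.uniformContinuousOn_iff.1
      (hPcomp.uniformContinuousOn_of_continuous hXηc) ε₃ hε₃
    obtain ⟨δa, hδa, hΓ₁est⟩ := Metric.uniformContinuousOn_iff.1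
      (hPcomp.uniformContinuousOn_of_continuous hΓ₁c) δ₁ hδ₁
    obtain ⟨δb, hδb, hΓ₂est⟩ := Metric.uniformContinuousOn_iff.1
      (hPcomp.uniformContinuousOn_of_continuous hΓ₂c) δ₁ hδ₁
    set δm := min (min δ₂ (min δa δb)) (min (δs / (2 * M + 1)) (ε₃ / (3 * L * M + 1))) with hδmdef
    have hδm : 0 < δm := by
      have h1 : 0 < δs / (2 * M + 1) := by positivity
      have h2 : 0 < ε₃ / (3 * L * M + 1) := by positivity
      exact lt_min (lt_min hδ₂ (lt_min hδa hδb)) (lt_min h1 h2)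
    obtain ⟨N, hNgt⟩ := exists_nat_gt (ΔT / δm)
    have hNpos : 0 < (N : ℝ) := lt_trans (by positivity) hNgt
    have hNne : (N : ℝ) ≠ 0 := ne_of_gt hNpos
    set h := ΔT / N with hhdef
    have hh : 0 < h := by positivity
    have hhN : h * N = ΔT := by rw [hhdef]; field_simp
    have hhδm : h < δm := by
      rw [hhdef, div_lt_iff₀ hNpos]
      calc ΔT = (ΔT / δm) * δm := by field_simp
        _ < N * δm := by exact mul_lt_mul_of_pos_right hNgt hδm
        _ = δm * N := mul_comm _ _
    have hhδ₂ : h < δ₂ := lt_of_lt_of_le hhδm (le_trans (min_le_left _ _) (min_le_left _ _))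
    have hhδa : h < δa := lt_of_lt_of_le hhδm
      (le_trans (min_le_left _ _) (le_trans (min_le_right _ _) (min_le_left _ _)))
    have hhδb : h < δb := lt_of_lt_of_le hhδm
      (le_trans (min_le_left _ _) (le_trans (min_le_right _ _) (min_le_right _ _)))
    have hhM : 2 * M * h ≤ δs := by
      have h1 : h ≤ δs / (2 * M + 1) := le_of_lt (lt_of_lt_of_le hhδm
        (le_trans (min_le_right _ _) (min_le_left _ _)))
      rw [le_div_iff₀ (by positivity)] at h1
      have h2 : h * (2 * M + 1) = 2 * M * h + h := by ring
      linarith [hh.le]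
    have hhLM : 3 * L * M * h ≤ ε₃ := by
      have h1 : h ≤ ε₃ / (3 * L * M + 1) := le_of_lt (lt_of_lt_of_le hhδm
        (le_trans (min_le_right _ _) (min_le_right _ _)))
      rw [le_div_iff₀ (by positivity)] at h1
      have h2 : h * (3 * L * M + 1) = 3 * L * M * h + h := by ring
      linarith [hh.le]
    set t : ℕ → ℝ := fun i => T₁ + i * h with htdef
    have ht0 : t 0 = T₁ := by rw [htdef]; norm_num
    have htN : t N = T₂ := by rw [htdef]; simp only; linarith [hhN]
    have htstep : ∀ i : ℕ, t (i + 1) - t i = h := by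
      intro i; rw [htdef]; push_cast; ring
    have htle : ∀ i : ℕ, t i ≤ t (i + 1) := by
      intro i; have := htstep i; linarith
    have hti : ∀ i : ℕ, t i = T₁ + i * h := fun i => rfl
    have htmem : ∀ i : ℕ, i ≤ N → t i ∈ P := by
      intro i hi
      rw [hPdef, hti i]
      have h5 : (i : ℝ) * h ≤ N * h := by
        apply mul_le_mul_of_nonneg_right _ hh.le
        exact_mod_cast hi
      have h6 : (0:ℝ) ≤ (i:ℝ) * h := mul_nonneg (Nat.cast_nonneg i) hh.le
      exact ⟨by linarith, by linarith [hhN]⟩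
    set c := 3 * L * M * h + ε₃ with hcdef
    have hcpos : 0 < c := by positivity
    have hc2 : c ≤ 2 * ε₃ := by rw [hcdef]; linarith
    set B : ℕ → ℝ := fun i => h * c * i * (1 + 2 * L * h) ^ i with hBdef
    have hbase : (1:ℝ) ≤ 1 + 2 * L * h := by nlinarith [mul_nonneg hLnn hh.le]
    have hbase0 : (0:ℝ) ≤ 1 + 2 * L * h := by linarith
    have hB0 : B 0 = 0 := by simp [hBdef]
    have hBnn : ∀ i, 0 ≤ B i := by
      intro i
      have := pow_nonneg hbase0 i
      have := Nat.cast_nonneg (α := ℝ) i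
      positivity
    have hBδ : ∀ i, i ≤ N → B i ≤ δs := by
      intro i hi
      have h1 : B i ≤ h * c * N * (1 + 2 * L * h) ^ N := by
        rw [hBdef]
        apply mul_le_mul
        · apply mul_le_mul_of_nonneg_left _ (by positivity)
          exact_mod_cast hi
        · exact pow_le_pow_right₀ hbase hi
        · exact pow_nonneg hbase0 i
        · positivity
      have h2 : (1 + 2 * L * h) ^ N ≤ Real.exp (2 * L * h) ^ N := by
        apply pow_le_pow_left₀ hbase0
        linarith [Real.add_one_le_exp (2 * L * h)]
      have h3 : Real.exp (2 * L * h) ^ N = Real.exp (2 * L * ΔT) := by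
        rw [← Real.exp_nat_mul]
        congr 1
        rw [← hhN]; ring
      have h4 : h * c * N = c * ΔT := by rw [← hhN]; ring
      calc B i ≤ h * c * N * (1 + 2 * L * h) ^ N := h1
        _ ≤ h * c * N * Real.exp (2 * L * h) ^ N := by
            apply mul_le_mul_of_nonneg_left h2
            positivity
        _ = c * ΔT * Real.exp (2 * L * ΔT) := by rw [h3, h4]
        _ = c * Ce := by rw [hCedef]; ring
        _ ≤ 2 * ε₃ * Ce := mul_le_mul_of_nonneg_right hc2 hCe.le
        _ = δs := by rw [hε₃def]; field_simp
    -- the inductive zigzag construction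
    have step : ∀ i : ℕ, i < N → ∀ w : E n, ∀ d : ℝ, 0 ≤ d → d ≤ δs →
        ‖w - η (t i)‖ ≤ d → ∃ w',
        ‖w' - η (t (i + 1))‖ ≤ d * (1 + 2 * L * h) + h * c ∧
        ‖(χI w' - χI w) - (h • G₁ (t i) - h • G₂ (t i))‖ ≤ 2 * (h * ε') := by
      intro i hiN w d hd0 hdδ hwd
      have htiP : t i ∈ P := htmem i (le_of_lt hiN)
      have hti1P : t (i+1) ∈ P := htmem (i+1) (Nat.succ_le_of_lt hiN)
      have hQ1 : Γ₁ (t i) ∈ Q := Or.inl ⟨t i, htiP, rfl⟩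
      have hQ2 : Γ₂ (t i) ∈ Q := Or.inr ⟨t i, htiP, rfl⟩
      have hdp : ∀ (a b : E n) (u : E m),
          dist ((a, u) : E n × E m) ((b, u) : E n × E m) = dist a b := by
        intro a b u; rw [Prod.dist_eq]; simp [dist_nonneg]
      have hwdist : dist w (η (t i)) ≤ d := by rw [dist_eq_norm]; exact hwd
      have hMh : M * h ≤ δs := by
        have h0 : 0 ≤ M * h := mul_nonneg hMnn hh.le
        have h1 : 2 * M * h = M * h + M * h := by ring
        linarith
      have hmemTb : ∀ (p qc : E n × E m), qc ∈ Q → dist p qc ≤ ρ → p ∈ Tb :=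
        fun p qc hq hdle => Metric.mem_cthickening_of_dist_le p qc ρ Q hq hdle
      -- FORWARD piece with control α₁ (η (t i))
      have hkey₁ : ∀ y : E n, dist y w ≤ δs →
          dist ((y, α₁ (η (t i))) : E n × E m) (Γ₁ (t i)) ≤ δs + d := by
        intro y hy
        calc dist ((y, α₁ (η (t i))) : E n × E m) (Γ₁ (t i))
            = dist y (η (t i)) := hdp _ _ _
          _ ≤ dist y w + dist w (η (t i)) := dist_triangle _ _ _
          _ ≤ δs + d := add_le_add hy hwdist
      obtain ⟨ξ, hξ0, hξd, hξsol⟩ := piece (Ω := Ω) (L := L) (M := M) (R := δs)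
        hf hh.le 0 (left_mem_Icc.2 hh.le) hLnn hMnn hMh (α₁ (η (t i))) w
        (fun y y' hy hy' => hLip (Γ₁ (t i)) hQ1 y y' _
          (Metric.mem_closedBall.2 ((hkey₁ y (Metric.mem_closedBall.1 hy)).trans
            (by linarith [hδsr, hδs.le])))
          (Metric.mem_closedBall.2 ((hkey₁ y' (Metric.mem_closedBall.1 hy')).trans
            (by linarith [hδsr, hδs.le]))))
        (fun y hy => hMb _ (hmemTb _ _ hQ1 ((hkey₁ y (Metric.mem_closedBall.1 hy)).trans
          (by linarith [hδsρ, hδs.le]))))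
        (fun y hy => hρΩ (hmemTb _ _ hQ1
          ((hkey₁ y ((Metric.mem_closedBall.1 hy).trans hMh)).trans
          (by linarith [hδsρ, hδs.le]))))
      have hξc : ContinuousOn ξ (Icc 0 h) := hξsol.contState
      have hξη : ∀ s ∈ Icc (0:ℝ) h, dist (ξ s) (η (t i)) ≤ d + M * h := by
        intro s hs
        calc dist (ξ s) (η (t i)) ≤ dist (ξ s) w + dist w (η (t i)) := dist_triangle _ _ _
          _ ≤ d + M * h := by linarith [hξd s hs, hwdist]
      have hγ₁d : ∀ s ∈ Icc (0:ℝ) h,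
          dist ((ξ s, α₁ (η (t i))) : E n × E m) (Γ₁ (t i)) ≤ d + M * h := by
        intro s hs
        calc dist ((ξ s, α₁ (η (t i))) : E n × E m) (Γ₁ (t i))
            = dist (ξ s) (η (t i)) := hdp _ _ _
          _ ≤ d + M * h := hξη s hs
      have hγ₁Tb : ∀ s ∈ Icc (0:ℝ) h, ((ξ s, α₁ (η (t i))) : E n × E m) ∈ Tb := by
        intro s hs
        exact hmemTb _ _ hQ1 ((hγ₁d s hs).trans (by linarith [hδsρ, hδs.le]))
      have hint₁ : IntervalIntegrable (fun s => f (ξ s, α₁ (η (t i))))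
          MeasureTheory.volume 0 h :=
        (hf.comp_continuousOn (hξc.prodMk continuousOn_const)).intervalIntegrable_of_Icc hh.le
      have hfor : ‖(ξ h - w) - h • f (Γ₁ (t i))‖ ≤ L * (d + M * h) * h := by
        have h1 : ξ h - w = ∫ s in (0:ℝ)..h, f (ξ s, α₁ (η (t i))) := by
          have h2 := hξsol.integral 0 h hh.le (subset_refl _)
          simpa [hξ0] using h2
        have h3 : h • f (Γ₁ (t i)) = ∫ _ in (0:ℝ)..h, f (Γ₁ (t i)) := by
          rw [intervalIntegral.integral_const, sub_zero]
        rw [h1, h3, ← intervalIntegral.integral_sub hint₁ intervalIntegrable_const]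
        refine le_trans (intervalIntegral.norm_integral_le_of_norm_le_const (C := L * (d + M * h)) ?_) ?_
        · intro s hs
          rw [uIoc_of_le hh.le] at hs
          have hsI : s ∈ Icc (0:ℝ) h := ⟨hs.1.le, hs.2⟩
          have hb1 : ((ξ s, α₁ (η (t i))) : E n × E m) ∈ Metric.closedBall (Γ₁ (t i)) r₀ :=
            Metric.mem_closedBall.2 ((hγ₁d s hsI).trans (by linarith [hδsr, hδs.le]))
          have hb2 : ((η (t i), α₁ (η (t i))) : E n × E m) ∈ Metric.closedBall (Γ₁ (t i)) r₀ :=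
            Metric.mem_closedBall_self (le_of_lt hr₀)
          refine le_trans (hLip (Γ₁ (t i)) hQ1 (η (t i)) (ξ s) (α₁ (η (t i))) hb2 hb1) ?_
          apply mul_le_mul_of_nonneg_left _ hLnn
          rw [← dist_eq_norm]
          exact hξη s hsI
        · rw [sub_zero, abs_of_pos hh]
      have hχsol₁ : IsSolution g Ω' (Icc 0 h)
          ((fun p : E n × E m => (χI p.1, χII p)) ∘ (fun s => (ξ s, α₁ (η (t i))))) :=
        (hconj _ _ hξsol.mem).mp hξsol
      have hz1 : χI (ξ h) - χI w = ∫ s in (0:ℝ)..h, Φ (ξ s, α₁ (η (t i))) := by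
        have h2 := hχsol₁.integral 0 h hh.le (subset_refl _)
        simp only [Function.comp] at h2
        rw [hΦdef]
        simpa [hξ0] using h2
      have hzint₁ : IntervalIntegrable (fun s => Φ (ξ s, α₁ (η (t i))))
          MeasureTheory.volume 0 h :=
        ((hΦc.comp (hξc.prodMk continuousOn_const) hγ₁Tb)).intervalIntegrable_of_Icc hh.le
      have hzest₁ : ‖(χI (ξ h) - χI w) - h • G₁ (t i)‖ ≤ ε' * h := by
        rw [hz1, hGΦ₁]
        have h3 : h • Φ (Γ₁ (t i)) = ∫ _ in (0:ℝ)..h, Φ (Γ₁ (t i)) := by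
          rw [intervalIntegral.integral_const, sub_zero]
        rw [h3, ← intervalIntegral.integral_sub hzint₁ intervalIntegrable_const]
        refine le_trans (intervalIntegral.norm_integral_le_of_norm_le_const (C := ε') ?_) ?_
        · intro s hs
          rw [uIoc_of_le hh.le] at hs
          have hsI : s ∈ Icc (0:ℝ) h := ⟨hs.1.le, hs.2⟩
          have hd1 : dist ((ξ s, α₁ (η (t i))) : E n × E m) (Γ₁ (t i)) < δ₁ :=
            lt_of_le_of_lt ((hγ₁d s hsI).trans (by linarith : d + M * h ≤ 2 * δs)) hδs1
          have h4 := hΦest _ (hγ₁Tb s hsI) _ (hQTb hQ1) hd1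
          rw [dist_eq_norm] at h4
          exact h4.le
        · rw [sub_zero, abs_of_pos hh]
      -- BACKWARD piece with control α₂ (η (t i)), ending at ξ h
      have hqη : dist (ξ h) (η (t i)) ≤ d + M * h := hξη h (right_mem_Icc.2 hh.le)
      have hkey₂ : ∀ y : E n, dist y (ξ h) ≤ δs →
          dist ((y, α₂ (η (t i))) : E n × E m) (Γ₂ (t i)) ≤ δs + (d + M * h) := by
        intro y hy
        calc dist ((y, α₂ (η (t i))) : E n × E m) (Γ₂ (t i))
            = dist y (η (t i)) := hdp _ _ _
          _ ≤ dist y (ξ h) + dist (ξ h) (η (t i)) := dist_triangle _ _ _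
          _ ≤ δs + (d + M * h) := add_le_add hy hqη
      obtain ⟨ζ, hζh, hζd, hζsol⟩ := piece (Ω := Ω) (L := L) (M := M) (R := δs)
        hf hh.le h (right_mem_Icc.2 hh.le) hLnn hMnn hMh (α₂ (η (t i))) (ξ h)
        (fun y y' hy hy' => hLip (Γ₂ (t i)) hQ2 y y' _
          (Metric.mem_closedBall.2 ((hkey₂ y (Metric.mem_closedBall.1 hy)).trans
            (by linarith [hδsr, hδs.le])))
          (Metric.mem_closedBall.2 ((hkey₂ y' (Metric.mem_closedBall.1 hy')).trans
            (by linarith [hδsr, hδs.le]))))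
        (fun y hy => hMb _ (hmemTb _ _ hQ2 ((hkey₂ y (Metric.mem_closedBall.1 hy)).trans
          (by linarith [hδsρ, hδs.le]))))
        (fun y hy => hρΩ (hmemTb _ _ hQ2
          ((hkey₂ y ((Metric.mem_closedBall.1 hy).trans hMh)).trans
          (by linarith [hδsρ, hδs.le]))))
      have hζc : ContinuousOn ζ (Icc 0 h) := hζsol.contState
      have hζη : ∀ s ∈ Icc (0:ℝ) h, dist (ζ s) (η (t i)) ≤ d + 2 * (M * h) := by
        intro s hs
        calc dist (ζ s) (η (t i)) ≤ dist (ζ s) (ξ h) + dist (ξ h) (η (t i)) :=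
            dist_triangle _ _ _
          _ ≤ d + 2 * (M * h) := by linarith [hζd s hs, hqη]
      have hγ₂d : ∀ s ∈ Icc (0:ℝ) h,
          dist ((ζ s, α₂ (η (t i))) : E n × E m) (Γ₂ (t i)) ≤ d + 2 * (M * h) := by
        intro s hs
        calc dist ((ζ s, α₂ (η (t i))) : E n × E m) (Γ₂ (t i))
            = dist (ζ s) (η (t i)) := hdp _ _ _
          _ ≤ d + 2 * (M * h) := hζη s hs
      have hγ₂Tb : ∀ s ∈ Icc (0:ℝ) h, ((ζ s, α₂ (η (t i))) : E n × E m) ∈ Tb := by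
        intro s hs
        exact hmemTb _ _ hQ2 ((hγ₂d s hs).trans (by linarith [hδsρ, hδs.le]))
      have hint₂ : IntervalIntegrable (fun s => f (ζ s, α₂ (η (t i))))
          MeasureTheory.volume 0 h :=
        (hf.comp_continuousOn (hζc.prodMk continuousOn_const)).intervalIntegrable_of_Icc hh.le
      have hback : ‖(ξ h - ζ 0) - h • f (Γ₂ (t i))‖ ≤ L * (d + 2 * (M * h)) * h := by
        have h1 : ξ h - ζ 0 = ∫ s in (0:ℝ)..h, f (ζ s, α₂ (η (t i))) := by
          have h2 := hζsol.integral 0 h hh.le (subset_refl _)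
          simpa [hζh] using h2
        have h3 : h • f (Γ₂ (t i)) = ∫ _ in (0:ℝ)..h, f (Γ₂ (t i)) := by
          rw [intervalIntegral.integral_const, sub_zero]
        rw [h1, h3, ← intervalIntegral.integral_sub hint₂ intervalIntegrable_const]
        refine le_trans (intervalIntegral.norm_integral_le_of_norm_le_const (C := L * (d + 2 * (M * h))) ?_) ?_
        · intro s hs
          rw [uIoc_of_le hh.le] at hs
          have hsI : s ∈ Icc (0:ℝ) h := ⟨hs.1.le, hs.2⟩
          have hb1 : ((ζ s, α₂ (η (t i))) : E n × E m) ∈ Metric.closedBall (Γ₂ (t i)) r₀ :=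
            Metric.mem_closedBall.2 ((hγ₂d s hsI).trans (by linarith [hδsr, hδs.le]))
          have hb2 : ((η (t i), α₂ (η (t i))) : E n × E m) ∈ Metric.closedBall (Γ₂ (t i)) r₀ :=
            Metric.mem_closedBall_self (le_of_lt hr₀)
          refine le_trans (hLip (Γ₂ (t i)) hQ2 (η (t i)) (ζ s) (α₂ (η (t i))) hb2 hb1) ?_
          apply mul_le_mul_of_nonneg_left _ hLnn
          rw [← dist_eq_norm]
          exact hζη s hsI
        · rw [sub_zero, abs_of_pos hh]
      have hχsol₂ : IsSolution g Ω' (Icc 0 h)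
          ((fun p : E n × E m => (χI p.1, χII p)) ∘ (fun s => (ζ s, α₂ (η (t i))))) :=
        (hconj _ _ hζsol.mem).mp hζsol
      have hz2 : χI (ξ h) - χI (ζ 0) = ∫ s in (0:ℝ)..h, Φ (ζ s, α₂ (η (t i))) := by
        have h2 := hχsol₂.integral 0 h hh.le (subset_refl _)
        simp only [Function.comp] at h2
        rw [hΦdef]
        simpa [hζh] using h2
      have hzint₂ : IntervalIntegrable (fun s => Φ (ζ s, α₂ (η (t i))))
          MeasureTheory.volume 0 h :=
        ((hΦc.comp (hζc.prodMk continuousOn_const) hγ₂Tb)).intervalIntegrable_of_Icc hh.le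
      have hzest₂ : ‖(χI (ξ h) - χI (ζ 0)) - h • G₂ (t i)‖ ≤ ε' * h := by
        rw [hz2, hGΦ₂]
        have h3 : h • Φ (Γ₂ (t i)) = ∫ _ in (0:ℝ)..h, Φ (Γ₂ (t i)) := by
          rw [intervalIntegral.integral_const, sub_zero]
        rw [h3, ← intervalIntegral.integral_sub hzint₂ intervalIntegrable_const]
        refine le_trans (intervalIntegral.norm_integral_le_of_norm_le_const (C := ε') ?_) ?_
        · intro s hs
          rw [uIoc_of_le hh.le] at hs
          have hsI : s ∈ Icc (0:ℝ) h := ⟨hs.1.le, hs.2⟩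
          have hd1 : dist ((ζ s, α₂ (η (t i))) : E n × E m) (Γ₂ (t i)) < δ₁ :=
            lt_of_le_of_lt ((hγ₂d s hsI).trans
              (by linarith : d + 2 * (M * h) ≤ 2 * δs)) hδs1
          have h4 := hΦest _ (hγ₂Tb s hsI) _ (hQTb hQ2) hd1
          rw [dist_eq_norm] at h4
          exact h4.le
        · rw [sub_zero, abs_of_pos hh]
      -- the step of η itself
      have hIccsub : Icc (t i) (t (i+1)) ⊆ P := by
        rw [hPdef]
        exact Icc_subset_Icc htiP.1 hti1P.2
      have hintX : IntervalIntegrable (fun s => f (Γ₁ s) - f (Γ₂ s))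
          MeasureTheory.volume (t i) (t (i+1)) :=
        (hXηc.mono hIccsub).intervalIntegrable_of_Icc (htle i)
      have hηstep : ‖(η (t (i+1)) - η (t i)) - h • (f (Γ₁ (t i)) - f (Γ₂ (t i)))‖
          ≤ ε₃ * h := by
        have h1 : η (t (i+1)) - η (t i) = ∫ s in t i..t (i+1), (f (Γ₁ s) - f (Γ₂ s)) :=
          hintη (t i) (t (i+1)) (htle i) (fun s hs => hsub (hIccsub hs))
        have h3 : h • (f (Γ₁ (t i)) - f (Γ₂ (t i)))
            = ∫ _ in t i..t (i+1), (f (Γ₁ (t i)) - f (Γ₂ (t i))) := by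
          rw [intervalIntegral.integral_const, htstep i]
        rw [h1, h3, ← intervalIntegral.integral_sub hintX intervalIntegrable_const]
        refine le_trans (intervalIntegral.norm_integral_le_of_norm_le_const (C := ε₃) ?_) ?_
        · intro s hs
          rw [uIoc_of_le (htle i)] at hs
          have hsP : s ∈ P := hIccsub ⟨hs.1.le, hs.2⟩
          have hds : dist s (t i) < δ₂ := by
            rw [Real.dist_eq, abs_of_nonneg (by linarith [hs.1.le])]
            linarith [htstep i, hs.2, hhδ₂]
          have h4 := hXest s hsP (t i) htiP hds
          rw [dist_eq_norm] at h4
          exact h4.le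
        · rw [htstep i, abs_of_pos hh]
      -- combine the three estimates in state space
      refine ⟨ζ 0, ?_, ?_⟩
      · have hid : ζ 0 - η (t (i+1)) = (w - η (t i))
            + ((ξ h - w) - h • f (Γ₁ (t i)))
            - ((ξ h - ζ 0) - h • f (Γ₂ (t i)))
            - ((η (t (i+1)) - η (t i)) - h • (f (Γ₁ (t i)) - f (Γ₂ (t i)))) := by
          rw [smul_sub]; abel
        rw [hid]
        refine le_trans (norm_sub_le _ _) ?_
        refine le_trans (add_le_add (norm_sub_le _ _) le_rfl) ?_
        refine le_trans (add_le_add (add_le_add (norm_add_le _ _) le_rfl) le_rfl) ?_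
        have harith : d + L * (d + M * h) * h + L * (d + 2 * (M * h)) * h + ε₃ * h
            = d * (1 + 2 * L * h) + h * c := by rw [hcdef]; ring
        linarith [hwd, hfor, hback, hηstep]
      · have hid2 : (χI (ζ 0) - χI w) - (h • G₁ (t i) - h • G₂ (t i))
            = ((χI (ξ h) - χI w) - h • G₁ (t i))
              - ((χI (ξ h) - χI (ζ 0)) - h • G₂ (t i)) := by abel
        rw [hid2]
        refine le_trans (norm_sub_le _ _) ?_
        have : ε' * h + ε' * h = 2 * (h * ε') := by ring
        linarith [hzest₁, hzest₂]
    have hGc : ContinuousOn (fun s => G₁ s - G₂ s) P := hG₁c.sub hG₂c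
    have main : ∀ i : ℕ, i ≤ N → ∃ w : E n, ‖w - η (t i)‖ ≤ B i ∧
        ‖(χI w - χI (η T₁)) - ∫ s in T₁..(t i), (G₁ s - G₂ s)‖ ≤ 4 * ε' * (h * i) := by
      intro i
      induction i with
      | zero =>
        intro _
        refine ⟨η T₁, ?_, ?_⟩
        · rw [ht0, hB0]; simp
        · rw [ht0]; simp
      | succ i ih =>
        intro hi1
        have hiN : i < N := hi1
        obtain ⟨w, hwB, hwz⟩ := ih (le_of_lt hiN)
        obtain ⟨w', hw'B, hw'z⟩ := step i hiN w (B i) (hBnn i) (hBδ i (le_of_lt hiN)) hwB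
        have hIccsub1 : Icc T₁ (t i) ⊆ P := by
          rw [hPdef]
          exact Icc_subset_Icc le_rfl (htmem i (le_of_lt hiN)).2
        have hIccsub2 : Icc (t i) (t (i+1)) ⊆ P := by
          rw [hPdef]
          exact Icc_subset_Icc (htmem i (le_of_lt hiN)).1 (htmem (i+1) hi1).2
        have hInt1 : IntervalIntegrable (fun s => G₁ s - G₂ s) MeasureTheory.volume T₁ (t i) :=
          (hGc.mono hIccsub1).intervalIntegrable_of_Icc (htmem i (le_of_lt hiN)).1
        have hInt2 : IntervalIntegrable (fun s => G₁ s - G₂ s) MeasureTheory.volume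
            (t i) (t (i+1)) := (hGc.mono hIccsub2).intervalIntegrable_of_Icc (htle i)
        have hIntc : IntervalIntegrable (fun _ : ℝ => G₁ (t i) - G₂ (t i)) MeasureTheory.volume
            (t i) (t (i+1)) := intervalIntegrable_const
        refine ⟨w', ?_, ?_⟩
        · refine hw'B.trans ?_
          have hpow : (1:ℝ) ≤ (1 + 2*L*h)^(i+1) := by
            have := pow_le_pow_left₀ (by norm_num : (0:ℝ) ≤ 1) hbase (i+1)
            simpa using this
          have hBi : B i * (1 + 2*L*h) = h*c*(i:ℝ)*(1 + 2*L*h)^(i+1) := by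
            rw [hBdef]; ring
          have hBsucc : B (i+1) = h*c*(i:ℝ)*(1 + 2*L*h)^(i+1) + h*c*(1 + 2*L*h)^(i+1) := by
            rw [hBdef]; push_cast; ring
          have hle2 : h * c ≤ h * c * (1 + 2*L*h)^(i+1) := by
            calc h * c = h*c*1 := (mul_one _).symm
              _ ≤ h*c*(1 + 2*L*h)^(i+1) :=
                mul_le_mul_of_nonneg_left hpow (by positivity)
          rw [hBsucc, ← hBi]
          linarith [hle2]
        · -- estimate of the Riemann-sum error on this step
          have hC : ‖(h • G₁ (t i) - h • G₂ (t i)) - ∫ s in t i..t (i+1), (G₁ s - G₂ s)‖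
              ≤ 2 * (h * ε') := by
            have hconst : h • G₁ (t i) - h • G₂ (t i)
                = ∫ _ in t i..t (i+1), (G₁ (t i) - G₂ (t i)) := by
              rw [intervalIntegral.integral_const, htstep i, smul_sub]
            rw [hconst, ← intervalIntegral.integral_sub hIntc hInt2]
            have hbd : ∀ s ∈ Set.uIoc (t i) (t (i+1)),
                ‖(G₁ (t i) - G₂ (t i)) - (G₁ s - G₂ s)‖ ≤ 2 * ε' := by
              intro s hs
              rw [uIoc_of_le (htle i)] at hs
              have hsP : s ∈ P := hIccsub2 ⟨le_of_lt hs.1, hs.2⟩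
              have hds : dist s (t i) ≤ h := by
                rw [Real.dist_eq, abs_of_nonneg (by linarith [hs.1.le])]
                linarith [htstep i, hs.2]
              have hQ1s : Γ₁ s ∈ Tb := hQTb (Or.inl ⟨s, hsP, rfl⟩)
              have hQ1i : Γ₁ (t i) ∈ Tb := hQTb (Or.inl ⟨t i, htmem i (le_of_lt hiN), rfl⟩)
              have hQ2s : Γ₂ s ∈ Tb := hQTb (Or.inr ⟨s, hsP, rfl⟩)
              have hQ2i : Γ₂ (t i) ∈ Tb := hQTb (Or.inr ⟨t i, htmem i (le_of_lt hiN), rfl⟩)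
              have h₁ : dist (Φ (Γ₁ (t i))) (Φ (Γ₁ s)) < ε' :=
                hΦest _ hQ1i _ hQ1s (by
                  rw [dist_comm]
                  exact hΓ₁est s hsP (t i) (htmem i (le_of_lt hiN)) (lt_of_le_of_lt hds hhδa))
              have h₂ : dist (Φ (Γ₂ (t i))) (Φ (Γ₂ s)) < ε' :=
                hΦest _ hQ2i _ hQ2s (by
                  rw [dist_comm]
                  exact hΓ₂est s hsP (t i) (htmem i (le_of_lt hiN)) (lt_of_le_of_lt hds hhδb))
              have hre : (G₁ (t i) - G₂ (t i)) - (G₁ s - G₂ s)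
                  = (G₁ (t i) - G₁ s) - (G₂ (t i) - G₂ s) := by abel
              rw [hre]
              refine (norm_sub_le _ _).trans ?_
              rw [← dist_eq_norm, ← dist_eq_norm, hGΦ₁, hGΦ₁, hGΦ₂, hGΦ₂]
              linarith
            refine (intervalIntegral.norm_integral_le_of_norm_le_const hbd).trans ?_
            rw [htstep i, abs_of_pos hh]
            have : 2 * ε' * h = 2 * (h * ε') := by ring
            linarith
          have hsplit : (∫ s in T₁..t (i+1), (G₁ s - G₂ s))
              = (∫ s in T₁..t i, (G₁ s - G₂ s)) + ∫ s in t i..t (i+1), (G₁ s - G₂ s) :=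
            (intervalIntegral.integral_add_adjacent_intervals hInt1 hInt2).symm
          have heq : (χI w' - χI (η T₁)) - ∫ s in T₁..t (i+1), (G₁ s - G₂ s)
              = ((χI w - χI (η T₁)) - ∫ s in T₁..t i, (G₁ s - G₂ s))
                + ((χI w' - χI w) - (h • G₁ (t i) - h • G₂ (t i)))
                + ((h • G₁ (t i) - h • G₂ (t i)) - ∫ s in t i..t (i+1), (G₁ s - G₂ s)) := by
            rw [hsplit]; abel
          rw [heq]
          refine le_trans (norm_add_le _ _) ?_
          refine le_trans (add_le_add_left (norm_add_le _ _) _) ?_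
          have har : 4 * ε' * (h * ((i:ℝ)+1)) = (4 * ε' * (h * (i:ℝ)) + 2 * (h * ε'))
              + 2 * (h * ε') := by ring
          have hcast : ((i+1 : ℕ) : ℝ) = (i:ℝ) + 1 := by push_cast; ring
          rw [hcast, har]
          exact add_le_add (add_le_add hwz hw'z) hC
    obtain ⟨w, hwB, hwz⟩ := main N le_rfl
    rw [htN] at hwB hwz
    have hwd : dist (χI w) (χI (η T₂)) < ε' := by
      apply hχIest
      rw [dist_eq_norm]
      exact lt_of_le_of_lt (hwB.trans (hBδ N le_rfl)) hδs4
    have hfinal : ‖(χI (η T₂) - χI (η T₁)) - ∫ s in T₁..T₂, (G₁ s - G₂ s)‖ ≤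
        ε' + 4 * ε' * (h * N) := by
      have heq : (χI (η T₂) - χI (η T₁)) - ∫ s in T₁..T₂, (G₁ s - G₂ s) =
          (χI (η T₂) - χI w) + ((χI w - χI (η T₁)) - ∫ s in T₁..T₂, (G₁ s - G₂ s)) := by abel
      rw [heq]
      refine (norm_add_le _ _).trans (add_le_add ?_ hwz)
      rw [← dist_eq_norm] at *
      rw [dist_comm]
      exact hwd.le
    rw [hhN] at hfinal
    simp only [Function.comp]
    calc ‖(χI (η T₂) - χI (η T₁)) - ∫ s in T₁..T₂, (G₁ s - G₂ s)‖ ≤ ε' + 4 * ε' * ΔT := hfinal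
      _ = ε := by rw [hε'def]; field_simp; ring
  have h0 : ‖((χI ∘ η) T₂ - (χI ∘ η) T₁) - ∫ t in T₁..T₂, (G₁ t - G₂ t)‖ ≤ 0 := by
    by_contra hcon
    push_neg at hcon
    exact absurd (key _ (half_pos hcon)) (by linarith)
  rw [← sub_eq_zero]
  exact norm_le_zero_iff.1 h0
end
end

section
/- Let U ⊆ ℝ^d be open, and let (X^k) be a sequence of continuous vector fields U → ℝ^d converging to a continuous vector field X uniformly on compact subsets of U; assume all the X^k and X have a flow. Suppose X_t(x) is defined for all (t,x) ∈ [0,T] × K, where T > 0 and K ⊆ U is compact. Then for k large enough, X^k_t(x) is defined for all (t,x) ∈ [0,T] × K, and the maps (t,x) ↦ X^k_t(x) converge to (t,x) ↦ X_t(x) uniformly on [0,T] × K. -/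
open Set Topology Filter ContDiff

noncomputable section

/-- An integral curve of the vector field `X`, remaining in `U`, starting from `x₀` at
time `0`, defined on the open interval `s ∋ 0`. -/
structure IsIntegCurveOn {d : ℕ} (X : E d → E d) (U : Set (E d)) (x₀ : E d)
    (s : Set ℝ) (γ : ℝ → E d) : Prop where
  isOpen : IsOpen s
  ordConn : s.OrdConnected
  zeroMem : (0 : ℝ) ∈ s
  init : γ 0 = x₀
  mem : ∀ t ∈ s, γ t ∈ U
  deriv : ∀ t ∈ s, HasDerivAt γ (X (γ t)) t

/-- The vector field `X` has a flow on `U`: through every point of `U` there is an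
integral curve, and any two integral curves through the same point agree on the
intersection of their domains. -/
def HasFlow {d : ℕ} (X : E d → E d) (U : Set (E d)) : Prop :=
  (∀ x₀ ∈ U, ∃ ε > (0:ℝ), ∃ γ, IsIntegCurveOn X U x₀ (Ioo (-ε) ε) γ) ∧
  ∀ x₀ ∈ U, ∀ (s₁ s₂ : Set ℝ) (γ₁ γ₂ : ℝ → E d), IsIntegCurveOn X U x₀ s₁ γ₁ →
    IsIntegCurveOn X U x₀ s₂ γ₂ → ∀ t ∈ s₁ ∩ s₂, γ₁ t = γ₂ t

/-- The set of `(t, x)` such that the flow `X_t(x)` is defined. -/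
def FlowDomain {d : ℕ} (X : E d → E d) (U : Set (E d)) : Set (ℝ × E d) :=
  {p | p.2 ∈ U ∧ ∃ s γ, IsIntegCurveOn X U p.2 s γ ∧ p.1 ∈ s}

/-- `φ` is the flow map of `X` on `U`: `φ(t, x₀) = γ(t)` for every integral curve `γ`
through `x₀` and every time `t` in its domain. -/
def IsFlowMap {d : ℕ} (X : E d → E d) (U : Set (E d)) (φ : ℝ × E d → E d) : Prop :=
  ∀ x₀ ∈ U, ∀ (s : Set ℝ) (γ : ℝ → E d),
    IsIntegCurveOn X U x₀ s γ → ∀ t ∈ s, φ (t, x₀) = γ t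

/-! ### Auxiliary infrastructure -/

namespace FlowsAux

variable {d : ℕ} {X : E d → E d} {U : Set (E d)} {x : E d} {s : Set ℝ} {γ : ℝ → E d}

theorem curve_continuousOn (h : IsIntegCurveOn X U x s γ) : ContinuousOn γ s :=
  fun t ht => ((h.deriv t ht).continuousAt).continuousWithinAt

/-- Union of two ord-connected sets with a common point is ord-connected. -/
theorem ordConnected_union {s t : Set ℝ} (hs : s.OrdConnected) (ht : t.OrdConnected)
    {p : ℝ} (hps : p ∈ s) (hpt : p ∈ t) : (s ∪ t).OrdConnected := by
  constructor
  rintro a (ha | ha) b (hb | hb) c hc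
  · exact Or.inl (hs.out ha hb hc)
  · rcases le_total c p with h | h
    · exact Or.inl (hs.out ha hps ⟨hc.1, h⟩)
    · exact Or.inr (ht.out hpt hb ⟨h, hc.2⟩)
  · rcases le_total c p with h | h
    · exact Or.inr (ht.out ha hpt ⟨hc.1, h⟩)
    · exact Or.inl (hs.out hps hb ⟨h, hc.2⟩)
  · exact Or.inr (ht.out ha hb hc)

/-- The union of the domains of all integral curves through `x`. -/
def curveSet (X : E d → E d) (U : Set (E d)) (x : E d) : Set ℝ :=
  ⋃₀ {s | ∃ γ, IsIntegCurveOn X U x s γ}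

open Classical in
/-- The maximal integral curve through `x` (junk value outside `curveSet`). -/
def curveFun (X : E d → E d) (U : Set (E d)) (x : E d) : ℝ → E d := fun t =>
  if h : ∃ p : Set ℝ × (ℝ → E d), IsIntegCurveOn X U x p.1 p.2 ∧ t ∈ p.1 then
    h.choose.2 t else x

theorem subset_curveSet (h : IsIntegCurveOn X U x s γ) : s ⊆ curveSet X U x :=
  fun _ ht => ⟨s, ⟨γ, h⟩, ht⟩

theorem curveFun_eq (hfl : HasFlow X U) (hx : x ∈ U) (h : IsIntegCurveOn X U x s γ)
    {t : ℝ} (ht : t ∈ s) : curveFun X U x t = γ t := by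
  have hex : ∃ p : Set ℝ × (ℝ → E d), IsIntegCurveOn X U x p.1 p.2 ∧ t ∈ p.1 :=
    ⟨(s, γ), h, ht⟩
  rw [curveFun]
  rw [dif_pos hex]
  exact hfl.2 x hx _ _ _ _ hex.choose_spec.1 h _ ⟨hex.choose_spec.2, ht⟩

theorem isOpen_curveSet : IsOpen (curveSet X U x) :=
  isOpen_sUnion fun _ ⟨_, h⟩ => h.isOpen

theorem ordConnected_curveSet : (curveSet X U x).OrdConnected := by
  constructor
  rintro a ⟨sa, ⟨γa, ha⟩, has⟩ b ⟨sb, ⟨γb, hb⟩, hbs⟩ c hc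
  have : c ∈ sa ∪ sb :=
    (ordConnected_union ha.ordConn hb.ordConn ha.zeroMem hb.zeroMem).out
      (Or.inl has) (Or.inr hbs) hc
  rcases this with h | h
  · exact ⟨sa, ⟨γa, ha⟩, h⟩
  · exact ⟨sb, ⟨γb, hb⟩, h⟩

theorem isIntegCurveOn_curveFun (hfl : HasFlow X U) (hx : x ∈ U) :
    IsIntegCurveOn X U x (curveSet X U x) (curveFun X U x) := by
  obtain ⟨ε, hε, γ₀, hγ₀⟩ := hfl.1 x hx
  have h0 : (0:ℝ) ∈ curveSet X U x := subset_curveSet hγ₀ (by simpa using hε)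
  refine ⟨isOpen_curveSet, ordConnected_curveSet, h0, ?_, ?_, ?_⟩
  · rw [curveFun_eq hfl hx hγ₀ (by simpa using hε)]
    exact hγ₀.init
  · rintro t ⟨sa, ⟨γa, ha⟩, hts⟩
    rw [curveFun_eq hfl hx ha hts]
    exact ha.mem t hts
  · rintro t ⟨sa, ⟨γa, ha⟩, hts⟩
    have heq : ∀ u ∈ sa, curveFun X U x u = γa u := fun u hu => curveFun_eq hfl hx ha hu
    have : HasDerivAt γa (X (γa t)) t := ha.deriv t hts
    rw [← heq t hts] at this
    exact this.congr_of_eventuallyEq <|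
      Filter.eventuallyEq_iff_exists_mem.2 ⟨sa, ha.isOpen.mem_nhds hts, fun u hu => heq u hu⟩

theorem mem_flowDomain_iff (hfl : HasFlow X U) {t : ℝ} :
    (t, x) ∈ FlowDomain X U ↔ x ∈ U ∧ t ∈ curveSet X U x := by
  constructor
  · rintro ⟨hx, sx, γx, hγ, ht⟩
    exact ⟨hx, subset_curveSet hγ ht⟩
  · rintro ⟨hx, ht⟩
    exact ⟨hx, _, _, isIntegCurveOn_curveFun hfl hx, ht⟩

theorem flowMap_eq {φ : ℝ × E d → E d} (hφ : IsFlowMap X U φ) (hfl : HasFlow X U)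
    (hx : x ∈ U) {t : ℝ} (ht : t ∈ curveSet X U x) :
    φ (t, x) = curveFun X U x t :=
  hφ x hx _ _ (isIntegCurveOn_curveFun hfl hx) t ht

theorem curve_integral_eq (h : IsIntegCurveOn X U x s γ) (hXc : ContinuousOn X U)
    {a b : ℝ} (hab : a ≤ b) (hsub : Icc a b ⊆ s) :
    γ b = γ a + ∫ u in a..b, X (γ u) := by
  have hsub' : uIcc a b ⊆ s := by rwa [uIcc_of_le hab]
  have hder : ∀ u ∈ uIcc a b, HasDerivAt γ (X (γ u)) u := fun u hu => h.deriv u (hsub' hu)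
  have hint : IntervalIntegrable (fun u => X (γ u)) MeasureTheory.volume a b := by
    apply ContinuousOn.intervalIntegrable
    exact hXc.comp ((curve_continuousOn h).mono hsub') (fun u hu => h.mem u (hsub' hu))
  rw [intervalIntegral.integral_eq_sub_of_hasDerivAt hder hint]
  abel

theorem curve_norm_sub_le (h : IsIntegCurveOn X U x s γ) (hXc : ContinuousOn X U)
    {a b M : ℝ} (hab : a ≤ b) (hsub : Icc a b ⊆ s)
    (hM : ∀ u ∈ Icc a b, ‖X (γ u)‖ ≤ M) :
    ‖γ b - γ a‖ ≤ M * (b - a) := by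
  have hi := curve_integral_eq h hXc hab hsub
  have hb : ‖∫ u in a..b, X (γ u)‖ ≤ M * |b - a| := by
    apply intervalIntegral.norm_integral_le_of_norm_le_const
    intro u hu
    rw [uIoc_of_le hab] at hu
    exact hM u (Ioc_subset_Icc_self hu)
  rw [abs_of_nonneg (by linarith)] at hb
  calc ‖γ b - γ a‖ = ‖∫ u in a..b, X (γ u)‖ := by rw [hi]; simp
  _ ≤ M * (b - a) := hb



set_option maxHeartbeats 1000000 in
theorem escape (hU : IsOpen U) (hXc : ContinuousOn X U) (hfl : HasFlow X U) (hx : x ∈ U)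
    {C : Set (E d)} (hC : IsCompact C) (hCU : C ⊆ U) {M : ℝ}
    (hM : ∀ y ∈ C, ‖X y‖ ≤ M) {b : ℝ} (hb : 0 ≤ b)
    (hin : ∀ t, 0 ≤ t → t ≤ b → t ∈ curveSet X U x → curveFun X U x t ∈ C) :
    Icc 0 b ⊆ curveSet X U x := by
  classical
  set s := curveSet X U x with hsdef
  set γ := curveFun X U x with hγdef
  have hγ : IsIntegCurveOn X U x s γ := isIntegCurveOn_curveFun hfl hx
  set A : Set ℝ := {t | t ∈ Icc 0 b ∧ Icc 0 t ⊆ s} with hA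
  have h0A : (0:ℝ) ∈ A := ⟨⟨le_rfl, hb⟩, by simpa using hγ.zeroMem⟩
  have hAne : A.Nonempty := ⟨0, h0A⟩
  have hbdd : BddAbove A := ⟨b, fun t ht => ht.1.2⟩
  set β := sSup A with hβdef
  have hβ0 : 0 ≤ β := le_csSup hbdd h0A
  have hβb : β ≤ b := csSup_le hAne fun t ht => ht.1.2
  have hIco : Ico 0 β ⊆ s := by
    rintro t ⟨ht0, htβ⟩
    obtain ⟨a, haA, hta⟩ := exists_lt_of_lt_csSup hAne htβ
    exact haA.2 ⟨ht0, hta.le⟩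
  have hβs : β ∈ s := by
    by_contra hβs
    have hβpos : 0 < β := lt_of_le_of_ne hβ0 (fun h => hβs (h ▸ hγ.zeroMem))
    have hnoge : ∀ u ∈ s, u < β := by
      intro u hu
      by_contra hge
      push_neg at hge
      exact hβs (hγ.ordConn.out hγ.zeroMem hu ⟨hβ0, hge⟩)
    have hM0 : 0 ≤ M := le_trans (norm_nonneg _) (hM _ (hin 0 le_rfl hb hγ.zeroMem))
    have hinC : ∀ t ∈ Ico 0 β, γ t ∈ C := fun t ht =>
      hin t ht.1 (le_trans ht.2.le hβb) (hIco ht)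
    have hlip : ∀ t₁ t₂, 0 ≤ t₁ → t₁ ≤ t₂ → t₂ < β → ‖γ t₂ - γ t₁‖ ≤ M * (t₂ - t₁) := by
      intro t₁ t₂ h0 h12 h2
      refine curve_norm_sub_le hγ hXc h12
        (fun u hu => hIco ⟨le_trans h0 hu.1, lt_of_le_of_lt hu.2 h2⟩) ?_
      intro u hu
      exact hM _ (hinC _ ⟨le_trans h0 hu.1, lt_of_le_of_lt hu.2 h2⟩)
    have hne2 : (𝓝[Ico 0 β] β).NeBot := by
      apply mem_closure_iff_nhdsWithin_neBot.mp
      rw [closure_Ico (ne_of_lt hβpos)]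
      exact ⟨hβ0, le_rfl⟩
    have hFC : Filter.map γ (𝓝[Ico 0 β] β) ≤ 𝓟 C := by
      rw [Filter.le_principal_iff, Filter.mem_map]
      exact Filter.mem_of_superset self_mem_nhdsWithin fun t ht => hinC t ht
    obtain ⟨y, hyC, hy⟩ := hC hFC
    have hkey : ∀ t ∈ Ico 0 β, dist (γ t) y ≤ M * (β - t) := by
      intro t ht
      refine le_of_forall_pos_le_add fun ε' hε' => ?_
      have hV : γ '' (Ioi t ∩ Ico 0 β) ∈ Filter.map γ (𝓝[Ico 0 β] β) := by
        rw [Filter.mem_map]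
        have h1 : Ioi t ∈ 𝓝[Ico 0 β] β := nhdsWithin_le_nhds (Ioi_mem_nhds ht.2)
        filter_upwards [h1, self_mem_nhdsWithin] with u hu1 hu2
        exact ⟨u, ⟨hu1, hu2⟩, rfl⟩
      obtain ⟨z, hz1, hz2⟩ := (clusterPt_iff_nonempty.mp hy) (Metric.ball_mem_nhds y hε') hV
      obtain ⟨t', ht', rfl⟩ := hz2
      have hd1 : dist (γ t) (γ t') ≤ M * (t' - t) := by
        rw [dist_eq_norm, norm_sub_rev]
        exact hlip t t' ht.1 (le_of_lt ht'.1) ht'.2.2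
      calc dist (γ t) y ≤ dist (γ t) (γ t') + dist (γ t') y := dist_triangle _ _ _
      _ ≤ M * (t' - t) + ε' := by
          have := mem_ball_iff_norm.mp hz1
          rw [Metric.mem_ball] at hz1
          linarith [hd1, hz1]
      _ ≤ M * (β - t) + ε' := by nlinarith [ht'.2.2, hM0]
    set g : ℝ → E d := fun u => if u < β then γ u else y with hgdef
    have hgIio : ∀ u, u < β → g u = γ u := fun u hu => if_pos hu
    have hgIci : ∀ u, β ≤ u → g u = y := fun u hu => if_neg (not_lt.mpr hu)
    have hgβ : g β = y := hgIci β le_rfl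
    have hgC : ∀ u, 0 ≤ u → g u ∈ C := by
      intro u hu
      rcases lt_or_ge u β with h | h
      · rw [hgIio u h]; exact hinC u ⟨hu, h⟩
      · rw [hgIci u h]; exact hyC
    have hgU : ∀ u, 0 ≤ u → g u ∈ U := fun u hu => hCU (hgC u hu)
    have hgdist : ∀ u, 0 ≤ u → dist (g u) y ≤ M * |β - u| := by
      intro u hu
      rcases lt_or_ge u β with h | h
      · rw [hgIio u h, abs_of_nonneg (by linarith)]
        exact hkey u ⟨hu, h⟩
      · rw [hgIci u h, dist_self]
        positivity
    have hgcont : ∀ u, 0 < u → ContinuousAt g u := by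
      intro u hu
      rcases lt_trichotomy u β with h | h | h
      · have hγc : ContinuousAt γ u := (hγ.deriv u (hIco ⟨hu.le, h⟩)).continuousAt
        apply hγc.congr
        filter_upwards [Iio_mem_nhds h] with v hv using (hgIio v hv).symm
      · have hsq : Tendsto (fun v => dist (g v) y) (𝓝 u) (𝓝 0) := by
          have hbnd : ∀ᶠ v in 𝓝 u, dist (g v) y ≤ M * |β - v| := by
            filter_upwards [Ioi_mem_nhds hu] with v hv using hgdist v (le_of_lt hv)
          have hlim : Tendsto (fun v => M * |β - v|) (𝓝 u) (𝓝 0) := by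
            have hcm : Continuous fun v : ℝ => M * |β - v| := by continuity
            have h2 := hcm.tendsto u
            rw [h] at h2 ⊢
            simpa using h2
          exact squeeze_zero' (Eventually.of_forall fun v => dist_nonneg) hbnd hlim
        have hten : Tendsto g (𝓝 u) (𝓝 y) := tendsto_iff_dist_tendsto_zero.mpr hsq
        rw [ContinuousAt]
        rw [show g u = y from by rw [h]; exact hgβ]
        exact hten
      · apply continuousAt_const.congr
        filter_upwards [Ioi_mem_nhds h] with v hv using (hgIci v (le_of_lt hv)).symm
    have hh : ∀ u, 0 < u → ContinuousAt (fun v => X (g v)) u := by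
      intro u hu
      exact (hXc.continuousAt (hU.mem_nhds (hgU u hu.le))).comp (hgcont u hu)
    obtain ⟨ε, hε, σ, hσ⟩ := hfl.1 y (hCU hyC)
    set δ := min (ε/2) (β/2) with hδdef
    have hδpos : 0 < δ := lt_min (by linarith) (by linarith)
    have hδε : δ < ε := lt_of_le_of_lt (min_le_left _ _) (by linarith)
    have hδβ2 : δ ≤ β/2 := min_le_right _ _
    set t₀ := β - δ with ht₀def
    have ht₀pos : 0 < t₀ := by
      rw [ht₀def]; linarith
    have ht₀β : t₀ < β := by rw [ht₀def]; linarith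
    set F : ℝ → E d := fun v => X (g v) with hFdef
    have hFint : IntervalIntegrable F MeasureTheory.volume t₀ β := by
      apply ContinuousOn.intervalIntegrable
      intro v hv
      rw [uIcc_of_le ht₀β.le] at hv
      exact ((hh v (lt_of_lt_of_le ht₀pos hv.1))).continuousWithinAt
    have hFmeas : StronglyMeasurableAtFilter F (𝓝 β) MeasureTheory.volume := by
      have hco : ContinuousOn F (Ioi (0:ℝ)) :=
        continuousOn_of_forall_continuousAt fun v hv => hh v hv
      exact hco.stronglyMeasurableAtFilter isOpen_Ioi β hβpos
    have hGd : HasDerivAt (fun u => ∫ v in t₀..u, F v) (F β) β :=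
      intervalIntegral.integral_hasDerivAt_right hFint hFmeas (hh β hβpos)
    set G : ℝ → E d := fun u => γ t₀ + ∫ v in t₀..u, F v with hGdef
    have hGderiv : HasDerivAt G (F β) β := HasDerivAt.const_add (γ t₀) hGd
    have hGeq : ∀ u' ∈ Ico t₀ β, γ u' = G u' := by
      intro u' hu'
      have h1 : γ u' = γ t₀ + ∫ v in t₀..u', X (γ v) :=
        curve_integral_eq hγ hXc hu'.1
          (fun v hv => hIco ⟨le_trans ht₀pos.le hv.1, lt_of_le_of_lt hv.2 hu'.2⟩)
      rw [h1, hGdef]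
      congr 1
      apply intervalIntegral.integral_congr
      intro v hv
      rw [uIcc_of_le hu'.1] at hv
      rw [hFdef]
      simp only
      rw [hgIio v (lt_of_le_of_lt hv.2 hu'.2)]
    have hGβ : g β = G β := by
      have hne3 : (𝓝[Ico t₀ β] β).NeBot := by
        apply mem_closure_iff_nhdsWithin_neBot.mp
        rw [closure_Ico (ne_of_lt ht₀β)]
        exact ⟨ht₀β.le, le_rfl⟩
      have l1 : Tendsto γ (𝓝[Ico t₀ β] β) (𝓝 (g β)) := by
        have h2 : Tendsto g (𝓝[Ico t₀ β] β) (𝓝 (g β)) :=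
          ((hgcont β hβpos).continuousWithinAt).tendsto
        apply h2.congr'
        filter_upwards [self_mem_nhdsWithin] with v hv using hgIio v hv.2
      have l3 : Tendsto γ (𝓝[Ico t₀ β] β) (𝓝 (G β)) := by
        have l2 : Tendsto G (𝓝[Ico t₀ β] β) (𝓝 (G β)) :=
          (hGderiv.continuousAt.continuousWithinAt).tendsto
        apply l2.congr'
        filter_upwards [self_mem_nhdsWithin] with v hv using (hGeq v hv).symm
      exact tendsto_nhds_unique l1 l3
    have hgG : g =ᶠ[𝓝[Iic β] β] G := by
      have h1 : Ioi t₀ ∈ 𝓝[Iic β] β := nhdsWithin_le_nhds (Ioi_mem_nhds ht₀β)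
      filter_upwards [h1, self_mem_nhdsWithin] with v hv1 hv2
      rcases lt_or_eq_of_le (mem_Iic.mp hv2) with h | h
      · rw [hgIio v h]; exact hGeq v ⟨le_of_lt hv1, h⟩
      · subst h; exact hGβ
    have hleft : HasDerivWithinAt g (F β) (Iic β) β :=
      (hGderiv.hasDerivWithinAt).congr_of_eventuallyEq hgG hGβ
    set η : ℝ → E d := fun u => if u < β then γ u else σ (u - β) with hηdef
    have hηIio : ∀ u, u < β → η u = γ u := fun u hu => if_pos hu
    have hηIci : ∀ u, β ≤ u → η u = σ (u - β) := fun u hu => if_neg (not_lt.mpr hu)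
    have hηβ : η β = y := by rw [hηIci β le_rfl, sub_self, hσ.init]
    have hηg : ∀ u ∈ Iic β, η u = g u := by
      intro u hu
      rcases lt_or_eq_of_le (mem_Iic.mp hu) with h | h
      · rw [hηIio u h, hgIio u h]
      · subst h; rw [hηβ, hgβ]
    have hρd : ∀ u, u - β ∈ Ioo (-ε) ε → HasDerivAt (fun v => σ (v - β)) (X (σ (u - β))) u := by
      intro u hu
      have h1 : HasDerivAt (fun v : ℝ => v - β) 1 u := (hasDerivAt_id u).sub_const β
      have h2 := (hσ.deriv _ hu).scomp u h1
      rw [one_smul] at h2; exact h2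
    have h0mem : (β : ℝ) - β ∈ Ioo (-ε) ε := by
      rw [sub_self]
      constructor <;> [linarith; linarith]
    have hFβ : X (σ (β - β)) = F β := by
      rw [sub_self, hσ.init, hFdef]
      simp only
      rw [hgβ]
    have hright : HasDerivWithinAt η (F β) (Ici β) β := by
      have hd := (hρd β h0mem).hasDerivWithinAt (s := Ici β)
      rw [hFβ] at hd
      exact hd.congr (fun v hv => hηIci v hv) (hηIci β le_rfl)
    have hηβd : HasDerivAt η (F β) β := by
      have hl : HasDerivWithinAt η (F β) (Iic β) β :=
        hleft.congr (fun v hv => hηg v hv) (hηg β self_mem_Iic)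
      have hu := hl.union hright
      rwa [Iic_union_Ici, hasDerivWithinAt_univ] at hu
    set s' := s ∪ Ioo (β - δ) (β + ε) with hs'def
    have hsub2 : Ioo (β - δ) β ⊆ s := by
      intro v hv
      exact hIco ⟨by nlinarith [hv.1], hv.2⟩
    have hcurve : IsIntegCurveOn X U x s' η := by
      refine ⟨hγ.isOpen.union isOpen_Ioo, ?_, Or.inl hγ.zeroMem, ?_, ?_, ?_⟩
      · refine ordConnected_union hγ.ordConn Set.ordConnected_Ioo
          (p := β - δ/2) ?_ ?_
        · exact hsub2 ⟨by linarith, by linarith⟩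
        · exact ⟨by linarith, by linarith⟩
      · rw [hηIio 0 hβpos, hγdef]
        exact hγ.init
      · rintro u hu
        rcases lt_or_ge u β with h | h
        · have hus : u ∈ s := by
            rcases hu with h1 | h1
            · exact h1
            · exact hsub2 ⟨h1.1, h⟩
          rw [hηIio u h]
          exact hγ.mem u hus
        · have hu2 : u ∈ Ioo (β - δ) (β + ε) := by
            rcases hu with h1 | h1
            · exact absurd (hnoge u h1) (not_lt.mpr h)
            · exact h1
          rw [hηIci u h]
          exact hσ.mem _ ⟨by linarith [hu2.1], by linarith [hu2.2]⟩
      · rintro u hu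
        rcases lt_trichotomy u β with h | h | h
        · have hus : u ∈ s := by
            rcases hu with h1 | h1
            · exact h1
            · exact hsub2 ⟨h1.1, h⟩
          have hd : HasDerivAt γ (X (γ u)) u := hγ.deriv u hus
          rw [hηIio u h]
          apply hd.congr_of_eventuallyEq
          filter_upwards [Iio_mem_nhds h] with v hv using hηIio v hv
        · rw [h]
          rw [show X (η β) = F β from by rw [hηβ, hFdef]; simp only; rw [hgβ]]
          exact hηβd
        · have hu2 : u ∈ Ioo (β - δ) (β + ε) := by
            rcases hu with h1 | h1
            · exact absurd (hnoge u h1) (not_lt.mpr (le_of_lt h))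
            · exact h1
          have hmem : u - β ∈ Ioo (-ε) ε := ⟨by linarith [hu2.1], by linarith [hu2.2]⟩
          have hd := hρd u hmem
          rw [hηIci u (le_of_lt h)]
          apply hd.congr_of_eventuallyEq
          filter_upwards [Ioi_mem_nhds h] with v hv using hηIci v (le_of_lt hv)
    exact hβs (subset_curveSet hcurve (Or.inr ⟨by linarith, by linarith⟩))
  have hβeq : β = b := by
    by_contra hne
    have hβlt : β < b := lt_of_le_of_ne hβb hne
    obtain ⟨δ, hδ, hball⟩ := Metric.isOpen_iff.1 hγ.isOpen β hβs
    set c := min b (β + δ/2) with hcdef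
    have hcs : c ∈ s := by
      apply hball
      rw [Metric.mem_ball, Real.dist_eq, abs_lt]
      constructor
      · have : β ≤ c := le_min hβlt.le (by linarith)
        linarith
      · have : c ≤ β + δ/2 := min_le_right _ _
        linarith
    have hcA : c ∈ A := by
      refine ⟨⟨le_trans hβ0 (le_min hβlt.le (by linarith)), min_le_left _ _⟩, ?_⟩
      exact hγ.ordConn.out hγ.zeroMem hcs
    have h1 : c ≤ β := le_csSup hbdd hcA
    have h2 : β < c := lt_min hβlt (by linarith)
    linarith
  rw [← hβeq]
  exact hγ.ordConn.out hγ.zeroMem hβs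

theorem isCompact_lipschitzSet {d : ℕ} {a b : ℝ} {C : Set (E d)} (hC : IsCompact C)
    (L : NNReal) :
    IsCompact {f : C(Icc a b, E d) | LipschitzWith L f ∧ ∀ z, f z ∈ C} := by
  set S := {f : C(Icc a b, E d) | LipschitzWith L f ∧ ∀ z, f z ∈ C} with hS
  apply ArzelaAscoli.isCompact_of_equicontinuous
  · have himg : ContinuousMap.toFun '' S =
        {g : Icc a b → E d | LipschitzWith L g ∧ ∀ z, g z ∈ C} := by
      ext g
      constructor
      · rintro ⟨f, hf, rfl⟩
        exact hf
      · rintro ⟨h1, h2⟩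
        exact ⟨⟨g, h1.continuous⟩, ⟨h1, h2⟩, rfl⟩
    rw [himg]
    have hsub : {g : Icc a b → E d | LipschitzWith L g ∧ ∀ z, g z ∈ C} ⊆
        univ.pi fun _ => C := fun g hg z _ => hg.2 z
    have hcl : IsClosed {g : Icc a b → E d | LipschitzWith L g ∧ ∀ z, g z ∈ C} := by
      have heq : {g : Icc a b → E d | LipschitzWith L g ∧ ∀ z, g z ∈ C}
          = {g : Icc a b → E d | LipschitzWith L g} ∩ {g : Icc a b → E d | ∀ z, g z ∈ C} := rfl
      rw [heq]
      apply IsClosed.inter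
      · have h1 : {g : Icc a b → E d | LipschitzWith L g} =
            ⋂ (p : Icc a b) (q : Icc a b),
              {g : Icc a b → E d | dist (g p) (g q) ≤ L * dist p q} := by
          ext g
          constructor
          · intro h
            exact mem_iInter.2 fun p => mem_iInter.2 fun q =>
              lipschitzWith_iff_dist_le_mul.mp h p q
          · intro h
            exact lipschitzWith_iff_dist_le_mul.mpr fun p q =>
              mem_iInter.mp (mem_iInter.mp h p) q
        rw [h1]
        exact isClosed_iInter fun p => isClosed_iInter fun q =>
          isClosed_le (Continuous.dist (continuous_apply p) (continuous_apply q))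
            continuous_const
      · have h2 : {g : Icc a b → E d | ∀ z, g z ∈ C} = univ.pi fun _ => C := by
          ext g; simp
        rw [h2]
        exact isClosed_set_pi fun z _ => hC.isClosed
    exact (isCompact_univ_pi fun _ => hC).of_isClosed_subset hcl hsub
  · apply Metric.equicontinuous_of_continuity_modulus (fun r => (L : ℝ) * r)
    · have : Continuous fun r : ℝ => (L : ℝ) * r := by continuity
      have h2 := this.tendsto 0
      simpa using h2
    · rintro p q ⟨f, hf⟩
      exact (lipschitzWith_iff_dist_le_mul.mp hf.1) p q

theorem exists_unif_subseq {d : ℕ} {a b : ℝ} {C : Set (E d)} (hC : IsCompact C)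
    (L : NNReal) (f : ℕ → C(Icc a b, E d))
    (hf : ∀ n, LipschitzWith L (f n) ∧ ∀ z, f n z ∈ C) :
    ∃ g : C(Icc a b, E d), (LipschitzWith L g ∧ ∀ z, g z ∈ C) ∧
      ∃ ψ : ℕ → ℕ, StrictMono ψ ∧
        TendstoUniformly (fun m z => f (ψ m) z) g atTop := by
  obtain ⟨g, hg, ψ, hψ, hconv⟩ := (isCompact_lipschitzSet hC L).tendsto_subseq hf
  refine ⟨g, hg, ψ, hψ, ?_⟩
  exact ContinuousMap.tendsto_iff_tendstoUniformly.mp hconv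


set_option maxHeartbeats 4000000 in
theorem core {U : Set (E d)} (hU : IsOpen U)
    {Y : ℕ → E d → E d} {X : E d → E d}
    (hYc : ∀ n, ContinuousOn (Y n) U) (hXc : ContinuousOn X U)
    (hYfl : ∀ n, HasFlow (Y n) U) (hXfl : HasFlow X U)
    (hconv : ∀ C : Set (E d), C ⊆ U → IsCompact C →
      TendstoUniformlyOn (fun n y => Y n y) X atTop C)
    (hx : x ∈ U) {xs : ℕ → E d} (hxs : ∀ n, xs n ∈ U)
    (hxsx : Tendsto xs atTop (𝓝 x))
    {b : ℝ} (hb : 0 ≤ b) (hdom : Icc 0 b ⊆ curveSet X U x)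
    {ε : ℝ} (hε : 0 < ε) :
    ∀ᶠ n in atTop, Icc 0 b ⊆ curveSet (Y n) U (xs n) ∧
      ∀ t ∈ Icc 0 b, dist (curveFun (Y n) U (xs n) t) (curveFun X U x t) ≤ ε := by
  classical
  set γ := curveFun X U x with hγdef
  have hγ : IsIntegCurveOn X U x (curveSet X U x) γ := isIntegCurveOn_curveFun hXfl hx
  have hγcont : ∀ t ∈ Icc (0:ℝ) b, ContinuousAt γ t := fun t ht =>
    (hγ.deriv t (hdom ht)).continuousAt
  set Γ := γ '' Icc 0 b with hΓdef
  have hΓc : IsCompact Γ := isCompact_Icc.image_of_continuousOn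
    ((curve_continuousOn hγ).mono hdom)
  have hΓU : Γ ⊆ U := by
    rintro y ⟨t, ht, rfl⟩
    exact hγ.mem t (hdom ht)
  obtain ⟨r, hr0, hCU⟩ := hΓc.exists_cthickening_subset_open hU hΓU
  set C := Metric.cthickening r Γ with hCdef
  have hCc : IsCompact C := hΓc.cthickening
  have hΓC : Γ ⊆ C := Metric.self_subset_cthickening Γ
  obtain ⟨M, hM⟩ := hCc.exists_bound_of_continuousOn (hXc.mono hCU)
  have hγ0Γ : γ 0 ∈ Γ := mem_image_of_mem γ ⟨le_rfl, hb⟩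
  have hM0 : 0 ≤ M := le_trans (norm_nonneg _) (hM _ (hΓC hγ0Γ))
  set ε' := min ε r with hε'def
  have hε'0 : 0 < ε' := lt_min hε hr0
  have hε'ε : ε' ≤ ε := min_le_left _ _
  have hε'r : ε' ≤ r := min_le_right _ _
  by_contra hcon
  rw [Filter.not_eventually] at hcon
  have hev : ∀ᶠ n in atTop, dist (xs n) x < ε'/2 ∧ ∀ y ∈ C, dist (X y) (Y n y) < 1 := by
    have h1 : ∀ᶠ n in atTop, dist (xs n) x < ε'/2 :=
      (Metric.tendsto_nhds.mp hxsx) _ (by positivity)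
    have h2 := (Metric.tendstoUniformlyOn_iff.mp (hconv C hCU hCc)) 1 one_pos
    exact h1.and h2
  obtain ⟨ψ, hψm, hψ⟩ := Filter.extraction_of_frequently_atTop (hcon.and_eventually hev)
  have hfail : ∀ m, ¬(Icc 0 b ⊆ curveSet (Y (ψ m)) U (xs (ψ m)) ∧
      ∀ t ∈ Icc 0 b, dist (curveFun (Y (ψ m)) U (xs (ψ m)) t) (γ t) ≤ ε) := fun m => (hψ m).1
  have hnear : ∀ m, dist (xs (ψ m)) x < ε'/2 := fun m => (hψ m).2.1
  have hYb : ∀ m, ∀ y ∈ C, dist (X y) (Y (ψ m) y) < 1 := fun m => (hψ m).2.2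
  have hYbd : ∀ m, ∀ y ∈ C, ‖Y (ψ m) y‖ ≤ M + 1 := by
    intro m y hy
    have h1 : ‖Y (ψ m) y‖ ≤ ‖X y‖ + dist (X y) (Y (ψ m) y) := by
      rw [dist_eq_norm]
      have := norm_sub_norm_le (X y) (Y (ψ m) y)
      have h2 := norm_sub_rev (X y) (Y (ψ m) y)
      calc ‖Y (ψ m) y‖ ≤ ‖X y‖ + ‖Y (ψ m) y - X y‖ := by
            have := norm_add_le (X y) (Y (ψ m) y - X y)
            simpa using this
      _ = ‖X y‖ + ‖X y - Y (ψ m) y‖ := by rw [norm_sub_rev]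
    exact le_trans h1 (add_le_add (hM y hy) (hYb m y hy).le)
  set Zc : ℕ → Set ℝ := fun m => curveSet (Y (ψ m)) U (xs (ψ m)) with hZcdef
  set Zf : ℕ → ℝ → E d := fun m => curveFun (Y (ψ m)) U (xs (ψ m)) with hZfdef
  have hZm : ∀ m, IsIntegCurveOn (Y (ψ m)) U (xs (ψ m)) (Zc m) (Zf m) := fun m =>
    isIntegCurveOn_curveFun (hYfl (ψ m)) (hxs (ψ m))
  have hZcont : ∀ m, ∀ t ∈ Zc m, ContinuousAt (Zf m) t := fun m t ht =>
    ((hZm m).deriv t ht).continuousAt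
  set P : ℕ → Set ℝ := fun m => {t | t ∈ Icc 0 b ∧ Icc 0 t ⊆ Zc m ∧
    ∀ u ∈ Icc 0 t, dist (Zf m u) (γ u) ≤ ε'} with hPdef
  have h0P : ∀ m, 0 ∈ P m := by
    intro m
    refine ⟨⟨le_rfl, hb⟩, ?_, ?_⟩
    · rw [Icc_self, singleton_subset_iff]
      exact (hZm m).zeroMem
    · intro u hu
      have hu0 : u = 0 := le_antisymm hu.2 hu.1
      subst hu0
      rw [(hZm m).init, hγ.init]
      exact (hnear m).le.trans (by linarith)
  have hbddP : ∀ m, BddAbove (P m) := fun m => ⟨b, fun t ht => ht.1.2⟩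
  set θ : ℕ → ℝ := fun m => sSup (P m) with hθdef
  have hθmem : ∀ m, θ m ∈ Icc (0:ℝ) b := fun m =>
    ⟨le_csSup (hbddP m) (h0P m), csSup_le ⟨0, h0P m⟩ fun t ht => ht.1.2⟩
  have hθlt : ∀ m, ∀ t, t ∈ Ico 0 (θ m) → Icc 0 t ⊆ Zc m ∧ dist (Zf m t) (γ t) ≤ ε' := by
    intro m t ht
    obtain ⟨p, hpP, htp⟩ := exists_lt_of_lt_csSup ⟨0, h0P m⟩ ht.2
    exact ⟨subset_trans (Icc_subset_Icc_right htp.le) hpP.2.1, hpP.2.2 t ⟨ht.1, htp.le⟩⟩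
  have hCin : ∀ m, ∀ t, t ∈ Ico 0 (θ m) → Zf m t ∈ C := by
    intro m t ht
    exact Metric.mem_cthickening_of_dist_le _ _ _ _
      (mem_image_of_mem γ ⟨ht.1, le_trans ht.2.le (hθmem m).2⟩)
      (le_trans (hθlt m t ht).2 hε'r)
  have hdθ : ∀ m, θ m ∈ Zc m → dist (Zf m (θ m)) (γ (θ m)) ≤ ε' := by
    intro m hmem
    rcases eq_or_lt_of_le (hθmem m).1 with h0 | h0
    · rw [← h0, (hZm m).init, hγ.init]
      exact (hnear m).le.trans (by linarith)
    · have hne : (𝓝[Ico 0 (θ m)] (θ m)).NeBot := by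
        apply mem_closure_iff_nhdsWithin_neBot.mp
        rw [closure_Ico (ne_of_lt h0)]
        exact ⟨(hθmem m).1, le_rfl⟩
      have hten : Tendsto (fun v => dist (Zf m v) (γ v)) (𝓝[Ico 0 (θ m)] (θ m))
          (𝓝 (dist (Zf m (θ m)) (γ (θ m)))) := by
        apply Filter.Tendsto.dist
        · exact ((hZcont m _ hmem).continuousWithinAt).tendsto
        · exact ((hγcont (θ m) (hθmem m)).continuousWithinAt).tendsto
      refine le_of_tendsto hten ?_
      filter_upwards [self_mem_nhdsWithin] with v hv using (hθlt m v hv).2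
  have hsub : ∀ m, Icc 0 (θ m) ⊆ Zc m := by
    intro m
    apply escape hU (hYc (ψ m)) (hYfl (ψ m)) (hxs (ψ m)) hCc hCU (hYbd m) (hθmem m).1
    intro t ht0 htθ htZ
    rcases lt_or_eq_of_le htθ with h | h
    · exact hCin m t ⟨ht0, h⟩
    · rw [h] at htZ ⊢
      exact Metric.mem_cthickening_of_dist_le _ _ _ _
        (mem_image_of_mem γ (hθmem m)) (le_trans (hdθ m htZ) hε'r)
  have hθZ : ∀ m, θ m ∈ Zc m := fun m => hsub m (right_mem_Icc.mpr (hθmem m).1)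
  have hdθ' : ∀ m, dist (Zf m (θ m)) (γ (θ m)) ≤ ε' := fun m => hdθ m (hθZ m)
  have hCin' : ∀ m, ∀ u, u ∈ Icc 0 (θ m) → Zf m u ∈ C := by
    intro m u hu
    rcases lt_or_eq_of_le hu.2 with h | h
    · exact hCin m u ⟨hu.1, h⟩
    · rw [h]
      exact Metric.mem_cthickening_of_dist_le _ _ _ _
        (mem_image_of_mem γ (hθmem m)) (le_trans (hdθ' m) hε'r)
  have hθP : ∀ m, θ m ∈ P m := by
    intro m
    refine ⟨hθmem m, hsub m, ?_⟩
    intro u hu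
    rcases lt_or_eq_of_le hu.2 with h | h
    · exact (hθlt m u ⟨hu.1, h⟩).2
    · rw [h]; exact hdθ' m
  have hθltb : ∀ m, θ m < b := by
    intro m
    rcases lt_or_eq_of_le (hθmem m).2 with h | h
    · exact h
    · exfalso
      apply hfail m
      constructor
      · rw [← h]; exact hsub m
      · intro t ht
        rw [← h] at ht
        exact le_trans ((hθP m).2.2 t ht) hε'ε
  have hexact : ∀ m, dist (Zf m (θ m)) (γ (θ m)) = ε' := by
    intro m
    refine le_antisymm (hdθ' m) ?_
    by_contra hlt2
    push_neg at hlt2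
    have hcont2 : ContinuousAt (fun v => dist (Zf m v) (γ v)) (θ m) :=
      (hZcont m _ (hθZ m)).dist (hγcont (θ m) (hθmem m))
    have hev2 : ∀ᶠ v in 𝓝 (θ m), dist (Zf m v) (γ v) < ε' :=
      hcont2.eventually_lt continuousAt_const hlt2
    have hevZ : ∀ᶠ v in 𝓝 (θ m), v ∈ Zc m :=
      eventually_of_mem ((hZm m).isOpen.mem_nhds (hθZ m)) fun y hy => hy
    have hboth := hev2.and hevZ
    rw [Metric.eventually_nhds_iff] at hboth
    obtain ⟨δ2, hδ2, hball2⟩ := hboth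
    set c := min (θ m + δ2/2) b with hcdef
    have hc1 : θ m < c := lt_min (by linarith) (hθltb m)
    have hcd : ∀ u, θ m < u → u ≤ c → dist u (θ m) < δ2 := by
      intro u h1 h2
      rw [Real.dist_eq, abs_lt]
      have h3 : u ≤ θ m + δ2/2 := le_trans h2 (min_le_left _ _)
      constructor <;> linarith
    have hc2 : c ∈ P m := by
      refine ⟨⟨le_trans (hθmem m).1 hc1.le, min_le_right _ _⟩, ?_, ?_⟩
      · intro u hu
        rcases le_or_gt u (θ m) with h3 | h3
        · exact hsub m ⟨hu.1, h3⟩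
        · exact (hball2 (hcd u h3 hu.2)).2
      · intro u hu
        rcases le_or_gt u (θ m) with h3 | h3
        · exact (hθP m).2.2 u ⟨hu.1, h3⟩
        · exact ((hball2 (hcd u h3 hu.2)).1).le
    have := le_csSup (hbddP m) hc2
    linarith
  have hlipZ : ∀ m, ∀ t₁ t₂, 0 ≤ t₁ → t₁ ≤ t₂ → t₂ ≤ θ m →
      dist (Zf m t₂) (Zf m t₁) ≤ (M+1) * (t₂ - t₁) := by
    intro m t₁ t₂ h1 h12 h2
    rw [dist_eq_norm]
    apply curve_norm_sub_le (hZm m) (hYc (ψ m)) h12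
      (fun u hu => hsub m ⟨le_trans h1 hu.1, le_trans hu.2 h2⟩)
    intro u hu
    exact hYbd m _ (hCin' m u ⟨le_trans h1 hu.1, le_trans hu.2 h2⟩)
  have hlipγ : ∀ t₁ t₂, 0 ≤ t₁ → t₁ ≤ t₂ → t₂ ≤ b →
      dist (γ t₂) (γ t₁) ≤ M * (t₂ - t₁) := by
    intro t₁ t₂ h1 h12 h2
    rw [dist_eq_norm]
    apply curve_norm_sub_le hγ hXc h12
      (fun u hu => hdom ⟨le_trans h1 hu.1, le_trans hu.2 h2⟩)
    intro u hu
    exact hM _ (hΓC (mem_image_of_mem γ ⟨le_trans h1 hu.1, le_trans hu.2 h2⟩))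
  set θ₀ := ε' / (2 * (2*M + 1)) with hθ₀def
  have hθ₀pos : 0 < θ₀ := div_pos hε'0 (by linarith)
  have hθlow : ∀ m, θ₀ ≤ θ m := by
    intro m
    have h1 : dist (Zf m (θ m)) (Zf m 0) ≤ (M+1) * (θ m) := by
      have := hlipZ m 0 (θ m) le_rfl (hθmem m).1 le_rfl
      simpa using this
    have h2 : dist (γ (θ m)) (γ 0) ≤ M * θ m := by
      have := hlipγ 0 (θ m) le_rfl (hθmem m).1 (hθmem m).2
      simpa using this
    have h3 : dist (Zf m 0) (γ 0) < ε'/2 := by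
      rw [(hZm m).init, hγ.init]; exact hnear m
    have h5 : dist (Zf m (θ m)) (γ (θ m)) ≤ dist (Zf m (θ m)) (Zf m 0) +
        dist (Zf m 0) (γ 0) + dist (γ 0) (γ (θ m)) := dist_triangle4 _ _ _ _
    rw [hexact m, dist_comm (γ 0)] at h5
    rw [hθ₀def, div_le_iff₀ (by linarith)]
    nlinarith [h1, h2, h3, h5]
  -- Arzela-Ascoli setup
  have hL0 : (0:ℝ) ≤ M + 1 := by linarith
  set Lnn : NNReal := Real.toNNReal (M+1) with hLnndef
  have hgmcont : ∀ m, Continuous fun z : Icc (0:ℝ) b => Zf m (min (z:ℝ) (θ m)) := by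
    intro m
    rw [continuous_iff_continuousAt]
    intro z
    have hmem : min (z:ℝ) (θ m) ∈ Zc m :=
      hsub m ⟨le_min z.2.1 (hθmem m).1, min_le_right _ _⟩
    have h2 : ContinuousAt (fun z : Icc (0:ℝ) b => min (z:ℝ) (θ m)) z :=
      (continuous_subtype_val.min continuous_const).continuousAt
    have h3 : ContinuousAt (Zf m ∘ fun z : Icc (0:ℝ) b => min (z:ℝ) (θ m)) z :=
      ContinuousAt.comp (hZcont m _ hmem) h2
    exact h3
  set gm : ℕ → C(Icc (0:ℝ) b, E d) :=
    fun m => ⟨fun z => Zf m (min (z:ℝ) (θ m)), hgmcont m⟩ with hgmdef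
  have hgmC : ∀ m, ∀ z, gm m z ∈ C := by
    intro m z
    exact hCin' m _ ⟨le_min z.2.1 (hθmem m).1, min_le_right _ _⟩
  have hgmLip : ∀ m, LipschitzWith Lnn (gm m) := by
    intro m
    rw [lipschitzWith_iff_dist_le_mul]
    intro z1 z2
    have hcoe : (Lnn : ℝ) = M + 1 := Real.coe_toNNReal _ hL0
    rw [hcoe, Subtype.dist_eq, Real.dist_eq]
    have key : ∀ a1 a2 : Icc (0:ℝ) b, min (a1:ℝ) (θ m) ≤ min (a2:ℝ) (θ m) →
        dist (gm m a1) (gm m a2) ≤ (M+1) * |(a1:ℝ) - (a2:ℝ)| := by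
      intro a1 a2 hle
      have h1 : dist (gm m a1) (gm m a2) ≤
          (M+1) * (min (a2:ℝ) (θ m) - min (a1:ℝ) (θ m)) := by
        rw [dist_comm]
        exact hlipZ m _ _ (le_min a1.2.1 (hθmem m).1) hle (min_le_right _ _)
      apply le_trans h1
      apply mul_le_mul_of_nonneg_left ?_ hL0
      calc min (a2:ℝ) (θ m) - min (a1:ℝ) (θ m)
          ≤ |min (a2:ℝ) (θ m) - min (a1:ℝ) (θ m)| := le_abs_self _
      _ ≤ max |(a2:ℝ) - (a1:ℝ)| |θ m - θ m| := abs_min_sub_min_le_max _ _ _ _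
      _ = |(a2:ℝ) - (a1:ℝ)| := by rw [sub_self, abs_zero]; exact max_eq_left (abs_nonneg _)
      _ = |(a1:ℝ) - (a2:ℝ)| := abs_sub_comm _ _
    rcases le_total (min (z1:ℝ) (θ m)) (min (z2:ℝ) (θ m)) with h | h
    · exact key z1 z2 h
    · rw [dist_comm, abs_sub_comm]
      exact key z2 z1 h
  obtain ⟨g, ⟨hgLip, hgC⟩, ψa, hψa, hgconv⟩ :=
    exists_unif_subseq hCc Lnn gm (fun m => ⟨hgmLip m, hgmC m⟩)
  obtain ⟨θL, hθLmem, ψb, hψb, hθconv⟩ :=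
    (isCompact_Icc (a := (0:ℝ)) (b := b)).tendsto_subseq
      (x := fun m => θ (ψa m)) (fun m => hθmem (ψa m))
  set idx : ℕ → ℕ := fun m => ψa (ψb m) with hidxdef
  have hgconv2 : TendstoUniformly (fun m z => gm (idx m) z) g atTop := fun u hu =>
    hψb.tendsto_atTop.eventually (hgconv u hu)
  have hθconv2 : Tendsto (fun m => θ (idx m)) atTop (𝓝 θL) := hθconv
  have hθLpos : 0 < θL :=
    lt_of_lt_of_le hθ₀pos (ge_of_tendsto' hθconv2 fun m => hθlow (idx m))
  have hθLb : θL ≤ b := hθLmem.2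
  have hidxmono : StrictMono fun m => ψ (idx m) := hψm.comp (hψa.comp hψb)
  have hidxtend : Tendsto (fun m => ψ (idx m)) atTop atTop := hidxmono.tendsto_atTop
  set G : ℝ → E d := fun u => g (projIcc 0 b hb u) with hGdef
  have hGcont : Continuous G := g.continuous.comp continuous_projIcc
  have hGC : ∀ u, G u ∈ C := fun u => hgC _
  have hGeq : ∀ u (hu : u ∈ Icc (0:ℝ) b), G u = g ⟨u, hu⟩ := by
    intro u hu
    rw [hGdef]
    simp only
    rw [projIcc_of_mem hb hu]
  have hid : ∀ t ∈ Icc (0:ℝ) θL, G t = x + ∫ u in (0:ℝ)..t, X (G u) := by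
    intro t ht
    have htb : t ∈ Icc (0:ℝ) b := ⟨ht.1, le_trans ht.2 hθLb⟩
    set τ : ℕ → ℝ := fun m => min t (θ (idx m)) with hτdef
    have hτmem : ∀ m, τ m ∈ Icc (0:ℝ) (θ (idx m)) := fun m =>
      ⟨le_min ht.1 (hθmem _).1, min_le_right _ _⟩
    have hτt : Tendsto τ atTop (𝓝 t) := by
      have h1 : Tendsto (fun m => min t (θ (idx m))) atTop (𝓝 (min t θL)) :=
        tendsto_const_nhds.min hθconv2
      rwa [min_eq_left ht.2] at h1
    have hLT : Tendsto (fun m => Zf (idx m) (τ m)) atTop (𝓝 (G t)) := by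
      have h1 := hgconv2.tendsto_at ⟨t, htb⟩
      rw [hGeq t htb]
      exact h1
    have hidm : ∀ m, Zf (idx m) (τ m) =
        xs (ψ (idx m)) + ∫ u in (0:ℝ)..(τ m), Y (ψ (idx m)) (Zf (idx m) u) := by
      intro m
      have h1 := curve_integral_eq (hZm (idx m)) (hYc _) (hτmem m).1
        (fun u hu => hsub (idx m) ⟨hu.1, le_trans hu.2 (hτmem m).2⟩)
      rwa [(hZm (idx m)).init] at h1
    have hxsT : Tendsto (fun m => xs (ψ (idx m))) atTop (𝓝 x) := hxsx.comp hidxtend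
    have hIT : Tendsto (fun m => ∫ u in (0:ℝ)..(τ m), Y (ψ (idx m)) (Zf (idx m) u)) atTop
        (𝓝 (∫ u in (0:ℝ)..t, X (G u))) := by
      refine Metric.tendsto_nhds.mpr fun η hη => ?_
      set c0 := η / (3 * (b+1)) with hc0def
      have hc0 : 0 < c0 := div_pos hη (by linarith)
      obtain ⟨δu, hδu, hX3⟩ := Metric.uniformContinuousOn_iff.mp
        (hCc.uniformContinuousOn_of_continuous (hXc.mono hCU)) c0 hc0
      have e1 : ∀ᶠ m in atTop, ∀ z : Icc (0:ℝ) b, dist (g z) (gm (idx m) z) < δu :=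
        Metric.tendstoUniformly_iff.mp hgconv2 δu hδu
      have e2 : ∀ᶠ m in atTop, ∀ y ∈ C, dist (X y) (Y (ψ (idx m)) y) < c0 :=
        hidxtend.eventually (Metric.tendstoUniformlyOn_iff.mp (hconv C hCU hCc) c0 hc0)
      have e3 : ∀ᶠ m in atTop, M * |t - τ m| < η/3 := by
        have h1 : Tendsto (fun m => M * |t - τ m|) atTop (𝓝 (M * |t - t|)) :=
          tendsto_const_nhds.mul ((tendsto_const_nhds.sub hτt).abs)
        rw [sub_self, abs_zero, mul_zero] at h1
        have h2 : ∀ᶠ r in 𝓝 (0:ℝ), r < η/3 := Iio_mem_nhds (by positivity)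
        exact h1.eventually h2
      filter_upwards [e1, e2, e3] with m h1 h2 h3
      have hf₂c : Continuous fun u => X (G u) :=
        hXc.comp_continuous hGcont fun u => hCU (hGC u)
      have hf₁c : ContinuousOn (fun u => Y (ψ (idx m)) (Zf (idx m) u)) (Icc 0 (τ m)) := by
        intro u hu
        have huZ : u ∈ Zc (idx m) := hsub (idx m) ⟨hu.1, le_trans hu.2 (hτmem m).2⟩
        exact (((hYc (ψ (idx m))).continuousAt
          (hU.mem_nhds ((hZm (idx m)).mem u huZ))).comp (hZcont (idx m) u huZ)).continuousWithinAt
      have hint1 : IntervalIntegrable (fun u => Y (ψ (idx m)) (Zf (idx m) u))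
          MeasureTheory.volume 0 (τ m) := by
        apply ContinuousOn.intervalIntegrable
        rwa [uIcc_of_le (hτmem m).1]
      have hint2τ : IntervalIntegrable (fun u => X (G u)) MeasureTheory.volume 0 (τ m) :=
        hf₂c.intervalIntegrable _ _
      have hint2t : IntervalIntegrable (fun u => X (G u)) MeasureTheory.volume 0 t :=
        hf₂c.intervalIntegrable _ _
      have hsplit : (∫ u in (0:ℝ)..(τ m), Y (ψ (idx m)) (Zf (idx m) u)) -
          (∫ u in (0:ℝ)..t, X (G u)) =
          (∫ u in (0:ℝ)..(τ m), (Y (ψ (idx m)) (Zf (idx m) u) - X (G u))) +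
          ∫ u in t..(τ m), X (G u) := by
        rw [intervalIntegral.integral_sub hint1 hint2τ,
          ← intervalIntegral.integral_interval_sub_left hint2τ hint2t]
        abel
      have hb1 : ‖∫ u in (0:ℝ)..(τ m), (Y (ψ (idx m)) (Zf (idx m) u) - X (G u))‖ ≤
          (2*c0) * |τ m - 0| := by
        apply intervalIntegral.norm_integral_le_of_norm_le_const
        intro u hu
        rw [uIoc_of_le (hτmem m).1] at hu
        have hu' : u ∈ Icc (0:ℝ) (θ (idx m)) := ⟨hu.1.le, le_trans hu.2 (hτmem m).2⟩
        have hu'' : u ∈ Icc (0:ℝ) b :=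
          ⟨hu.1.le, le_trans (le_trans hu.2 (min_le_left _ _)) htb.2⟩
        have hZC : Zf (idx m) u ∈ C := hCin' (idx m) u hu'
        have hZfu : Zf (idx m) u = gm (idx m) ⟨u, hu''⟩ := by
          show Zf (idx m) u = Zf (idx m) (min u (θ (idx m)))
          rw [min_eq_left hu'.2]
        have hd2 : dist (Zf (idx m) u) (G u) < δu := by
          rw [hZfu, hGeq u hu'', dist_comm]
          exact h1 ⟨u, hu''⟩
        have hd3 : dist (X (Zf (idx m) u)) (X (G u)) < c0 := hX3 _ hZC _ (hGC u) hd2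
        have hd1 : dist (X (Zf (idx m) u)) (Y (ψ (idx m)) (Zf (idx m) u)) < c0 :=
          h2 _ hZC
        calc ‖Y (ψ (idx m)) (Zf (idx m) u) - X (G u)‖
            = dist (Y (ψ (idx m)) (Zf (idx m) u)) (X (G u)) := (dist_eq_norm _ _).symm
        _ ≤ dist (Y (ψ (idx m)) (Zf (idx m) u)) (X (Zf (idx m) u)) +
            dist (X (Zf (idx m) u)) (X (G u)) := dist_triangle _ _ _
        _ ≤ c0 + c0 := add_le_add (by rw [dist_comm]; exact hd1.le) hd3.le
        _ = 2*c0 := by ring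
      have hb2 : ‖∫ u in t..(τ m), X (G u)‖ ≤ M * |τ m - t| := by
        apply intervalIntegral.norm_integral_le_of_norm_le_const
        intro u hu
        exact hM _ (hGC u)
      have hτb : |τ m - 0| ≤ b := by
        rw [sub_zero, abs_of_nonneg (hτmem m).1]
        exact le_trans (min_le_left _ _) htb.2
      have hkeyc : c0 * (b+1) = η/3 := by
        rw [hc0def]
        field_simp
      have hd : dist (∫ u in (0:ℝ)..(τ m), Y (ψ (idx m)) (Zf (idx m) u))
          (∫ u in (0:ℝ)..t, X (G u)) ≤ 2*c0*b + M * |τ m - t| := by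
        rw [dist_eq_norm, hsplit]
        calc ‖_ + _‖ ≤ ‖∫ u in (0:ℝ)..(τ m), (Y (ψ (idx m)) (Zf (idx m) u) - X (G u))‖ +
            ‖∫ u in t..(τ m), X (G u)‖ := norm_add_le _ _
        _ ≤ (2*c0) * |τ m - 0| + M * |τ m - t| := add_le_add hb1 hb2
        _ ≤ 2*c0*b + M * |τ m - t| := by
            have := mul_le_mul_of_nonneg_left hτb (by positivity : (0:ℝ) ≤ 2*c0)
            linarith
      have habs : M * |τ m - t| < η/3 := by rwa [abs_sub_comm] at h3
      have h2c0b : 2*c0*b ≤ 2*(η/3) := by nlinarith [hkeyc, hc0.le]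
      linarith [hd, habs, h2c0b]
    have hLT' : Tendsto (fun m => xs (ψ (idx m)) +
        ∫ u in (0:ℝ)..(τ m), Y (ψ (idx m)) (Zf (idx m) u)) atTop (𝓝 (G t)) :=
      hLT.congr hidm
    exact tendsto_nhds_unique hLT' (hxsT.add hIT)
  -- uniqueness step
  have h0cs : (0:ℝ) ∈ curveSet X U x := hdom ⟨le_rfl, hb⟩
  obtain ⟨δ₀, hδ₀, hball0⟩ := Metric.isOpen_iff.mp isOpen_curveSet 0 h0cs
  set gh : ℝ → E d := fun v => if v < 0 then γ v else G v with hghdef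
  have hghneg : ∀ v, v < 0 → gh v = γ v := fun v hv => if_pos hv
  have hghpos : ∀ v, 0 ≤ v → gh v = G v := fun v hv => if_neg (not_lt.mpr hv)
  have hG0 : G 0 = x := by
    have := hid 0 ⟨le_rfl, hθLpos.le⟩
    rwa [intervalIntegral.integral_same, add_zero] at this
  have hf₂c : Continuous fun u => X (G u) :=
    hXc.comp_continuous hGcont fun u => hCU (hGC u)
  have hG'd : ∀ v, HasDerivAt (fun w => x + ∫ u in (0:ℝ)..w, X (G u)) (X (G v)) v := by
    intro v
    apply HasDerivAt.const_add
    exact intervalIntegral.integral_hasDerivAt_right (hf₂c.intervalIntegrable _ _)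
      (hf₂c.stronglyMeasurableAtFilter _ _) hf₂c.continuousAt
  have hmemball : ∀ v, -δ₀ < v → v < 0 → v ∈ curveSet X U x := by
    intro v h1 h2
    apply hball0
    rw [Metric.mem_ball, Real.dist_eq, sub_zero, abs_lt]
    constructor <;> linarith
  have hgh : IsIntegCurveOn X U x (Ioo (-δ₀) θL) gh := by
    refine ⟨isOpen_Ioo, Set.ordConnected_Ioo, ⟨by linarith, hθLpos⟩, ?_, ?_, ?_⟩
    · rw [hghpos 0 le_rfl]; exact hG0
    · intro v hv
      rcases lt_or_ge v 0 with h | h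
      · rw [hghneg v h]
        exact hγ.mem v (hmemball v hv.1 h)
      · rw [hghpos v h]
        exact hCU (hGC v)
    · intro v hv
      rcases lt_trichotomy v 0 with h | h | h
      · rw [hghneg v h]
        apply HasDerivAt.congr_of_eventuallyEq (hγ.deriv v (hmemball v hv.1 h))
        filter_upwards [Iio_mem_nhds h] with w hw using hghneg w hw
      · subst h
        have hXx : X (gh 0) = X x := by rw [hghpos 0 le_rfl, hG0]
        rw [hXx]
        have hl : HasDerivWithinAt gh (X x) (Iic 0) 0 := by
          have hd := (hγ.deriv 0 hγ.zeroMem).hasDerivWithinAt (s := Iic 0)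
          rw [hγ.init] at hd
          apply hd.congr
          · intro w hw
            rcases lt_or_eq_of_le (mem_Iic.mp hw) with h2 | h2
            · exact hghneg w h2
            · rw [h2, hghpos 0 le_rfl, hG0, hγ.init]
          · rw [hghpos 0 le_rfl, hG0, hγ.init]
        have hr : HasDerivWithinAt gh (X x) (Ici 0) 0 := by
          have hd := (hG'd 0).hasDerivWithinAt (s := Ici 0)
          rw [hG0] at hd
          apply hd.congr_of_eventuallyEq
          · have h1 : Iio θL ∈ 𝓝[Ici (0:ℝ)] 0 := nhdsWithin_le_nhds (Iio_mem_nhds hθLpos)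
            filter_upwards [h1, self_mem_nhdsWithin] with w hw1 hw2
            rw [hghpos w hw2]
            exact hid w ⟨hw2, le_of_lt hw1⟩
          · rw [hghpos 0 le_rfl, hG0, intervalIntegral.integral_same, add_zero]
        have hun := hl.union hr
        rwa [Iic_union_Ici, hasDerivWithinAt_univ] at hun
      · have hXv : X (gh v) = X (G v) := by rw [hghpos v h.le]
        rw [hXv]
        apply HasDerivAt.congr_of_eventuallyEq (hG'd v)
        filter_upwards [Ioo_mem_nhds h hv.2] with w hw
        rw [hghpos w hw.1.le]
        exact hid w ⟨hw.1.le, hw.2.le⟩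
  have huniq : ∀ v ∈ Ico (0:ℝ) θL, γ v = G v := by
    intro v hv
    have h1 := hXfl.2 x hx _ _ γ gh hγ hgh v
      ⟨hdom ⟨hv.1, le_trans hv.2.le hθLb⟩, ⟨by linarith [hv.1], hv.2⟩⟩
    rw [h1, hghpos v hv.1]
  have hGθL : γ θL = G θL := by
    have hne4 : (𝓝[Ico 0 θL] θL).NeBot := by
      apply mem_closure_iff_nhdsWithin_neBot.mp
      rw [closure_Ico (ne_of_lt hθLpos)]
      exact ⟨hθLpos.le, le_rfl⟩
    have l1 : Tendsto γ (𝓝[Ico 0 θL] θL) (𝓝 (γ θL)) :=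
      ((hγcont θL ⟨hθLpos.le, hθLb⟩).continuousWithinAt).tendsto
    have l2 : Tendsto γ (𝓝[Ico 0 θL] θL) (𝓝 (G θL)) := by
      apply (hGcont.continuousAt.continuousWithinAt).tendsto.congr'
      filter_upwards [self_mem_nhdsWithin] with w hw using (huniq w hw).symm
    exact tendsto_nhds_unique l1 l2
  have hfin1 : Tendsto (fun m => Zf (idx m) (θ (idx m))) atTop (𝓝 (G θL)) := by
    have hsubt : Tendsto (fun m => (⟨θ (idx m), hθmem (idx m)⟩ : Icc (0:ℝ) b)) atTop
        (𝓝 ⟨θL, hθLmem⟩) := by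
      rw [tendsto_subtype_rng]
      exact hθconv2
    have h5 := hgconv2.tendsto_comp (g.continuous.continuousAt) hsubt
    have heq : ∀ m, gm (idx m) (⟨θ (idx m), hθmem (idx m)⟩ : Icc (0:ℝ) b) =
        Zf (idx m) (θ (idx m)) := by
      intro m
      show Zf (idx m) (min (θ (idx m)) (θ (idx m))) = Zf (idx m) (θ (idx m))
      rw [min_self]
    rw [hGeq θL hθLmem]
    exact h5.congr heq
  have hfin2 : Tendsto (fun m => γ (θ (idx m))) atTop (𝓝 (γ θL)) :=
    (hγcont θL ⟨hθLpos.le, hθLb⟩).tendsto.comp hθconv2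
  have hfin3 : Tendsto (fun m => dist (Zf (idx m) (θ (idx m))) (γ (θ (idx m)))) atTop
      (𝓝 (dist (G θL) (γ θL))) := Filter.Tendsto.dist hfin1 hfin2
  have hfin4 : Tendsto (fun _ : ℕ => ε') atTop (𝓝 (dist (G θL) (γ θL))) :=
    hfin3.congr fun m => hexact (idx m)
  have hfin5 : ε' = dist (G θL) (γ θL) := tendsto_nhds_unique tendsto_const_nhds hfin4
  rw [← hGθL, dist_self] at hfin5
  linarith

end FlowsAux

/-- uniform convergence of flows.
If the continuous vector fields `X^k`, all having flows, converge to `X` (which has a flow)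
uniformly on compact subsets of `U`, and the flow of `X` is defined on `[0,T] × K` with `K`
compact, then for `k` large enough the flows of the `X^k` are defined on `[0,T] × K` and
they converge uniformly there to the flow of `X`. -/


theorem flows_converge_uniformly {d : ℕ}
    (U : Set (E d)) (hU : IsOpen U)
    (Xk : ℕ → E d → E d) (X : E d → E d)
    (hXkc : ∀ k, ContinuousOn (Xk k) U) (hXc : ContinuousOn X U)
    (hconv : ∀ K : Set (E d), K ⊆ U → IsCompact K →
      TendstoUniformlyOn (fun k x => Xk k x) X atTop K)
    (hXkflow : ∀ k, HasFlow (Xk k) U) (hXflow : HasFlow X U)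
    (T : ℝ) (hT : 0 < T) (K : Set (E d)) (hK : IsCompact K) (hKU : K ⊆ U)
    (hdef : ∀ t ∈ Icc (0:ℝ) T, ∀ x ∈ K, (t, x) ∈ FlowDomain X U)
    (φ : ℝ × E d → E d) (hφ : IsFlowMap X U φ)
    (φk : ℕ → ℝ × E d → E d) (hφk : ∀ k, IsFlowMap (Xk k) U (φk k)) :
    (∃ N : ℕ, ∀ k ≥ N, ∀ t ∈ Icc (0:ℝ) T, ∀ x ∈ K, (t, x) ∈ FlowDomain (Xk k) U) ∧
    TendstoUniformlyOn (fun k p => φk k p) (fun p => φ p) atTop (Icc (0:ℝ) T ×ˢ K) := by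
  classical
  have hKcl : ∀ x ∈ K, Icc (0:ℝ) T ⊆ FlowsAux.curveSet X U x := by
    intro x hx t ht
    exact ((FlowsAux.mem_flowDomain_iff hXflow).mp (hdef t ht x hx)).2
  constructor
  · -- part 1
    by_contra hcon
    push_neg at hcon
    have hfreq : ∃ᶠ k in atTop, ∃ t ∈ Icc (0:ℝ) T, ∃ x ∈ K,
        (t, x) ∉ FlowDomain (Xk k) U := by
      rw [Filter.frequently_atTop]
      intro N
      obtain ⟨k, hk, h⟩ := hcon N
      exact ⟨k, hk, h⟩
    obtain ⟨ψ, hψm, hψ⟩ := Filter.extraction_of_frequently_atTop hfreq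
    choose t ht xseq hxK hnd using hψ
    obtain ⟨x0, hx0K, ψ2, hψ2, hxconv⟩ := hK.tendsto_subseq hxK
    have hconv' : ∀ C : Set (E d), C ⊆ U → IsCompact C →
        TendstoUniformlyOn (fun m y => Xk (ψ (ψ2 m)) y) X atTop C := fun C hCU2 hCc2 u hu =>
      ((hψm.comp hψ2).tendsto_atTop).eventually ((hconv C hCU2 hCc2) u hu)
    have hcore := FlowsAux.core (x := x0) hU (Y := fun m => Xk (ψ (ψ2 m)))
      (fun m => hXkc (ψ (ψ2 m))) hXc (fun m => hXkflow (ψ (ψ2 m))) hXflow hconv'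
      (hKU hx0K) (xs := fun m => xseq (ψ2 m)) (fun m => hKU (hxK (ψ2 m))) hxconv
      hT.le (hKcl x0 hx0K) one_pos
    obtain ⟨m, hm⟩ := hcore.exists
    apply hnd (ψ2 m)
    rw [FlowsAux.mem_flowDomain_iff (hXkflow (ψ (ψ2 m)))]
    exact ⟨hKU (hxK (ψ2 m)), hm.1 (ht (ψ2 m))⟩
  · -- part 2
    rw [Metric.tendstoUniformlyOn_iff]
    intro ε hε
    by_contra hcon
    rw [Filter.not_eventually] at hcon
    have hfreq : ∃ᶠ k in atTop, ∃ p ∈ Icc (0:ℝ) T ×ˢ K, ε ≤ dist (φ p) (φk k p) := by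
      apply hcon.mono
      intro k hk
      push_neg at hk
      exact hk
    obtain ⟨ψ, hψm, hψ⟩ := Filter.extraction_of_frequently_atTop hfreq
    choose p hp hdist using hψ
    have hpK : ∀ m, (p m).2 ∈ K := fun m => (hp m).2
    have hpT : ∀ m, (p m).1 ∈ Icc (0:ℝ) T := fun m => (hp m).1
    obtain ⟨x0, hx0K, ψ2, hψ2, hxconv⟩ := hK.tendsto_subseq (x := fun m => (p m).2) hpK
    have hconv' : ∀ C : Set (E d), C ⊆ U → IsCompact C →
        TendstoUniformlyOn (fun m y => Xk (ψ (ψ2 m)) y) X atTop C := fun C hCU2 hCc2 u hu =>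
      ((hψm.comp hψ2).tendsto_atTop).eventually ((hconv C hCU2 hCc2) u hu)
    have hconvX : ∀ C : Set (E d), C ⊆ U → IsCompact C →
        TendstoUniformlyOn (fun (_ : ℕ) y => X y) X atTop C := fun C hCU2 hCc2 u hu =>
      Filter.Eventually.of_forall fun n y hy => refl_mem_uniformity hu
    have hε4 : 0 < ε/4 := by linarith
    have hcoreA := FlowsAux.core (x := x0) hU (Y := fun m => Xk (ψ (ψ2 m)))
      (fun m => hXkc (ψ (ψ2 m))) hXc (fun m => hXkflow (ψ (ψ2 m))) hXflow hconv'
      (hKU hx0K) (xs := fun m => (p (ψ2 m)).2) (fun m => hKU (hpK (ψ2 m))) hxconv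
      hT.le (hKcl x0 hx0K) hε4
    have hcoreB := FlowsAux.core (x := x0) hU (Y := fun (_ : ℕ) => X)
      (fun _ => hXc) hXc (fun _ => hXflow) hXflow hconvX
      (hKU hx0K) (xs := fun m => (p (ψ2 m)).2) (fun m => hKU (hpK (ψ2 m))) hxconv
      hT.le (hKcl x0 hx0K) hε4
    obtain ⟨m, hmA, hmB⟩ := (hcoreA.and hcoreB).exists
    set q := p (ψ2 m) with hq
    have hqT : q.1 ∈ Icc (0:ℝ) T := hpT (ψ2 m)
    have hqK : q.2 ∈ K := hpK (ψ2 m)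
    have hqU : q.2 ∈ U := hKU hqK
    have hφq : φ q = FlowsAux.curveFun X U q.2 q.1 := by
      rw [show q = (q.1, q.2) from rfl]
      apply FlowsAux.flowMap_eq hφ hXflow hqU
      exact ((FlowsAux.mem_flowDomain_iff hXflow).mp (hdef q.1 hqT q.2 hqK)).2
    have hφkq : φk (ψ (ψ2 m)) q = FlowsAux.curveFun (Xk (ψ (ψ2 m))) U q.2 q.1 := by
      rw [show q = (q.1, q.2) from rfl]
      apply FlowsAux.flowMap_eq (hφk _) (hXkflow _) hqU
      exact hmA.1 hqT
    have hd1 : dist (FlowsAux.curveFun (Xk (ψ (ψ2 m))) U q.2 q.1)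
        (FlowsAux.curveFun X U x0 q.1) ≤ ε/4 := hmA.2 q.1 hqT
    have hd2 : dist (FlowsAux.curveFun X U q.2 q.1)
        (FlowsAux.curveFun X U x0 q.1) ≤ ε/4 := hmB.2 q.1 hqT
    have hcontra := hdist (ψ2 m)
    rw [hφq, hφkq] at hcontra
    have : dist (FlowsAux.curveFun X U q.2 q.1)
        (FlowsAux.curveFun (Xk (ψ (ψ2 m))) U q.2 q.1) ≤ ε/2 := by
      calc dist (FlowsAux.curveFun X U q.2 q.1) (FlowsAux.curveFun (Xk (ψ (ψ2 m))) U q.2 q.1)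
          ≤ dist (FlowsAux.curveFun X U q.2 q.1) (FlowsAux.curveFun X U x0 q.1) +
            dist (FlowsAux.curveFun X U x0 q.1)
              (FlowsAux.curveFun (Xk (ψ (ψ2 m))) U q.2 q.1) := dist_triangle _ _ _
      _ ≤ ε/4 + ε/4 := add_le_add hd2 (by rw [dist_comm]; exact hd1)
      _ = ε/2 := by ring
    linarith
end
end

section
/- Let t₁ < t₂ be reals with L = t₂ − t₁, and let (X^{1,ℓ}) and (X^{2,ℓ}) be sequences of continuous time-dependent vector fields [t₁,t₂] × ℝ^d → ℝ^d, uniformly bounded with respect to ℓ, converging uniformly on compact subsets of [t₁,t₂] × ℝ^d to X¹ and X² respectively. For each ℓ, define G_ℓ : [t₁,t₂] × ℝ^d → ℝ^d by G_ℓ(t,x) = X^{1,ℓ}(t,x) if t ∈ [t₁ + (j/ℓ)L, t₁ + ((2j+1)/(2ℓ))L) and G_ℓ(t,x) = X^{2,ℓ}(t,x) if t ∈ [t₁ + ((2j+1)/(2ℓ))L, t₁ + ((j+1)/ℓ)L), for j = 0, …, ℓ−1, and G_ℓ(t₂,x) = X^{2,ℓ}(t₂,x). Let γ_ℓ : [t₁,t₂]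 → ℝ^d satisfy γ_ℓ(t) − x̄ = ∫_{t₁}^{t} G_ℓ(τ, γ_ℓ(τ)) dτ. Then the sequence (γ_ℓ) is relatively compact in C⁰([t₁,t₂], ℝ^d) with the uniform norm, and every accumulation point γ_∞ satisfies γ_∞(t) − x̄ = (1/2) ∫_{t₁}^{t} (X¹(τ, γ_∞(τ)) + X²(τ, γ_∞(τ))) dτ for all t ∈ [t₁,t₂]. -/
open Set Topology Filter ContDiff

noncomputable section

namespace AvgAux

open MeasureTheory intervalIntegral

/-- Partition points `t₁ + (j/ℓ)(t₂-t₁)`. -/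
def aP (t₁ t₂ : ℝ) (ℓ j : ℕ) : ℝ := t₁ + (j : ℝ) / ℓ * (t₂ - t₁)

/-- Midpoints `t₁ + ((2j+1)/(2ℓ))(t₂-t₁)`. -/
def aM (t₁ t₂ : ℝ) (ℓ j : ℕ) : ℝ := t₁ + (2 * (j : ℝ) + 1) / (2 * ℓ) * (t₂ - t₁)

/-- The union of first halves of the subintervals. -/
def A (t₁ t₂ : ℝ) (ℓ : ℕ) : Set ℝ :=
  ⋃ j ∈ Finset.range ℓ, Set.Ico (aP t₁ t₂ ℓ j) (aM t₁ t₂ ℓ j)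

/-- Indicator of `A`. -/
def χ (t₁ t₂ : ℝ) (ℓ : ℕ) : ℝ → ℝ := (A t₁ t₂ ℓ).indicator fun _ => (1 : ℝ)

variable {t₁ t₂ : ℝ} {ℓ j k : ℕ}

lemma aP_zero : aP t₁ t₂ ℓ 0 = t₁ := by simp [aP]

lemma aP_last (hℓ : 0 < ℓ) : aP t₁ t₂ ℓ ℓ = t₂ := by
  have h : (ℓ : ℝ) ≠ 0 := by positivity
  rw [aP, div_self h, one_mul]; ring

lemma aM_eq (hℓ : 0 < ℓ) : aM t₁ t₂ ℓ j = aP t₁ t₂ ℓ j + (t₂ - t₁) / (2 * ℓ) := by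
  have h : (ℓ : ℝ) ≠ 0 := by positivity
  unfold aM aP; field_simp; ring

lemma aP_succ (hℓ : 0 < ℓ) :
    aP t₁ t₂ ℓ (j + 1) = aM t₁ t₂ ℓ j + (t₂ - t₁) / (2 * ℓ) := by
  have h : (ℓ : ℝ) ≠ 0 := by positivity
  unfold aM aP; push_cast; field_simp; ring

lemma aP_mono (hL : 0 ≤ t₂ - t₁) (hjk : j ≤ k) : aP t₁ t₂ ℓ j ≤ aP t₁ t₂ ℓ k := by
  unfold aP
  have : (j:ℝ) ≤ k := by exact_mod_cast hjk
  gcongr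

lemma aP_le_aM (hL : 0 ≤ t₂ - t₁) (hℓ : 0 < ℓ) : aP t₁ t₂ ℓ j ≤ aM t₁ t₂ ℓ j := by
  rw [aM_eq hℓ]
  have : (0:ℝ) ≤ (t₂ - t₁) / (2 * ℓ) := by positivity
  linarith

lemma aM_le_aP_succ (hL : 0 ≤ t₂ - t₁) (hℓ : 0 < ℓ) :
    aM t₁ t₂ ℓ j ≤ aP t₁ t₂ ℓ (j + 1) := by
  rw [aM_eq hℓ, aP_succ hℓ]
  gcongr
  exact aP_le_aM hL hℓ

lemma aP_mem (hL : 0 ≤ t₂ - t₁) (hℓ : 0 < ℓ) (hj : j ≤ ℓ) :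
    aP t₁ t₂ ℓ j ∈ Icc t₁ t₂ := by
  constructor
  · calc t₁ = aP t₁ t₂ ℓ 0 := aP_zero.symm
    _ ≤ _ := aP_mono hL (Nat.zero_le _)
  · calc aP t₁ t₂ ℓ j ≤ aP t₁ t₂ ℓ ℓ := aP_mono hL hj
    _ = t₂ := aP_last hℓ

lemma aM_mem (hL : 0 ≤ t₂ - t₁) (hℓ : 0 < ℓ) (hj : j < ℓ) :
    aM t₁ t₂ ℓ j ∈ Icc t₁ t₂ := by
  constructor
  · exact le_trans (aP_mem hL hℓ hj.le).1 (aP_le_aM hL hℓ)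
  · exact le_trans (aM_le_aP_succ hL hℓ) (aP_mem hL hℓ hj).2

lemma measurableSet_A : MeasurableSet (A t₁ t₂ ℓ) :=
  MeasurableSet.iUnion fun _ => MeasurableSet.iUnion fun _ => measurableSet_Ico

lemma exists_j (hL : 0 < t₂ - t₁) (hℓ : 0 < ℓ) {τ : ℝ} (hτ : τ ∈ Ico t₁ t₂) :
    ∃ j < ℓ, τ ∈ Ico (aP t₁ t₂ ℓ j) (aP t₁ t₂ ℓ (j + 1)) := by
  have hℓR : (0:ℝ) < ℓ := by exact_mod_cast hℓ
  set u := (τ - t₁) * ℓ / (t₂ - t₁) with hu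
  have hu0 : 0 ≤ u := div_nonneg (mul_nonneg (sub_nonneg.2 hτ.1) hℓR.le) hL.le
  refine ⟨⌊u⌋₊, ?_, ?_, ?_⟩
  · rw [Nat.floor_lt hu0, hu, div_lt_iff₀ hL]
    nlinarith [hτ.2]
  · have h1 : (⌊u⌋₊ : ℝ) ≤ u := Nat.floor_le hu0
    have h2 : (⌊u⌋₊ : ℝ) * (t₂ - t₁) ≤ (τ - t₁) * ℓ := by
      rw [hu] at h1; exact (le_div_iff₀ hL).mp h1
    have h3 : (⌊u⌋₊ : ℝ) / ℓ * (t₂ - t₁) ≤ τ - t₁ := by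
      rw [div_mul_eq_mul_div, div_le_iff₀ hℓR]; linarith
    unfold aP; linarith
  · have h1 : u < (⌊u⌋₊ : ℝ) + 1 := Nat.lt_floor_add_one u
    have h2 : (τ - t₁) * ℓ < ((⌊u⌋₊ : ℝ) + 1) * (t₂ - t₁) := by
      rw [hu] at h1; exact (div_lt_iff₀ hL).mp h1
    have h3 : τ - t₁ < ((⌊u⌋₊ : ℝ) + 1) / ℓ * (t₂ - t₁) := by
      rw [div_mul_eq_mul_div, lt_div_iff₀ hℓR]; linarith
    unfold aP; push_cast; linarith

lemma mem_A_iff (hL : 0 < t₂ - t₁) (hℓ : 0 < ℓ) (hj : j < ℓ) {τ : ℝ}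
    (hτ : τ ∈ Ico (aP t₁ t₂ ℓ j) (aP t₁ t₂ ℓ (j + 1))) :
    τ ∈ A t₁ t₂ ℓ ↔ τ < aM t₁ t₂ ℓ j := by
  constructor
  · intro hA
    simp only [A, Set.mem_iUnion, Finset.mem_range] at hA
    obtain ⟨i, hi, hτ1, hτ2⟩ := hA
    have hij : i = j := by
      by_contra hne
      rcases lt_or_gt_of_ne hne with hlt | hgt
      · have h1 : aP t₁ t₂ ℓ (i+1) ≤ aP t₁ t₂ ℓ j := aP_mono hL.le hlt
        have h2 : aM t₁ t₂ ℓ i ≤ aP t₁ t₂ ℓ (i+1) := aM_le_aP_succ hL.le hℓ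
        have := hτ.1; linarith
      · have h1 : aP t₁ t₂ ℓ (j+1) ≤ aP t₁ t₂ ℓ i := aP_mono hL.le hgt
        have := hτ.2; linarith
    subst hij; exact hτ2
  · intro h
    simp only [A, Set.mem_iUnion, Finset.mem_range]
    exact ⟨j, hj, hτ.1, h⟩

lemma A_subset (hL : 0 < t₂ - t₁) (hℓ : 0 < ℓ) : A t₁ t₂ ℓ ⊆ Ico t₁ t₂ := by
  intro τ hτ
  simp only [A, Set.mem_iUnion, Finset.mem_range] at hτ
  obtain ⟨i, hi, hτ1, hτ2⟩ := hτ
  constructor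
  · exact le_trans (aP_mem hL.le hℓ hi.le).1 hτ1
  · exact lt_of_lt_of_le hτ2 (aM_mem hL.le hℓ hi).2

lemma not_mem_A_of_ge_aM (hL : 0 < t₂ - t₁) (hℓ : 0 < ℓ) (hj : j < ℓ) {τ : ℝ}
    (h1 : aM t₁ t₂ ℓ j ≤ τ) (h2 : τ < aP t₁ t₂ ℓ (j + 1)) : τ ∉ A t₁ t₂ ℓ := by
  intro hA
  have hmem : τ ∈ Ico (aP t₁ t₂ ℓ j) (aP t₁ t₂ ℓ (j + 1)) :=
    ⟨le_trans (aP_le_aM hL.le hℓ) h1, h2⟩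
  exact absurd ((mem_A_iff hL hℓ hj hmem).mp hA) (not_lt.2 h1)


section Integrability

variable {F : Type*} [NormedAddCommGroup F] [NormedSpace ℝ F]

lemma integrableOn_comb {s : Set ℝ} (hs : IsCompact s)
    {u1 u2 : ℝ → F} (h1 : ContinuousOn u1 s) (h2 : ContinuousOn u2 s) :
    IntegrableOn (fun τ => χ t₁ t₂ ℓ τ • u1 τ + (1 - χ t₁ t₂ ℓ τ) • u2 τ) s := by
  have e : (fun τ => χ t₁ t₂ ℓ τ • u1 τ + (1 - χ t₁ t₂ ℓ τ) • u2 τ)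
      = fun τ => (A t₁ t₂ ℓ).indicator u1 τ + (u2 τ - (A t₁ t₂ ℓ).indicator u2 τ) := by
    funext τ
    by_cases hτ : τ ∈ A t₁ t₂ ℓ <;>
      simp [χ, Set.indicator_of_mem, Set.indicator_of_notMem, hτ]
  rw [e]
  exact ((h1.integrableOn_compact hs).indicator measurableSet_A).add
    ((h2.integrableOn_compact hs).sub ((h2.integrableOn_compact hs).indicator measurableSet_A))

lemma integrableOn_osc {s : Set ℝ} (hs : IsCompact s)
    {g : ℝ → F} (hg : ContinuousOn g s) :
    IntegrableOn (fun τ => (χ t₁ t₂ ℓ τ - 2⁻¹) • g τ) s := by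
  have e : (fun τ => (χ t₁ t₂ ℓ τ - 2⁻¹) • g τ)
      = fun τ => (A t₁ t₂ ℓ).indicator g τ - (2⁻¹ : ℝ) • g τ := by
    funext τ
    by_cases hτ : τ ∈ A t₁ t₂ ℓ <;>
      simp [χ, Set.indicator_of_mem, Set.indicator_of_notMem, hτ, sub_smul]
  rw [e]
  exact ((hg.integrableOn_compact hs).indicator measurableSet_A).sub
    ((hg.integrableOn_compact hs).smul (2⁻¹ : ℝ))

lemma intervalIntegrable_of_integrableOn_Icc {f : ℝ → F}
    (h : IntegrableOn f (Icc t₁ t₂)) {u v : ℝ} (hu : u ∈ Icc t₁ t₂) (hv : v ∈ Icc t₁ t₂) :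
    IntervalIntegrable f volume u v := by
  rw [intervalIntegrable_iff]
  exact h.mono_set ((Set.uIoc_subset_uIcc ..).trans (Set.uIcc_subset_Icc hu hv))

end Integrability


/-- The oscillation lemma: the alternating indicator converges weakly to `1/2`. -/
lemma osc {F : Type*} [NormedAddCommGroup F] [NormedSpace ℝ F]
    {t₁ t₂ : ℝ} (ht : t₁ < t₂) {g : ℝ → F} (hg : ContinuousOn g (Icc t₁ t₂))
    {t : ℝ} (htm : t ∈ Icc t₁ t₂) :
    Tendsto (fun ℓ : ℕ => ∫ τ in t₁..t, (χ t₁ t₂ ℓ τ - 2⁻¹) • g τ) atTop (𝓝 0) := by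
  have hL : 0 < t₂ - t₁ := sub_pos.2 ht
  rw [NormedAddCommGroup.tendsto_nhds_zero]
  intro ε hε
  obtain ⟨C, hC⟩ := isCompact_Icc.exists_bound_of_continuousOn hg
  have hC0 : 0 ≤ C := le_trans (norm_nonneg _) (hC t₁ ⟨le_refl _, ht.le⟩)
  have hUC := isCompact_Icc.uniformContinuousOn_of_continuous hg
  rw [Metric.uniformContinuousOn_iff] at hUC
  set ε' := ε / (t₂ - t₁) with hε'
  have hε'0 : 0 < ε' := by positivity
  obtain ⟨δ, hδ0, hδ⟩ := hUC ε' hε'0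
  have h1 : ∀ᶠ ℓ : ℕ in atTop, (t₂ - t₁) / 2 / ℓ < δ :=
    (tendsto_const_div_atTop_nhds_zero_nat ((t₂ - t₁) / 2)).eventually_lt_const hδ0
  have h2 : ∀ᶠ ℓ : ℕ in atTop, C * (t₂ - t₁) / ℓ < ε / 2 :=
    (tendsto_const_div_atTop_nhds_zero_nat (C * (t₂ - t₁))).eventually_lt_const (by positivity)
  filter_upwards [h1, h2, eventually_ge_atTop 1] with ℓ hsmall hband hℓ1
  have hℓ : 0 < ℓ := hℓ1
  have hℓR : (0 : ℝ) < ℓ := by exact_mod_cast hℓ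
  set h := (t₂ - t₁) / (2 * ℓ) with hh
  have hh0 : 0 < h := by positivity
  have hhδ : h < δ := by
    rw [hh]
    calc (t₂ - t₁) / (2 * ℓ) = (t₂ - t₁) / 2 / ℓ := by ring
    _ < δ := hsmall
  set D := fun τ : ℝ => (χ t₁ t₂ ℓ τ - 2⁻¹) • g τ with hD
  have hDint : ∀ u ∈ Icc t₁ t₂, ∀ v ∈ Icc t₁ t₂, IntervalIntegrable D volume u v :=
    fun u hu v hv =>
      intervalIntegrable_of_integrableOn_Icc (integrableOn_osc isCompact_Icc hg) hu hv
  have hDbound : ∀ τ ∈ Icc t₁ t₂, ‖D τ‖ ≤ C := by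
    intro τ hτ
    rw [hD]
    have habs : ‖χ t₁ t₂ ℓ τ - 2⁻¹‖ ≤ 1 := by
      rw [Real.norm_eq_abs]
      by_cases hτA : τ ∈ A t₁ t₂ ℓ <;>
        · simp [χ, hτA, Set.indicator_of_mem, Set.indicator_of_notMem]
          norm_num [abs_le]
    calc ‖(χ t₁ t₂ ℓ τ - 2⁻¹) • g τ‖ = ‖χ t₁ t₂ ℓ τ - 2⁻¹‖ * ‖g τ‖ := norm_smul _ _
    _ ≤ 1 * C := mul_le_mul habs (hC τ hτ) (norm_nonneg _) one_pos.le
    _ = C := one_mul C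
  have hsucc : ∀ i : ℕ, aP t₁ t₂ ℓ (i + 1) = aP t₁ t₂ ℓ i + 2 * h := by
    intro i
    rw [aP_succ hℓ, aM_eq hℓ, ← hh]
    ring
  -- the per-subinterval estimate
  have hstep : ∀ j < ℓ, ‖∫ τ in (aP t₁ t₂ ℓ j)..(aP t₁ t₂ ℓ (j + 1)), D τ‖ ≤ ε' * h / 2 := by
    intro j hj
    have hPj := aP_mem (t₁ := t₁) (t₂ := t₂) hL.le hℓ hj.le
    have hPj1 := aP_mem (t₁ := t₁) (t₂ := t₂) hL.le hℓ hj
    have hMj := aM_mem (t₁ := t₁) (t₂ := t₂) hL.le hℓ hj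
    have hPM : aP t₁ t₂ ℓ j ≤ aM t₁ t₂ ℓ j := aP_le_aM hL.le hℓ
    have hMP : aM t₁ t₂ ℓ j ≤ aP t₁ t₂ ℓ (j + 1) := aM_le_aP_succ hL.le hℓ
    have hMeq : aM t₁ t₂ ℓ j = aP t₁ t₂ ℓ j + h := by rw [aM_eq hℓ, ← hh]
    have hPeq : aP t₁ t₂ ℓ (j + 1) = aM t₁ t₂ ℓ j + h := by rw [aP_succ hℓ, ← hh]
    have hne1 : ∀ᵐ τ : ℝ, τ ≠ aM t₁ t₂ ℓ j := by
      rw [MeasureTheory.ae_iff]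
      simpa using MeasureTheory.measure_singleton (μ := (volume : Measure ℝ)) (aM t₁ t₂ ℓ j)
    have hne2 : ∀ᵐ τ : ℝ, τ ≠ aP t₁ t₂ ℓ (j + 1) := by
      rw [MeasureTheory.ae_iff]
      simpa using MeasureTheory.measure_singleton (μ := (volume : Measure ℝ)) (aP t₁ t₂ ℓ (j + 1))
    have e1 : ∫ τ in (aP t₁ t₂ ℓ j)..(aM t₁ t₂ ℓ j), D τ
        = (2⁻¹ : ℝ) • ∫ τ in (aP t₁ t₂ ℓ j)..(aM t₁ t₂ ℓ j), g τ := by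
      rw [← intervalIntegral.integral_smul]
      apply intervalIntegral.integral_congr_ae
      filter_upwards [hne1] with τ hτne hτmem
      rw [Set.uIoc_of_le hPM] at hτmem
      have hτA : τ ∈ A t₁ t₂ ℓ := by
        simp only [A, Set.mem_iUnion, Finset.mem_range]
        exact ⟨j, hj, le_of_lt hτmem.1, lt_of_le_of_ne hτmem.2 hτne⟩
      rw [hD]
      simp only [χ, Set.indicator_of_mem hτA]
      norm_num
    have e2 : ∫ τ in (aM t₁ t₂ ℓ j)..(aP t₁ t₂ ℓ (j + 1)), D τ
        = -((2⁻¹ : ℝ) • ∫ τ in (aM t₁ t₂ ℓ j)..(aP t₁ t₂ ℓ (j + 1)), g τ) := by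
      rw [← intervalIntegral.integral_smul, ← intervalIntegral.integral_neg]
      apply intervalIntegral.integral_congr_ae
      filter_upwards [hne2] with τ hτne hτmem
      rw [Set.uIoc_of_le hMP] at hτmem
      have hτA : τ ∉ A t₁ t₂ ℓ :=
        not_mem_A_of_ge_aM hL hℓ hj hτmem.1.le (lt_of_le_of_ne hτmem.2 hτne)
      rw [hD]
      simp only [χ, Set.indicator_of_notMem hτA]
      module
    have hg1 : IntervalIntegrable g volume (aP t₁ t₂ ℓ j) (aM t₁ t₂ ℓ j) :=
      (hg.mono (uIcc_subset_Icc hPj hMj)).intervalIntegrable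
    have hg2 : IntervalIntegrable (fun τ => g (τ + h)) volume (aP t₁ t₂ ℓ j) (aM t₁ t₂ ℓ j) := by
      apply ContinuousOn.intervalIntegrable
      apply hg.comp ((continuous_id.add continuous_const).continuousOn)
      intro τ hτmem
      rw [uIcc_of_le hPM] at hτmem
      constructor
      · have : t₁ ≤ τ := le_trans hPj.1 hτmem.1
        show t₁ ≤ τ + h; linarith
      · have h1 : τ + h ≤ aM t₁ t₂ ℓ j + h := by linarith [hτmem.2]
        rw [← hPeq] at h1
        simpa using le_trans h1 hPj1.2
    have e4 : ∫ τ in (aP t₁ t₂ ℓ j)..(aM t₁ t₂ ℓ j), g (τ + h)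
        = ∫ τ in (aM t₁ t₂ ℓ j)..(aP t₁ t₂ ℓ (j + 1)), g τ := by
      rw [intervalIntegral.integral_comp_add_right g h, ← hMeq, ← hPeq]
    have e3 : ∫ τ in (aP t₁ t₂ ℓ j)..(aP t₁ t₂ ℓ (j + 1)), D τ
        = (2⁻¹ : ℝ) • ∫ τ in (aP t₁ t₂ ℓ j)..(aM t₁ t₂ ℓ j), (g τ - g (τ + h)) := by
      rw [← intervalIntegral.integral_add_adjacent_intervals
          (hDint _ hPj _ hMj) (hDint _ hMj _ hPj1), e1, e2,
        intervalIntegral.integral_sub hg1 hg2, smul_sub, e4]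
      abel
    rw [e3, norm_smul]
    have e6 : ‖∫ τ in (aP t₁ t₂ ℓ j)..(aM t₁ t₂ ℓ j), (g τ - g (τ + h))‖ ≤ ε' * h := by
      have hb : ∀ τ ∈ Set.uIoc (aP t₁ t₂ ℓ j) (aM t₁ t₂ ℓ j), ‖g τ - g (τ + h)‖ ≤ ε' := by
        intro τ hτmem
        rw [Set.uIoc_of_le hPM] at hτmem
        have hτI : τ ∈ Icc t₁ t₂ :=
          ⟨le_trans hPj.1 hτmem.1.le, le_trans hτmem.2 hMj.2⟩
        have hτhI : τ + h ∈ Icc t₁ t₂ := by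
          constructor
          · linarith [hτI.1]
          · have : τ + h ≤ aM t₁ t₂ ℓ j + h := by linarith [hτmem.2]
            rw [← hPeq] at this
            exact le_trans this hPj1.2
        have hdist : dist τ (τ + h) < δ := by
          rw [Real.dist_eq]
          rw [show τ - (τ + h) = -h by ring, abs_neg, abs_of_pos hh0]
          exact hhδ
        have := hδ τ hτI (τ + h) hτhI hdist
        rw [dist_eq_norm] at this
        exact this.le
      calc ‖∫ τ in (aP t₁ t₂ ℓ j)..(aM t₁ t₂ ℓ j), (g τ - g (τ + h))‖
          ≤ ε' * |aM t₁ t₂ ℓ j - aP t₁ t₂ ℓ j| :=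
            intervalIntegral.norm_integral_le_of_norm_le_const hb
      _ = ε' * h := by rw [hMeq, show aP t₁ t₂ ℓ j + h - aP t₁ t₂ ℓ j = h by ring,
            abs_of_pos hh0]
    calc ‖(2⁻¹ : ℝ)‖ * ‖∫ τ in (aP t₁ t₂ ℓ j)..(aM t₁ t₂ ℓ j), (g τ - g (τ + h))‖
        ≤ 2⁻¹ * (ε' * h) := by
          rw [show ‖(2⁻¹ : ℝ)‖ = 2⁻¹ by norm_num]
          exact mul_le_mul_of_nonneg_left e6 (by norm_num)
    _ = ε' * h / 2 := by ring
  -- telescoping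
  have ht₁I : t₁ ∈ Icc t₁ t₂ := ⟨le_refl _, ht.le⟩
  have hFa : ∀ k ≤ ℓ, ∫ τ in t₁..(aP t₁ t₂ ℓ k), D τ
      = ∑ i ∈ Finset.range k, ∫ τ in (aP t₁ t₂ ℓ i)..(aP t₁ t₂ ℓ (i + 1)), D τ := by
    intro k hk
    induction k with
    | zero => simp [aP_zero]
    | succ n ih =>
      rw [Finset.sum_range_succ, ← ih (Nat.le_of_succ_le hk),
        intervalIntegral.integral_add_adjacent_intervals
          (hDint t₁ ht₁I _ (aP_mem hL.le hℓ (Nat.le_of_succ_le hk)))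
          (hDint _ (aP_mem hL.le hℓ (Nat.le_of_succ_le hk)) _ (aP_mem hL.le hℓ hk))]
  obtain ⟨j, hjle, hjt1, hjt2⟩ : ∃ j ≤ ℓ, aP t₁ t₂ ℓ j ≤ t ∧ t ≤ aP t₁ t₂ ℓ j + 2 * h := by
    rcases eq_or_lt_of_le htm.2 with heq | hlt
    · refine ⟨ℓ, le_refl _, ?_, ?_⟩
      · rw [aP_last hℓ, heq]
      · rw [aP_last hℓ, heq]; linarith
    · obtain ⟨j, hj, hmem⟩ := exists_j hL hℓ ⟨htm.1, hlt⟩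
      refine ⟨j, hj.le, hmem.1, ?_⟩
      have := hmem.2
      rw [hsucc j] at this
      linarith
  have hPjI := aP_mem (t₁ := t₁) (t₂ := t₂) hL.le hℓ hjle
  have split : ∫ τ in t₁..t, D τ
      = (∫ τ in t₁..(aP t₁ t₂ ℓ j), D τ) + ∫ τ in (aP t₁ t₂ ℓ j)..t, D τ :=
    (intervalIntegral.integral_add_adjacent_intervals
      (hDint t₁ ht₁I _ hPjI) (hDint _ hPjI t htm)).symm
  have b1 : ‖∫ τ in t₁..(aP t₁ t₂ ℓ j), D τ‖ ≤ (j : ℝ) * (ε' * h / 2) := by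
    rw [hFa j hjle]
    calc ‖∑ i ∈ Finset.range j, ∫ τ in (aP t₁ t₂ ℓ i)..(aP t₁ t₂ ℓ (i + 1)), D τ‖
        ≤ ∑ i ∈ Finset.range j, ‖∫ τ in (aP t₁ t₂ ℓ i)..(aP t₁ t₂ ℓ (i + 1)), D τ‖ :=
          norm_sum_le _ _
    _ ≤ ∑ i ∈ Finset.range j, (ε' * h / 2) := by
        apply Finset.sum_le_sum
        intro i hi
        exact hstep i (lt_of_lt_of_le (Finset.mem_range.mp hi) hjle)
    _ = (j : ℝ) * (ε' * h / 2) := by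
        rw [Finset.sum_const, Finset.card_range, nsmul_eq_mul]
  have b2 : ‖∫ τ in (aP t₁ t₂ ℓ j)..t, D τ‖ ≤ C * (2 * h) := by
    have hb : ∀ τ ∈ Set.uIoc (aP t₁ t₂ ℓ j) t, ‖D τ‖ ≤ C := by
      intro τ hτmem
      rw [Set.uIoc_of_le hjt1] at hτmem
      exact hDbound τ ⟨le_trans hPjI.1 hτmem.1.le, le_trans hτmem.2 htm.2⟩
    calc ‖∫ τ in (aP t₁ t₂ ℓ j)..t, D τ‖ ≤ C * |t - aP t₁ t₂ ℓ j| :=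
        intervalIntegral.norm_integral_le_of_norm_le_const hb
    _ ≤ C * (2 * h) := by
        apply mul_le_mul_of_nonneg_left _ hC0
        rw [abs_of_nonneg (by linarith)]
        linarith
  have key1 : (ℓ : ℝ) * (ε' * h / 2) = ε / 4 := by
    rw [hε', hh]
    field_simp
    ring
  have key2 : C * (2 * h) = C * (t₂ - t₁) / ℓ := by
    rw [hh]; field_simp
  have hjℓ : (j : ℝ) ≤ (ℓ : ℝ) := by exact_mod_cast hjle
  have hj1 : (j : ℝ) * (ε' * h / 2) ≤ ε / 4 := by
    rw [← key1]
    apply mul_le_mul_of_nonneg_right hjℓ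
    positivity
  calc ‖∫ τ in t₁..t, D τ‖
      ≤ ‖∫ τ in t₁..(aP t₁ t₂ ℓ j), D τ‖ + ‖∫ τ in (aP t₁ t₂ ℓ j)..t, D τ‖ := by
        rw [split]; exact norm_add_le _ _
  _ < ε := by
      rw [key2] at b2
      have := le_trans b2 (le_of_lt hband)
      linarith

end AvgAux



open AvgAux MeasureTheory intervalIntegral

set_option maxHeartbeats 1600000


/-- averaging lemma. Let `X^{1,ℓ} → X¹` and `X^{2,ℓ} → X²` be uniformly
bounded sequences of continuous time-dependent vector fields on `[t₁,t₂] × ℝ^d`, converging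
uniformly on compact sets, and let `G_ℓ` alternate between `X^{1,ℓ}` and `X^{2,ℓ}` on the
`2ℓ` half-subintervals of the uniform subdivision of `[t₁,t₂]` of step `(t₂−t₁)/ℓ`. If
`γ_ℓ` solves `γ_ℓ(t) − x̄ = ∫_{t₁}^t G_ℓ(τ,γ_ℓ(τ)) dτ`, then `(γ_ℓ)` is relatively compact
in `C⁰([t₁,t₂],ℝ^d)` and every accumulation point `γ_∞` satisfies
`γ_∞(t) − x̄ = ½ ∫_{t₁}^t (X¹ + X²)(τ,γ_∞(τ)) dτ`. -/
theorem averaging_lemma {d : ℕ} (t₁ t₂ : ℝ) (ht : t₁ < t₂) (xbar : E d)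
    (X1 X2 : ℕ → ℝ → E d → E d) (X1lim X2lim : ℝ → E d → E d)
    (hX1c : ∀ ℓ, ContinuousOn (fun p : ℝ × E d => X1 ℓ p.1 p.2) (Icc t₁ t₂ ×ˢ univ))
    (hX2c : ∀ ℓ, ContinuousOn (fun p : ℝ × E d => X2 ℓ p.1 p.2) (Icc t₁ t₂ ×ˢ univ))
    (hbdd : ∃ M : ℝ, ∀ ℓ, ∀ t ∈ Icc t₁ t₂, ∀ x : E d,
      ‖X1 ℓ t x‖ ≤ M ∧ ‖X2 ℓ t x‖ ≤ M)
    (hconv1 : ∀ K : Set (ℝ × E d), IsCompact K → K ⊆ Icc t₁ t₂ ×ˢ univ →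
      TendstoUniformlyOn (fun ℓ (p : ℝ × E d) => X1 ℓ p.1 p.2)
        (fun p => X1lim p.1 p.2) atTop K)
    (hconv2 : ∀ K : Set (ℝ × E d), IsCompact K → K ⊆ Icc t₁ t₂ ×ˢ univ →
      TendstoUniformlyOn (fun ℓ (p : ℝ × E d) => X2 ℓ p.1 p.2)
        (fun p => X2lim p.1 p.2) atTop K)
    (G : ℕ → ℝ → E d → E d)
    (hG1 : ∀ ℓ : ℕ, 1 ≤ ℓ → ∀ j : ℕ, j < ℓ → ∀ t : ℝ,
      t ∈ Ico (t₁ + (j : ℝ) / ℓ * (t₂ - t₁)) (t₁ + (2 * j + 1) / (2 * ℓ) * (t₂ - t₁)) →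
      ∀ x, G ℓ t x = X1 ℓ t x)
    (hG2 : ∀ ℓ : ℕ, 1 ≤ ℓ → ∀ j : ℕ, j < ℓ → ∀ t : ℝ,
      t ∈ Ico (t₁ + (2 * j + 1) / (2 * ℓ) * (t₂ - t₁)) (t₁ + ((j : ℝ) + 1) / ℓ * (t₂ - t₁)) →
      ∀ x, G ℓ t x = X2 ℓ t x)
    (hGend : ∀ ℓ : ℕ, 1 ≤ ℓ → ∀ x, G ℓ t₂ x = X2 ℓ t₂ x)
    (γ : ℕ → ℝ → E d)
    (hγ : ∀ ℓ : ℕ, 1 ≤ ℓ → ContinuousOn (γ ℓ) (Icc t₁ t₂) ∧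
      ∀ t ∈ Icc t₁ t₂, γ ℓ t - xbar = ∫ τ in t₁..t, G ℓ τ (γ ℓ τ)) :
    -- relative compactness in `C⁰([t₁,t₂], ℝ^d)`
    (∀ φ : ℕ → ℕ, StrictMono φ → ∃ ψ : ℕ → ℕ, StrictMono ψ ∧
      ∃ γinf : ℝ → E d, ContinuousOn γinf (Icc t₁ t₂) ∧
        TendstoUniformlyOn (fun k => γ (φ (ψ k))) γinf atTop (Icc t₁ t₂)) ∧
    -- every accumulation point solves the averaged equation
    (∀ (γinf : ℝ → E d) (φ : ℕ → ℕ), StrictMono φ →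
      TendstoUniformlyOn (fun k => γ (φ k)) γinf atTop (Icc t₁ t₂) →
      ∀ t ∈ Icc t₁ t₂,
        γinf t - xbar =
          (2⁻¹ : ℝ) • ∫ τ in t₁..t, (X1lim τ (γinf τ) + X2lim τ (γinf τ))) := by
  obtain ⟨M, hM⟩ := hbdd
  have hL : 0 < t₂ - t₁ := sub_pos.2 ht
  have ht₁I : t₁ ∈ Icc t₁ t₂ := ⟨le_refl _, ht.le⟩
  have hM0 : 0 ≤ M := le_trans (norm_nonneg _) (hM 0 t₁ ht₁I xbar).1
  set R := M * (t₂ - t₁) with hR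
  -- the indicator representation of `G` along any curve
  have hrep : ∀ ℓ : ℕ, 1 ≤ ℓ → ∀ τ ∈ Icc t₁ t₂, ∀ x : E d,
      G ℓ τ x = χ t₁ t₂ ℓ τ • X1 ℓ τ x + (1 - χ t₁ t₂ ℓ τ) • X2 ℓ τ x := by
    intro ℓ hℓ1 τ hτ x
    have hℓ : 0 < ℓ := hℓ1
    rcases eq_or_lt_of_le hτ.2 with heq | hlt
    · have hτA : τ ∉ A t₁ t₂ ℓ := by
        intro hA
        have h2 := (A_subset hL hℓ hA).2
        rw [heq] at h2
        exact lt_irrefl _ h2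
      rw [heq] at hτA ⊢
      rw [hGend ℓ hℓ1 x]
      simp [χ, Set.indicator_of_notMem hτA]
    · obtain ⟨j, hj, hmem⟩ := exists_j hL hℓ ⟨hτ.1, hlt⟩
      by_cases hτA : τ ∈ A t₁ t₂ ℓ
      · have hlt2 : τ < aM t₁ t₂ ℓ j := (mem_A_iff hL hℓ hj hmem).mp hτA
        have hG := hG1 ℓ hℓ1 j hj τ
          ⟨by simpa [aP] using hmem.1, by simpa [aM] using hlt2⟩ x
        rw [hG]
        simp [χ, Set.indicator_of_mem hτA]
      · have hge : aM t₁ t₂ ℓ j ≤ τ := by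
          by_contra hcon
          exact hτA ((mem_A_iff hL hℓ hj hmem).mpr (not_le.mp hcon))
        have hG := hG2 ℓ hℓ1 j hj τ
          ⟨by simpa [aM] using hge, by
            have h2 := hmem.2
            simp only [aP] at h2
            push_cast at h2
            exact h2⟩ x
        rw [hG]
        simp [χ, Set.indicator_of_notMem hτA]
  -- composition continuity helper
  have hcomp : ∀ Y : ℝ → E d → E d,
      ContinuousOn (fun p : ℝ × E d => Y p.1 p.2) (Icc t₁ t₂ ×ˢ univ) →
      ∀ γ' : ℝ → E d, ContinuousOn γ' (Icc t₁ t₂) →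
      ContinuousOn (fun τ => Y τ (γ' τ)) (Icc t₁ t₂) := by
    intro Y hY γ' hγ'
    exact hY.comp (continuousOn_id.prodMk hγ') (fun τ hτ => ⟨hτ, mem_univ _⟩)
  -- integrability of the combined integrand
  have hGint : ∀ ℓ : ℕ, 1 ≤ ℓ →
      IntegrableOn (fun τ => χ t₁ t₂ ℓ τ • X1 ℓ τ (γ ℓ τ) +
        (1 - χ t₁ t₂ ℓ τ) • X2 ℓ τ (γ ℓ τ)) (Icc t₁ t₂) := fun ℓ hℓ1 =>
    integrableOn_comb isCompact_Icc
      (hcomp _ (hX1c ℓ) _ (hγ ℓ hℓ1).1) (hcomp _ (hX2c ℓ) _ (hγ ℓ hℓ1).1)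
  have hγeq : ∀ ℓ : ℕ, 1 ≤ ℓ → ∀ s ∈ Icc t₁ t₂,
      γ ℓ s - xbar = ∫ τ in t₁..s, (χ t₁ t₂ ℓ τ • X1 ℓ τ (γ ℓ τ) +
        (1 - χ t₁ t₂ ℓ τ) • X2 ℓ τ (γ ℓ τ)) := by
    intro ℓ hℓ1 s hs
    rw [(hγ ℓ hℓ1).2 s hs]
    apply intervalIntegral.integral_congr
    intro τ hτ
    exact hrep ℓ hℓ1 τ (uIcc_subset_Icc ht₁I hs hτ) (γ ℓ τ)
  have hcombBound : ∀ ℓ : ℕ, ∀ τ ∈ Icc t₁ t₂,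
      ‖χ t₁ t₂ ℓ τ • X1 ℓ τ (γ ℓ τ) + (1 - χ t₁ t₂ ℓ τ) • X2 ℓ τ (γ ℓ τ)‖ ≤ M := by
    intro ℓ τ hτ
    by_cases hτA : τ ∈ A t₁ t₂ ℓ
    · simp only [χ, Set.indicator_of_mem hτA]
      simpa using (hM ℓ τ hτ (γ ℓ τ)).1
    · simp only [χ, Set.indicator_of_notMem hτA]
      simpa using (hM ℓ τ hτ (γ ℓ τ)).2
  have hγdiff : ∀ ℓ : ℕ, 1 ≤ ℓ → ∀ s ∈ Icc t₁ t₂, ∀ u ∈ Icc t₁ t₂,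
      γ ℓ u - γ ℓ s = ∫ τ in s..u, (χ t₁ t₂ ℓ τ • X1 ℓ τ (γ ℓ τ) +
        (1 - χ t₁ t₂ ℓ τ) • X2 ℓ τ (γ ℓ τ)) := by
    intro ℓ hℓ1 s hs u hu
    have e : γ ℓ u - γ ℓ s = (γ ℓ u - xbar) - (γ ℓ s - xbar) := by abel
    rw [e, hγeq ℓ hℓ1 u hu, hγeq ℓ hℓ1 s hs,
      intervalIntegral.integral_interval_sub_left
        (intervalIntegrable_of_integrableOn_Icc (hGint ℓ hℓ1) ht₁I hu)
        (intervalIntegrable_of_integrableOn_Icc (hGint ℓ hℓ1) ht₁I hs)]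
  have hLip : ∀ ℓ : ℕ, 1 ≤ ℓ → ∀ s ∈ Icc t₁ t₂, ∀ u ∈ Icc t₁ t₂,
      ‖γ ℓ u - γ ℓ s‖ ≤ M * |u - s| := by
    intro ℓ hℓ1 s hs u hu
    rw [hγdiff ℓ hℓ1 s hs u hu]
    apply intervalIntegral.norm_integral_le_of_norm_le_const
    intro τ hτ
    exact hcombBound ℓ τ ((Set.uIoc_subset_uIcc ..).trans (uIcc_subset_Icc hs hu) hτ)
  have hγball : ∀ ℓ : ℕ, 1 ≤ ℓ → ∀ τ ∈ Icc t₁ t₂, γ ℓ τ ∈ Metric.closedBall xbar R := by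
    intro ℓ hℓ1 τ hτ
    rw [Metric.mem_closedBall, dist_eq_norm]
    have h1 : ‖γ ℓ τ - xbar‖ ≤ M * |τ - t₁| := by
      rw [hγeq ℓ hℓ1 τ hτ]
      apply intervalIntegral.norm_integral_le_of_norm_le_const
      intro τ' hτ'
      exact hcombBound ℓ τ' ((Set.uIoc_subset_uIcc ..).trans (uIcc_subset_Icc ht₁I hτ) hτ')
    refine le_trans h1 ?_
    rw [hR]
    apply mul_le_mul_of_nonneg_left _ hM0
    rw [abs_of_nonneg (by linarith [hτ.1])]
    linarith [hτ.2]
  constructor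
  · -- Part 1: relative compactness
    intro φ hφ
    haveI : CompactSpace (Icc t₁ t₂) := isCompact_iff_compactSpace.mp isCompact_Icc
    have hφ1 : ∀ k : ℕ, 1 ≤ φ (k + 1) := fun k =>
      le_trans (Nat.succ_le_succ (Nat.zero_le k)) hφ.le_apply
    set Fc : ℕ → C(Icc t₁ t₂, E d) := fun k =>
      ⟨fun x => γ (φ (k + 1)) x,
        continuousOn_iff_continuous_restrict.mp (hγ _ (hφ1 k)).1⟩ with hFcdef
    set S : Set C(Icc t₁ t₂, E d) :=
      {f | (∀ x y : Icc t₁ t₂, ‖f x - f y‖ ≤ M * dist x y) ∧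
        ∀ x : Icc t₁ t₂, f x ∈ Metric.closedBall xbar R} with hSdef
    have hFcS : ∀ k, Fc k ∈ S := by
      intro k
      constructor
      · intro x y
        have h1 := hLip _ (hφ1 k) y y.2 x x.2
        rw [Subtype.dist_eq, Real.dist_eq]
        exact h1
      · exact fun x => hγball _ (hφ1 k) x x.2
    have hTclosed : IsClosed {g : Icc t₁ t₂ → E d |
        (∀ x y, ‖g x - g y‖ ≤ M * dist x y) ∧ ∀ x, g x ∈ Metric.closedBall xbar R} := by
      have e : {g : Icc t₁ t₂ → E d |
          (∀ x y, ‖g x - g y‖ ≤ M * dist x y) ∧ ∀ x, g x ∈ Metric.closedBall xbar R}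
          = (⋂ (x : Icc t₁ t₂) (y : Icc t₁ t₂),
              {g : Icc t₁ t₂ → E d | ‖g x - g y‖ ≤ M * dist x y}) ∩
            ⋂ x : Icc t₁ t₂, {g : Icc t₁ t₂ → E d | g x ∈ Metric.closedBall xbar R} := by
        ext g
        simp only [Set.mem_setOf_eq, Set.mem_inter_iff, Set.mem_iInter]
      rw [e]
      apply IsClosed.inter
      · exact isClosed_iInter fun x => isClosed_iInter fun y =>
          isClosed_le (Continuous.norm ((continuous_apply x).sub (continuous_apply y)))
            continuous_const
      · exact isClosed_iInter fun x =>
          IsClosed.preimage (continuous_apply x) Metric.isClosed_closedBall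
    have hTim : ContinuousMap.toFun '' S = {g : Icc t₁ t₂ → E d |
        (∀ x y, ‖g x - g y‖ ≤ M * dist x y) ∧ ∀ x, g x ∈ Metric.closedBall xbar R} := by
      ext g
      constructor
      · rintro ⟨f, hf, rfl⟩
        exact hf
      · intro hg
        have hgc : Continuous g := by
          have hlip : LipschitzWith (Real.toNNReal M) g := by
            apply LipschitzWith.of_dist_le_mul
            intro x y
            rw [dist_eq_norm, Real.coe_toNNReal M hM0]
            exact hg.1 x y
          exact hlip.continuous
        exact ⟨⟨g, hgc⟩, hg, rfl⟩
    have hTcompact : IsCompact (ContinuousMap.toFun '' S) := by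
      rw [hTim]
      apply IsCompact.of_isClosed_subset
        (isCompact_univ_pi fun _ : Icc t₁ t₂ => isCompact_closedBall xbar R) hTclosed
      intro g hg
      rw [Set.mem_univ_pi]
      exact fun x => hg.2 x
    have hequi : Equicontinuous ((↑) : S → Icc t₁ t₂ → E d) := by
      intro x₀
      rw [Metric.equicontinuousAt_iff]
      intro ε hε
      refine ⟨ε / (M + 1), by positivity, ?_⟩
      intro x hx i
      have h1 : dist ((i : C(Icc t₁ t₂, E d)) x₀) ((i : C(Icc t₁ t₂, E d)) x)
          ≤ M * dist x₀ x := by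
        rw [dist_eq_norm]
        exact i.2.1 x₀ x
      have h2 : dist x₀ x ≤ ε / (M + 1) := by
        rw [dist_comm]
        exact hx.le
      have hlt : M * (ε / (M + 1)) < ε := by
        have hd : M / (M + 1) < 1 := by
          rw [div_lt_one (by linarith)]
          linarith
        calc M * (ε / (M + 1)) = M / (M + 1) * ε := by ring
        _ < 1 * ε := mul_lt_mul_of_pos_right hd hε
        _ = ε := one_mul ε
      calc dist ((i : C(Icc t₁ t₂, E d)) x₀) ((i : C(Icc t₁ t₂, E d)) x)
          ≤ M * dist x₀ x := h1
      _ ≤ M * (ε / (M + 1)) := mul_le_mul_of_nonneg_left h2 hM0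
      _ < ε := hlt
    have hScompact : IsCompact S :=
      ArzelaAscoli.isCompact_of_equicontinuous S hTcompact hequi
    obtain ⟨γC, hγCS, ψ', hψ', hconv⟩ := hScompact.isSeqCompact hFcS
    have huc : TendstoUniformly (fun k (x : Icc t₁ t₂) => (Fc ∘ ψ') k x) (⇑γC) atTop :=
      ContinuousMap.tendsto_iff_tendstoUniformly.mp hconv
    refine ⟨fun k => ψ' k + 1, fun a b hab => Nat.succ_lt_succ (hψ' hab), ?_⟩
    set γinf : ℝ → E d := fun s => if hs : s ∈ Icc t₁ t₂ then γC ⟨s, hs⟩ else xbar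
      with hγinfdef
    have hres : (γinf ∘ ((↑) : Icc t₁ t₂ → ℝ)) = ⇑γC := by
      funext x
      simp only [Function.comp_apply, hγinfdef]
      rw [dif_pos x.2]
    refine ⟨γinf, ?_, ?_⟩
    · rw [continuousOn_iff_continuous_restrict]
      have e : Set.restrict (Icc t₁ t₂) γinf = ⇑γC := hres
      exact (e ▸ γC.continuous : Continuous (Set.restrict (Icc t₁ t₂) γinf))
    · rw [tendstoUniformlyOn_iff_tendstoUniformly_comp_coe]
      rw [hres]
      exact huc
  · -- Part 2: the averaged equation
    intro γinf φ hφ hunif t htI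
    have hφatTop : Tendsto φ atTop atTop := hφ.tendsto_atTop
    have hφ1 : ∀ᶠ k in atTop, 1 ≤ φ k := hφatTop.eventually (eventually_ge_atTop 1)
    have hγinfc : ContinuousOn γinf (Icc t₁ t₂) := by
      apply hunif.continuousOn
      apply Eventually.frequently
      filter_upwards [hφ1] with k hk
      exact (hγ (φ k) hk).1
    have hγinfball : ∀ τ ∈ Icc t₁ t₂, γinf τ ∈ Metric.closedBall xbar R := by
      intro τ hτ
      apply Metric.isClosed_closedBall.mem_of_tendsto (hunif.tendsto_at hτ)
      filter_upwards [hφ1] with k hk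
      exact hγball (φ k) hk τ hτ
    set K : Set (ℝ × E d) := Icc t₁ t₂ ×ˢ Metric.closedBall xbar R with hKdef
    have hKc : IsCompact K := isCompact_Icc.prod (isCompact_closedBall xbar R)
    have hKsub : K ⊆ Icc t₁ t₂ ×ˢ univ := Set.prod_mono subset_rfl (subset_univ _)
    have hc1K := hconv1 K hKc hKsub
    have hc2K := hconv2 K hKc hKsub
    have hX1limc : ContinuousOn (fun p : ℝ × E d => X1lim p.1 p.2) K :=
      hc1K.continuousOn (Eventually.of_forall fun ℓ => (hX1c ℓ).mono hKsub).frequently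
    have hX2limc : ContinuousOn (fun p : ℝ × E d => X2lim p.1 p.2) K :=
      hc2K.continuousOn (Eventually.of_forall fun ℓ => (hX2c ℓ).mono hKsub).frequently
    have hmapK : ∀ τ ∈ Icc t₁ t₂, ((τ, γinf τ) : ℝ × E d) ∈ K :=
      fun τ hτ => ⟨hτ, hγinfball τ hτ⟩
    have hf1c : ContinuousOn (fun τ => X1lim τ (γinf τ)) (Icc t₁ t₂) :=
      hX1limc.comp (continuousOn_id.prodMk hγinfc) hmapK
    have hf2c : ContinuousOn (fun τ => X2lim τ (γinf τ)) (Icc t₁ t₂) :=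
      hX2limc.comp (continuousOn_id.prodMk hγinfc) hmapK
    have hkey : ∀ (Xs : ℕ → ℝ → E d → E d) (Xl : ℝ → E d → E d),
        TendstoUniformlyOn (fun ℓ (p : ℝ × E d) => Xs ℓ p.1 p.2)
          (fun p => Xl p.1 p.2) atTop K →
        ContinuousOn (fun p : ℝ × E d => Xl p.1 p.2) K →
        ∀ ε > 0, ∀ᶠ k in atTop, ∀ τ ∈ Icc t₁ t₂,
          ‖Xs (φ k) τ (γ (φ k) τ) - Xl τ (γinf τ)‖ < ε := by
      intro Xs Xl hcv hcl ε hε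
      have hucl := hKc.uniformContinuousOn_of_continuous hcl
      rw [Metric.uniformContinuousOn_iff] at hucl
      obtain ⟨δ, hδ0, hδ⟩ := hucl (ε / 2) (by positivity)
      rw [Metric.tendstoUniformlyOn_iff] at hcv
      have hB : ∀ᶠ k in atTop, ∀ p ∈ K,
          dist (Xl p.1 p.2) (Xs (φ k) p.1 p.2) < ε / 2 :=
        hφatTop.eventually (hcv (ε / 2) (by positivity))
      have hu' := Metric.tendstoUniformlyOn_iff.mp hunif
      have hC : ∀ᶠ k in atTop, ∀ τ ∈ Icc t₁ t₂, dist (γinf τ) (γ (φ k) τ) < δ :=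
        hu' δ hδ0
      filter_upwards [hB, hC, hφ1] with k hBk hCk h1k
      intro τ hτ
      have hpK : ((τ, γ (φ k) τ) : ℝ × E d) ∈ K := ⟨hτ, hγball (φ k) h1k τ hτ⟩
      have hd : dist ((τ, γ (φ k) τ) : ℝ × E d) ((τ, γinf τ) : ℝ × E d) < δ := by
        rw [Prod.dist_eq]
        apply max_lt
        · simpa using hδ0
        · rw [dist_comm]
          exact hCk τ hτ
      have h2 : dist (Xl τ (γ (φ k) τ)) (Xl τ (γinf τ)) < ε / 2 :=
        hδ ((τ, γ (φ k) τ) : ℝ × E d) hpK ((τ, γinf τ) : ℝ × E d) (hmapK τ hτ) hd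
      have h3 : dist (Xl τ (γ (φ k) τ)) (Xs (φ k) τ (γ (φ k) τ)) < ε / 2 :=
        hBk ((τ, γ (φ k) τ) : ℝ × E d) hpK
      calc ‖Xs (φ k) τ (γ (φ k) τ) - Xl τ (γinf τ)‖
          = dist (Xs (φ k) τ (γ (φ k) τ)) (Xl τ (γinf τ)) := (dist_eq_norm _ _).symm
      _ ≤ dist (Xs (φ k) τ (γ (φ k) τ)) (Xl τ (γ (φ k) τ))
          + dist (Xl τ (γ (φ k) τ)) (Xl τ (γinf τ)) := dist_triangle _ _ _
      _ < ε / 2 + ε / 2 := add_lt_add (dist_comm (Xl τ (γ (φ k) τ)) _ ▸ h3) h2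
      _ = ε := add_halves ε
    have hkey1 := hkey X1 X1lim hc1K hX1limc
    have hkey2 := hkey X2 X2lim hc2K hX2limc
    have hgc : ContinuousOn (fun τ => X1lim τ (γinf τ) - X2lim τ (γinf τ)) (Icc t₁ t₂) :=
      hf1c.sub hf2c
    have hIcc_sub : Set.uIcc t₁ t ⊆ Icc t₁ t₂ := uIcc_subset_Icc ht₁I htI
    have hint_f : IntervalIntegrable
        (fun τ => X1lim τ (γinf τ) + X2lim τ (γinf τ)) volume t₁ t :=
      ((hf1c.add hf2c).mono hIcc_sub).intervalIntegrable
    have hintcomb : ∀ ℓ : ℕ, IntervalIntegrable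
        (fun τ => χ t₁ t₂ ℓ τ • X1lim τ (γinf τ) +
          (1 - χ t₁ t₂ ℓ τ) • X2lim τ (γinf τ)) volume t₁ t := fun ℓ =>
      intervalIntegrable_of_integrableOn_Icc
        (integrableOn_comb isCompact_Icc hf1c hf2c) ht₁I htI
    have hintosc : ∀ ℓ : ℕ, IntervalIntegrable
        (fun τ => (χ t₁ t₂ ℓ τ - 2⁻¹) • (X1lim τ (γinf τ) - X2lim τ (γinf τ)))
        volume t₁ t := fun ℓ =>
      intervalIntegrable_of_integrableOn_Icc
        (integrableOn_osc isCompact_Icc hgc) ht₁I htI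
    have hdec : ∀ ℓ : ℕ,
        (∫ τ in t₁..t, (χ t₁ t₂ ℓ τ • X1lim τ (γinf τ) +
          (1 - χ t₁ t₂ ℓ τ) • X2lim τ (γinf τ)))
        = (∫ τ in t₁..t, (χ t₁ t₂ ℓ τ - 2⁻¹) • (X1lim τ (γinf τ) - X2lim τ (γinf τ)))
          + (2⁻¹ : ℝ) • ∫ τ in t₁..t, (X1lim τ (γinf τ) + X2lim τ (γinf τ)) := by
      intro ℓ
      calc (∫ τ in t₁..t, (χ t₁ t₂ ℓ τ • X1lim τ (γinf τ) +
          (1 - χ t₁ t₂ ℓ τ) • X2lim τ (γinf τ)))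
          = ∫ τ in t₁..t, ((χ t₁ t₂ ℓ τ - 2⁻¹) • (X1lim τ (γinf τ) - X2lim τ (γinf τ))
            + (2⁻¹ : ℝ) • (X1lim τ (γinf τ) + X2lim τ (γinf τ))) := by
              apply intervalIntegral.integral_congr
              intro τ _
              module
      _ = (∫ τ in t₁..t, (χ t₁ t₂ ℓ τ - 2⁻¹) • (X1lim τ (γinf τ) - X2lim τ (γinf τ)))
          + ∫ τ in t₁..t, (2⁻¹ : ℝ) • (X1lim τ (γinf τ) + X2lim τ (γinf τ)) :=
            intervalIntegral.integral_add (hintosc ℓ) (hint_f.smul (2⁻¹ : ℝ))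
      _ = (∫ τ in t₁..t, (χ t₁ t₂ ℓ τ - 2⁻¹) • (X1lim τ (γinf τ) - X2lim τ (γinf τ)))
          + (2⁻¹ : ℝ) • ∫ τ in t₁..t, (X1lim τ (γinf τ) + X2lim τ (γinf τ)) := by
              rw [intervalIntegral.integral_smul]
    have hlim1 : Tendsto (fun k => ∫ τ in t₁..t,
        (χ t₁ t₂ (φ k) τ - 2⁻¹) • (X1lim τ (γinf τ) - X2lim τ (γinf τ)))
        atTop (𝓝 0) := (osc ht hgc htI).comp hφatTop
    have herr : Tendsto (fun k =>
        (∫ τ in t₁..t, (χ t₁ t₂ (φ k) τ • X1 (φ k) τ (γ (φ k) τ) +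
          (1 - χ t₁ t₂ (φ k) τ) • X2 (φ k) τ (γ (φ k) τ)))
        - ∫ τ in t₁..t, (χ t₁ t₂ (φ k) τ • X1lim τ (γinf τ) +
          (1 - χ t₁ t₂ (φ k) τ) • X2lim τ (γinf τ))) atTop (𝓝 0) := by
      rw [NormedAddCommGroup.tendsto_nhds_zero]
      intro ε hε
      have hc : (0 : ℝ) < ε / (2 * (t₂ - t₁)) := by positivity
      filter_upwards [hkey1 _ hc, hkey2 _ hc, hφ1] with k h1 h2 hk1
      have hintk1 : IntervalIntegrable
          (fun τ => χ t₁ t₂ (φ k) τ • X1 (φ k) τ (γ (φ k) τ) +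
            (1 - χ t₁ t₂ (φ k) τ) • X2 (φ k) τ (γ (φ k) τ)) volume t₁ t :=
        intervalIntegrable_of_integrableOn_Icc (hGint (φ k) hk1) ht₁I htI
      rw [← intervalIntegral.integral_sub hintk1 (hintcomb (φ k))]
      have hb : ∀ τ ∈ Set.uIoc t₁ t,
          ‖(χ t₁ t₂ (φ k) τ • X1 (φ k) τ (γ (φ k) τ) +
            (1 - χ t₁ t₂ (φ k) τ) • X2 (φ k) τ (γ (φ k) τ))
          - (χ t₁ t₂ (φ k) τ • X1lim τ (γinf τ) +
            (1 - χ t₁ t₂ (φ k) τ) • X2lim τ (γinf τ))‖ ≤ ε / (2 * (t₂ - t₁)) := by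
        intro τ hτ
        have hτI : τ ∈ Icc t₁ t₂ := hIcc_sub (Set.uIoc_subset_uIcc hτ)
        have e : (χ t₁ t₂ (φ k) τ • X1 (φ k) τ (γ (φ k) τ) +
            (1 - χ t₁ t₂ (φ k) τ) • X2 (φ k) τ (γ (φ k) τ))
          - (χ t₁ t₂ (φ k) τ • X1lim τ (γinf τ) +
            (1 - χ t₁ t₂ (φ k) τ) • X2lim τ (γinf τ))
          = χ t₁ t₂ (φ k) τ • (X1 (φ k) τ (γ (φ k) τ) - X1lim τ (γinf τ)) +
            (1 - χ t₁ t₂ (φ k) τ) • (X2 (φ k) τ (γ (φ k) τ) - X2lim τ (γinf τ)) := by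
          module
        rw [e]
        by_cases hτA : τ ∈ A t₁ t₂ (φ k)
        · simp only [χ, Set.indicator_of_mem hτA]
          simpa using (h1 τ hτI).le
        · simp only [χ, Set.indicator_of_notMem hτA]
          simpa using (h2 τ hτI).le
      calc ‖∫ τ in t₁..t, ((χ t₁ t₂ (φ k) τ • X1 (φ k) τ (γ (φ k) τ) +
            (1 - χ t₁ t₂ (φ k) τ) • X2 (φ k) τ (γ (φ k) τ))
          - (χ t₁ t₂ (φ k) τ • X1lim τ (γinf τ) +
            (1 - χ t₁ t₂ (φ k) τ) • X2lim τ (γinf τ)))‖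
          ≤ ε / (2 * (t₂ - t₁)) * |t - t₁| :=
            intervalIntegral.norm_integral_le_of_norm_le_const hb
      _ ≤ ε / (2 * (t₂ - t₁)) * (t₂ - t₁) := by
          apply mul_le_mul_of_nonneg_left _ (le_of_lt hc)
          rw [abs_of_nonneg (by linarith [htI.1])]
          linarith [htI.2]
      _ = ε / 2 := by field_simp
      _ < ε := by linarith
    have hγt : Tendsto (fun k => γ (φ k) t - xbar) atTop (𝓝 (γinf t - xbar)) :=
      (hunif.tendsto_at htI).sub_const xbar
    have hlim : Tendsto (fun k => γ (φ k) t - xbar) atTop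
        (𝓝 (0 + (0 + (2⁻¹ : ℝ) • ∫ τ in t₁..t,
          (X1lim τ (γinf τ) + X2lim τ (γinf τ))))) := by
      have hrhs := herr.add (hlim1.add
        (tendsto_const_nhds (x := (2⁻¹ : ℝ) • ∫ τ in t₁..t,
          (X1lim τ (γinf τ) + X2lim τ (γinf τ))) (f := atTop (α := ℕ))))
      apply hrhs.congr'
      filter_upwards [hφ1] with k hk1
      rw [hγeq (φ k) hk1 t htI, ← hdec (φ k)]
      abel
    have hfinal := tendsto_nhds_unique hγt hlim
    rw [hfinal, zero_add, zero_add]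
end
end
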